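/- arXiv:2603.06415 — 6 statements merged into one kernel-verified Lean document; each statement's English description precedes it below -/
import Mathlib

section
/- For n ≥ 2r+1, there is no regular intersecting r-uniform hypergraph on n vertices all of whose vertex degrees equal C(n-2, r-2). -/
open Finset

namespace IKproof

variable {n : ℕ}

abbrev V (n : ℕ) := Finset (Fin n) → ℝ

/-- inner product -/
def dot (f g : V n) : ℝ := ∑ S, f S * g S

/-- up operator -/
def Uop (f : V n) : V n := fun S => ∑ w ∈ S, f (S.erase w)

/-- down operator -/
def Dop (f : V n) : V n := fun S => ∑ v ∈ Sᶜ, f (insert v S)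

/-- Kneser (disjointness) operator at level r -/
def Kop (r : ℕ) (f : V n) : V n := fun S =>
  if S.card = r then ∑ T ∈ univ.filter (fun T : Finset (Fin n) => T.card = r ∧ Disjoint S T), f T
  else 0

/-- functions supported on i-sets -/
def Xs (n i : ℕ) : Submodule ℝ (V n) where
  carrier := {f | ∀ S : Finset (Fin n), S.card ≠ i → f S = 0}
  add_mem' := by intro a b ha hb S hS; simp [ha S hS, hb S hS]
  zero_mem' := by intro S _; rfl
  smul_mem' := by intro c a ha S hS; simp [ha S hS]

lemma mem_Xs {f : V n} {i : ℕ} : f ∈ Xs n i ↔ ∀ S : Finset (Fin n), S.card ≠ i → f S = 0 :=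
  Iff.rfl

lemma Uop_add (f g : V n) : Uop (f + g) = Uop f + Uop g := by
  funext S; simp [Uop, Finset.sum_add_distrib]

lemma Uop_smul (c : ℝ) (f : V n) : Uop (c • f) = c • Uop f := by
  funext S; simp [Uop, Finset.mul_sum]

lemma Dop_add (f g : V n) : Dop (f + g) = Dop f + Dop g := by
  funext S; simp [Dop, Finset.sum_add_distrib]

lemma Dop_smul (c : ℝ) (f : V n) : Dop (c • f) = c • Dop f := by
  funext S; simp [Dop, Finset.mul_sum]

lemma Uop_mem (f : V n) (i : ℕ) (hf : f ∈ Xs n i) : Uop f ∈ Xs n (i + 1) := by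
  intro S hS
  apply Finset.sum_eq_zero
  intro w hw
  apply hf
  rw [Finset.card_erase_of_mem hw]
  intro h
  apply hS
  have : 1 ≤ S.card := Finset.card_pos.2 ⟨w, hw⟩
  omega

lemma Dop_mem (f : V n) (i : ℕ) (hf : f ∈ Xs n (i + 1)) : Dop f ∈ Xs n i := by
  intro S hS
  apply Finset.sum_eq_zero
  intro v hv
  apply hf
  rw [Finset.card_insert_of_notMem (by simpa using hv)]
  omega

lemma Dop_of_Xs_zero (f : V n) (hf : f ∈ Xs n 0) : Dop f = 0 := by
  funext S
  apply Finset.sum_eq_zero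
  intro v hv
  apply hf
  simp

lemma commutator (f : V n) (S : Finset (Fin n)) :
    Dop (Uop f) S - Uop (Dop f) S = ((n : ℝ) - 2 * S.card) * f S := by
  have h1 : Dop (Uop f) S
      = ∑ v ∈ Sᶜ, (f S + ∑ w ∈ S, f (insert v (S.erase w))) := by
    apply Finset.sum_congr rfl
    intro v hv
    have hvS : v ∉ S := by simpa using hv
    rw [Uop]
    rw [Finset.sum_insert hvS]
    congr 1
    · rw [Finset.erase_insert hvS]
    · apply Finset.sum_congr rfl
      intro w hw
      congr 1
      exact Finset.erase_insert_of_ne (by rintro rfl; exact hvS hw)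
  have h2 : Uop (Dop f) S
      = ∑ w ∈ S, (f S + ∑ v ∈ Sᶜ, f (insert v (S.erase w))) := by
    apply Finset.sum_congr rfl
    intro w hw
    rw [Dop]
    rw [Finset.compl_erase]
    rw [Finset.sum_insert (by simpa using hw)]
    congr 1
    rw [Finset.insert_erase hw]
  rw [h1, h2]
  rw [Finset.sum_add_distrib, Finset.sum_add_distrib, Finset.sum_const, Finset.sum_const]
  rw [Finset.sum_comm]
  have hc : (Sᶜ).card = n - S.card := by
    rw [Finset.card_compl]; simp
  have hle : S.card ≤ n := by
    simpa using Finset.card_le_card (Finset.subset_univ S)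
  rw [hc, nsmul_eq_mul, nsmul_eq_mul, Nat.cast_sub hle]
  ring

lemma Uop_zero : Uop (0 : V n) = 0 := by
  funext S; simp [Uop]

lemma smul_eq_zero_fun {c : ℝ} {h : V n} (hc : c ≠ 0) (h2 : c • h = 0) : h = 0 := by
  funext S
  have := congrFun h2 S
  simp only [Pi.smul_apply, smul_eq_mul, Pi.zero_apply] at this
  rcases mul_eq_zero.1 this with h' | h'
  · exact absurd h' hc
  · exact h'

lemma DU_on_Xs (h : V n) (k : ℕ) (hh : h ∈ Xs n k) :
    Dop (Uop h) = Uop (Dop h) + ((n : ℝ) - 2 * k) • h := by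
  funext S
  have hcm := commutator h S
  by_cases hc : S.card = k
  · rw [← hc]
    simp only [Pi.add_apply, Pi.smul_apply, smul_eq_mul]
    push_cast
    linarith
  · have h0 : h S = 0 := hh S hc
    simp only [Pi.add_apply, Pi.smul_apply, smul_eq_mul, h0, mul_zero, add_zero]
    rw [h0] at hcm
    linarith

lemma DU_pos (k : ℕ) : ∀ (_ : 2 * k < n) (h : V n), h ∈ Xs n k → ∀ μ : ℝ, μ ≤ 0 →
    Dop (Uop h) = μ • h → h = 0 := by
  induction k with
  | zero =>
    intro hkn h hh μ hμ heq
    have hD : Dop h = 0 := Dop_of_Xs_zero h hh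
    have h1 : Dop (Uop h) = ((n : ℝ) - 2 * 0) • h := by
      rw [DU_on_Xs h 0 hh, hD, Uop_zero]; simp
    rw [heq] at h1
    have hn : (0:ℝ) < n := by exact_mod_cast hkn
    have h2 : (μ - ((n:ℝ) - 2 * 0)) • h = 0 := by
      rw [sub_smul, h1]; simp
    refine smul_eq_zero_fun (c := μ - ((n:ℝ) - 2 * 0)) ?_ h2
    push_cast; linarith
  | succ k ih =>
    intro hkn h hh μ hμ heq
    set c : ℝ := (n : ℝ) - 2 * (k+1) with hc
    have hck : ((n:ℝ) - 2 * ((k+1:ℕ):ℝ)) = c := by rw [hc]; push_cast; ring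
    have hcpos : 0 < c := by
      have : (2 * ((k:ℝ)+1)) < n := by exact_mod_cast hkn
      rw [hc]; push_cast; linarith
    have hUD : Uop (Dop h) = (μ - c) • h := by
      have h3 := DU_on_Xs h (k+1) hh
      rw [heq] at h3
      have h4 : Uop (Dop h) = μ • h - c • h := by
        rw [hck] at h3
        rw [h3]; abel
      rw [h4, ← sub_smul]
    have hDh : Dop h = 0 := by
      apply ih (by omega) (Dop h) (Dop_mem h k hh) (μ - c) (by linarith)
      calc Dop (Uop (Dop h)) = Dop ((μ - c) • h) := by rw [hUD]
        _ = (μ - c) • Dop h := Dop_smul _ _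
    have h5 : Dop (Uop h) = c • h := by
      rw [DU_on_Xs h (k+1) hh, hDh, Uop_zero, hck]
      simp
    rw [heq] at h5
    have h6 : (μ - c) • h = 0 := by rw [sub_smul, h5]; simp
    exact smul_eq_zero_fun (by linarith) h6

lemma Dop_zero : Dop (0 : V n) = 0 := by funext S; simp [Dop]

lemma Dop_sub (f g : V n) : Dop (f - g) = Dop f - Dop g := by
  funext S; simp [Dop, Finset.sum_sub_distrib]

lemma Uop_sum {α : Type*} (s : Finset α) (F : α → V n) :
    Uop (∑ j ∈ s, F j) = ∑ j ∈ s, Uop (F j) := by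
  funext S
  simp only [Uop, Finset.sum_apply]
  rw [Finset.sum_comm]

/-- DU as an endomorphism of Xs n k -/
def DUlm (k : ℕ) : Xs n k →ₗ[ℝ] Xs n k where
  toFun f := ⟨Dop (Uop f.1), Dop_mem _ k (Uop_mem _ k f.2)⟩
  map_add' f g := by
    ext S
    simp [Uop_add, Dop_add]
  map_smul' c f := by
    ext S
    simp [Uop_smul, Dop_smul]

lemma DU_surj (k : ℕ) (hk : 2 * k < n) (f : V n) (hf : f ∈ Xs n k) :
    ∃ g ∈ Xs n k, Dop (Uop g) = f := by
  have hinj : Function.Injective (DUlm (n := n) k) := by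
    rw [← LinearMap.ker_eq_bot]
    rw [LinearMap.ker_eq_bot']
    intro ⟨h, hh⟩ hzero
    have : Dop (Uop h) = 0 := by
      have := congrArg (Subtype.val) hzero
      exact this
    have h0 : h = 0 := DU_pos k hk h hh 0 le_rfl (by rw [this]; simp)
    exact Subtype.ext h0
  have hsurj : Function.Surjective (DUlm (n := n) k) :=
    (LinearMap.injective_iff_surjective).1 hinj
  obtain ⟨⟨g, hg⟩, hgeq⟩ := hsurj ⟨f, hf⟩
  exact ⟨g, hg, congrArg Subtype.val hgeq⟩

lemma decomp : ∀ i : ℕ, 2 * i ≤ n → ∀ f ∈ Xs n i, ∃ g : ℕ → V n,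
    (∀ j, g j ∈ Xs n j ∧ Dop (g j) = 0) ∧ f = ∑ j ∈ Finset.range (i+1), Uop^[i-j] (g j) := by
  intro i
  induction i with
  | zero =>
    intro _ f hf
    refine ⟨fun j => if j = 0 then f else 0, ?_, ?_⟩
    · intro j
      by_cases hj : j = 0
      · subst hj; simpa using ⟨hf, Dop_of_Xs_zero f hf⟩
      · refine ⟨?_, by simp [hj, Dop_zero]⟩
        simp only [hj, if_false]
        exact Submodule.zero_mem _
    · simp
  | succ i ih =>
    intro hi f hf
    obtain ⟨p, hp, hpeq⟩ := DU_surj i (by omega) (Dop f) (Dop_mem f i hf)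
    set k : V n := f - Uop p with hk
    have hkmem : k ∈ Xs n (i+1) := Submodule.sub_mem _ hf (Uop_mem p i hp)
    have hkD : Dop k = 0 := by
      rw [hk, Dop_sub, hpeq]; simp
    obtain ⟨g, hg, hgeq⟩ := ih (by omega) p hp
    refine ⟨Function.update g (i+1) k, ?_, ?_⟩
    · intro j
      by_cases hj : j = i+1
      · subst hj; simpa using ⟨hkmem, hkD⟩
      · simpa [Function.update_of_ne hj] using hg j
    · rw [Finset.sum_range_succ]
      have h1 : ∀ j ∈ Finset.range (i+1),
          Uop^[i+1-j] (Function.update g (i+1) k j) = Uop (Uop^[i-j] (g j)) := by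
        intro j hj
        rw [Finset.mem_range] at hj
        rw [Function.update_of_ne (by omega)]
        rw [show i+1-j = (i-j)+1 by omega]
        rw [Function.iterate_succ_apply']
      rw [Finset.sum_congr rfl h1]
      rw [← Uop_sum, ← hgeq]
      simp [hk]

section helpers

variable {α β : Type*} [DecidableEq α] [DecidableEq β]

lemma swap_filter_sum (s : Finset α) (t : Finset β) (r : α → β → Prop)
    [∀ x y, Decidable (r x y)] (F : α → β → ℝ) :
    ∑ x ∈ s, ∑ y ∈ t.filter (fun y => r x y), F x y
      = ∑ y ∈ t, ∑ x ∈ s.filter (fun x => r x y), F x y := by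
  simp_rw [Finset.sum_filter]
  exact Finset.sum_comm

end helpers

lemma sum_insert_eq (B : Finset (Fin n)) (h : V n) :
    ∑ v ∈ Bᶜ, h (insert v B)
      = ∑ T ∈ univ.filter (fun T => B ⊆ T ∧ T.card = B.card + 1), h T := by
  have hinj : ∀ v ∈ Bᶜ, ∀ w ∈ Bᶜ, insert v B = insert w B → v = w := by
    intro v hv w hw hvw
    have hv' : v ∉ B := by simpa using hv
    have : v ∈ insert w B := by rw [← hvw]; exact Finset.mem_insert_self _ _
    rcases Finset.mem_insert.1 this with h1 | h1
    · exact h1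
    · exact absurd h1 hv'
  have himg : (Bᶜ).image (fun v => insert v B)
      = univ.filter (fun T => B ⊆ T ∧ T.card = B.card + 1) := by
    ext T
    simp only [Finset.mem_image, Finset.mem_filter, Finset.mem_univ, true_and, Finset.mem_compl]
    constructor
    · rintro ⟨v, hv, rfl⟩
      exact ⟨Finset.subset_insert _ _, Finset.card_insert_of_notMem hv⟩
    · rintro ⟨hBT, hcard⟩
      have hne : (T \ B).Nonempty := by
        rw [← Finset.card_pos, Finset.card_sdiff_of_subset hBT, hcard]; omega
      obtain ⟨v, hv⟩ := hne
      rw [Finset.mem_sdiff] at hv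
      refine ⟨v, hv.2, ?_⟩
      apply Finset.eq_of_subset_of_card_le
      · exact Finset.insert_subset hv.1 hBT
      · rw [hcard, Finset.card_insert_of_notMem hv.2]
  rw [← himg, Finset.sum_image hinj]

lemma card_between (B T : Finset (Fin n)) (hBT : B ⊆ T) (c : ℕ) (hc : B.card ≤ c) :
    (univ.filter (fun B' => B ⊆ B' ∧ B' ⊆ T ∧ B'.card = c)).card
      = Nat.choose (T.card - B.card) (c - B.card) := by
  rw [← Finset.card_sdiff_of_subset hBT, ← Finset.card_powersetCard (c - B.card) (T \ B)]
  apply Finset.card_bij' (fun B' _ => B' \ B) (fun R _ => B ∪ R)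
  · intro B' hB'
    rw [Finset.mem_filter] at hB'
    obtain ⟨-, h1, h2, h3⟩ := hB'
    rw [Finset.mem_powersetCard]
    constructor
    · exact Finset.sdiff_subset_sdiff h2 (le_refl _)
    · rw [Finset.card_sdiff_of_subset h1, h3]
  · intro R hR
    rw [Finset.mem_powersetCard] at hR
    rw [Finset.mem_filter]
    refine ⟨Finset.mem_univ _, Finset.subset_union_left, ?_, ?_⟩
    · exact Finset.union_subset hBT (hR.1.trans Finset.sdiff_subset)
    · rw [Finset.card_union_of_disjoint, hR.2]
      · omega
      · exact Finset.disjoint_left.2 fun a ha hA => (Finset.mem_sdiff.1 (hR.1 hA)).2 ha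
  · intro B' hB'
    rw [Finset.mem_filter] at hB'
    exact Finset.union_sdiff_of_subset hB'.2.1
  · intro R hR
    rw [Finset.mem_powersetCard] at hR
    rw [Finset.union_sdiff_cancel_left]
    exact Finset.disjoint_left.2 fun a ha hA => (Finset.mem_sdiff.1 (hR.1 hA)).2 ha

/-- number of j-supersets (inside univ) of a set of card < j weighted-sums to zero for harmonic h -/
def psi (j : ℕ) (h : V n) (B : Finset (Fin n)) : ℝ :=
  ∑ T ∈ univ.filter (fun T => B ⊆ T ∧ T.card = j), h T

lemma psi_eq_zero' (j : ℕ) (h : V n) (hh : h ∈ Xs n j) (hD : Dop h = 0)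
    (B : Finset (Fin n)) (hB : B.card < j) : psi j h B = 0 := by
  have hj : 1 ≤ j := by omega
  set A := univ.filter (fun B' : Finset (Fin n) => B ⊆ B' ∧ B'.card = j - 1) with hA
  have hterm : ∀ B' ∈ A, ∑ T ∈ univ.filter (fun T => B' ⊆ T ∧ T.card = j), h T = 0 := by
    intro B' hB'
    rw [hA, Finset.mem_filter] at hB'
    have hcard : B'.card + 1 = j := by omega
    have hins := sum_insert_eq B' h
    rw [hcard] at hins
    rw [← hins]
    exact congrFun hD B'
  have h0 : ∑ B' ∈ A, ∑ T ∈ univ.filter (fun T => B' ⊆ T ∧ T.card = j), h T = 0 :=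
    Finset.sum_eq_zero hterm
  rw [swap_filter_sum A univ (fun B' T => B' ⊆ T ∧ T.card = j) (fun _ T => h T)] at h0
  have h1 : ∀ T ∈ (univ : Finset (Finset (Fin n))),
      ∑ B' ∈ A.filter (fun B' => B' ⊆ T ∧ T.card = j), h T
        = if B ⊆ T ∧ T.card = j then ((j - B.card : ℕ) : ℝ) * h T else 0 := by
    intro T _
    rw [Finset.sum_const, nsmul_eq_mul]
    by_cases hP : B ⊆ T ∧ T.card = j
    · rw [if_pos hP]
      congr 2
      rw [hA, Finset.filter_filter]
      have hfc : (univ.filter (fun B' : Finset (Fin n) =>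
          (B ⊆ B' ∧ B'.card = j - 1) ∧ B' ⊆ T ∧ T.card = j))
          = univ.filter (fun B' => B ⊆ B' ∧ B' ⊆ T ∧ B'.card = j - 1) := by
        apply Finset.filter_congr
        intro B' _
        constructor
        · rintro ⟨⟨a, b⟩, c, d⟩; exact ⟨a, c, b⟩
        · rintro ⟨a, c, b⟩; exact ⟨⟨a, b⟩, c, hP.2⟩
      rw [hfc, card_between B T hP.1 (j-1) (by omega), hP.2]
      rw [show j - 1 - B.card = (j - B.card) - 1 from by omega]
      rw [show (j - B.card) - 1 = (j - B.card) - ((j - B.card) - ((j - B.card) - 1)) from by omega]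
      rw [Nat.choose_symm (by omega : (j - B.card) - ((j-B.card) - 1) ≤ j - B.card)]
      rw [show (j - B.card) - ((j-B.card) - 1) = 1 from by omega, Nat.choose_one_right]
    · rw [if_neg hP]
      have : A.filter (fun B' => B' ⊆ T ∧ T.card = j) = ∅ := by
        rw [Finset.filter_eq_empty_iff]
        intro B' hB'
        rw [hA, Finset.mem_filter] at hB'
        rintro ⟨hsub, hcard⟩
        exact hP ⟨hB'.2.1.trans hsub, hcard⟩
      rw [this]
      simp
  rw [Finset.sum_congr rfl h1] at h0
  have h2 : ∑ T ∈ (univ : Finset (Finset (Fin n))),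
      (if B ⊆ T ∧ T.card = j then ((j - B.card : ℕ) : ℝ) * h T else 0)
      = ((j - B.card : ℕ) : ℝ) * psi j h B := by
    rw [psi, Finset.mul_sum, Finset.sum_filter]
  rw [h2] at h0
  have hc : ((j - B.card : ℕ) : ℝ) ≠ 0 := Nat.cast_ne_zero.2 (by omega)
  rcases mul_eq_zero.1 h0 with h' | h'
  · exact absurd h' hc
  · exact h'


lemma psi_card_eq (j : ℕ) (h : V n) (B : Finset (Fin n)) (hB : B.card = j) :
    psi j h B = h B := by
  rw [psi]
  rw [Finset.sum_eq_single_of_mem B]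
  · simp [hB]
  · intro T hT hTB
    rw [Finset.mem_filter] at hT
    exact absurd (Finset.eq_of_subset_of_card_le hT.2.1 (by omega)).symm hTB

lemma psi_card_gt (j : ℕ) (h : V n) (B : Finset (Fin n)) (hB : j < B.card) :
    psi j h B = 0 := by
  rw [psi]
  apply Finset.sum_eq_zero
  intro T hT
  rw [Finset.mem_filter] at hT
  have := Finset.card_le_card hT.2.1
  omega

lemma neg_one_sum {γ : Type*} [DecidableEq γ] (s : Finset γ) :
    ∑ B ∈ s.powerset, (-1:ℝ)^B.card = if s = ∅ then 1 else 0 := by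
  have hz : ∑ B ∈ s.powerset, (-1:ℤ)^B.card = if s = ∅ then 1 else 0 :=
    Finset.sum_powerset_neg_one_pow_card
  have hc : ((∑ B ∈ s.powerset, (-1:ℤ)^B.card : ℤ) : ℝ) = ∑ B ∈ s.powerset, (-1:ℝ)^B.card := by
    push_cast
    rfl
  rw [← hc, hz]
  split_ifs <;> simp

def Phi (j : ℕ) (h : V n) (A : Finset (Fin n)) : ℝ := ∑ T ∈ Finset.powersetCard j A, h T

lemma phi_compl (j : ℕ) (h : V n) (hh : h ∈ Xs n j) (hD : Dop h = 0) (A : Finset (Fin n)) :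
    Phi j h Aᶜ = (-1:ℝ)^j * Phi j h A := by
  classical
  set F1 := univ.filter (fun T : Finset (Fin n) => T.card = j) with hF1
  have e1 : Phi j h Aᶜ = ∑ T ∈ F1.filter (fun T => T ∩ A = ∅), h T := by
    rw [Phi]
    congr 1
    ext T
    rw [Finset.mem_powersetCard, hF1, Finset.filter_filter, Finset.mem_filter]
    simp only [Finset.mem_univ, true_and]
    rw [and_comm]
    apply and_congr_right'
    rw [← Finset.disjoint_iff_inter_eq_empty]
    constructor
    · intro hsub
      exact Finset.disjoint_left.2 fun a ha haA => by
        have := hsub ha; rw [Finset.mem_compl] at this; exact this haA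
    · intro hdis a ha
      rw [Finset.mem_compl]
      exact fun haA => (Finset.disjoint_left.1 hdis) ha haA
  have e2 : ∑ T ∈ F1.filter (fun T => T ∩ A = ∅), h T
      = ∑ T ∈ F1, ∑ B ∈ A.powerset.filter (fun B => B ⊆ T), (-1:ℝ)^B.card * h T := by
    rw [Finset.sum_filter]
    apply Finset.sum_congr rfl
    intro T _
    rw [← Finset.sum_mul]
    have hps : A.powerset.filter (fun B => B ⊆ T) = (T ∩ A).powerset := by
      ext B
      simp only [Finset.mem_filter, Finset.mem_powerset, Finset.subset_inter_iff]
      tauto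
    rw [hps, neg_one_sum]
    split_ifs with hins
    · rw [one_mul]
    · rw [zero_mul]
  have e3 : ∑ T ∈ F1, ∑ B ∈ A.powerset.filter (fun B => B ⊆ T), (-1:ℝ)^B.card * h T
      = ∑ B ∈ A.powerset, (-1:ℝ)^B.card * psi j h B := by
    rw [swap_filter_sum F1 A.powerset (fun T B => B ⊆ T) (fun T B => (-1:ℝ)^B.card * h T)]
    apply Finset.sum_congr rfl
    intro B _
    rw [psi, Finset.mul_sum]
    rw [hF1, Finset.filter_filter]
    apply Finset.sum_congr
    · apply Finset.filter_congr
      intro T _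
      tauto
    · intro T _
      rfl
  have e4 : ∑ B ∈ A.powerset, (-1:ℝ)^B.card * psi j h B
      = ∑ B ∈ A.powerset, (if B.card = j then (-1:ℝ)^j * h B else 0) := by
    apply Finset.sum_congr rfl
    intro B _
    rcases lt_trichotomy B.card j with hlt | heq | hgt
    · rw [psi_eq_zero' j h hh hD B hlt, if_neg (by omega), mul_zero]
    · rw [psi_card_eq j h B heq, if_pos heq, heq]
    · rw [psi_card_gt j h B hgt, if_neg (by omega), mul_zero]
  have e5 : ∑ B ∈ A.powerset, (if B.card = j then (-1:ℝ)^j * h B else 0)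
      = (-1:ℝ)^j * Phi j h A := by
    rw [← Finset.sum_filter, Phi, Finset.mul_sum]
    rw [Finset.powersetCard_eq_filter]
  rw [e1, e2, e3, e4, e5]

lemma Uop_iter_mem (h : V n) (j : ℕ) (hh : h ∈ Xs n j) (a : ℕ) :
    Uop^[a] h ∈ Xs n (j + a) := by
  induction a with
  | zero => simpa using hh
  | succ a ih =>
    rw [Function.iterate_succ_apply', show j + (a+1) = (j + a) + 1 from by omega]
    exact Uop_mem _ _ ih

lemma Uop_iter_eq (h : V n) (j : ℕ) (hh : h ∈ Xs n j) (a : ℕ) :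
    ∀ S : Finset (Fin n), S.card = j + a →
      Uop^[a] h S = (a.factorial : ℝ) * Phi j h S := by
  induction a with
  | zero =>
    intro S hS
    rw [Function.iterate_zero_apply, Nat.factorial_zero, Nat.cast_one, one_mul, Phi]
    rw [show j = S.card from by omega, Finset.powersetCard_self, Finset.sum_singleton]
  | succ a ih =>
    intro S hS
    rw [Function.iterate_succ_apply', Uop]
    have hterm : ∀ w ∈ S, Uop^[a] h (S.erase w) = (a.factorial : ℝ) * Phi j h (S.erase w) := by
      intro w hw
      exact ih (S.erase w) (by rw [Finset.card_erase_of_mem hw]; omega)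
    rw [Finset.sum_congr rfl hterm]
    have hswap : ∑ w ∈ S, Phi j h (S.erase w) = ((a+1 : ℕ) : ℝ) * Phi j h S := by
      have hinner : ∀ w ∈ S, Phi j h (S.erase w)
          = ∑ T ∈ (Finset.powersetCard j S).filter (fun T => w ∉ T), h T := by
        intro w hw
        rw [Phi]
        congr 1
        ext T
        rw [Finset.mem_filter, Finset.mem_powersetCard, Finset.mem_powersetCard,
          Finset.subset_erase]
        tauto
      rw [Finset.sum_congr rfl hinner]
      rw [swap_filter_sum S (Finset.powersetCard j S) (fun w T => w ∉ T) (fun w T => h T)]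
      rw [Phi, Finset.mul_sum]
      apply Finset.sum_congr rfl
      intro T hT
      rw [Finset.mem_powersetCard] at hT
      rw [Finset.sum_const, nsmul_eq_mul]
      congr 1
      have hf : S.filter (fun w => w ∉ T) = S \ T := by
        ext w; rw [Finset.mem_filter, Finset.mem_sdiff]
      rw [hf, Finset.card_sdiff_of_subset hT.1, hS, hT.2]
      norm_num
    rw [← Finset.mul_sum, hswap]
    rw [Nat.factorial_succ]
    push_cast
    ring

lemma K_eigen (r j : ℕ) (hj : j ≤ r) (hrn : 2*r ≤ n) (h : V n)
    (hh : h ∈ Xs n j) (hD : Dop h = 0) :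
    Kop r (Uop^[r-j] h) = ((-1:ℝ)^j * ((n-r-j).choose (r-j) : ℕ)) • Uop^[r-j] h := by
  have hmem : Uop^[r-j] h ∈ Xs n r := by
    have := Uop_iter_mem h j hh (r-j)
    rwa [show j + (r-j) = r from by omega] at this
  funext S
  by_cases hS : S.card = r
  case neg =>
    rw [Pi.smul_apply, hmem S hS, Kop, if_neg hS, smul_eq_mul, mul_zero]
  case pos =>
  rw [Pi.smul_apply, smul_eq_mul, Kop, if_pos hS]
  have hSc : (Sᶜ).card = n - r := by rw [Finset.card_compl, Fintype.card_fin, hS]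
  have e0 : univ.filter (fun T : Finset (Fin n) => T.card = r ∧ Disjoint S T)
      = Finset.powersetCard r Sᶜ := by
    ext T
    rw [Finset.mem_filter, Finset.mem_powersetCard]
    constructor
    · rintro ⟨-, hc, hd⟩
      refine ⟨fun a ha => Finset.mem_compl.2 fun haS => ?_, hc⟩
      exact (Finset.disjoint_left.1 hd) haS ha
    · rintro ⟨hsub, hc⟩
      refine ⟨Finset.mem_univ _, hc, Finset.disjoint_left.2 fun a haS haT => ?_⟩
      exact (Finset.mem_compl.1 (hsub haT)) haS
  rw [e0]
  have e1 : ∀ T ∈ Finset.powersetCard r Sᶜ, Uop^[r-j] h T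
      = ((r-j).factorial : ℝ) * Phi j h T := by
    intro T hT
    rw [Finset.mem_powersetCard] at hT
    exact Uop_iter_eq h j hh (r-j) T (by omega)
  rw [Finset.sum_congr rfl e1, ← Finset.mul_sum]
  have e2 : ∑ T ∈ Finset.powersetCard r Sᶜ, Phi j h T
      = (((n-r-j).choose (r-j) : ℕ) : ℝ) * Phi j h Sᶜ := by
    have hinner : ∀ T ∈ Finset.powersetCard r Sᶜ, Phi j h T
        = ∑ T' ∈ (Finset.powersetCard j Sᶜ).filter (fun T' => T' ⊆ T), h T' := by
      intro T hT
      rw [Finset.mem_powersetCard] at hT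
      rw [Phi]
      congr 1
      ext T'
      rw [Finset.mem_filter, Finset.mem_powersetCard, Finset.mem_powersetCard]
      constructor
      · rintro ⟨hsub, hc⟩
        exact ⟨⟨hsub.trans hT.1, hc⟩, hsub⟩
      · rintro ⟨⟨-, hc⟩, hsub⟩
        exact ⟨hsub, hc⟩
    rw [Finset.sum_congr rfl hinner]
    rw [swap_filter_sum (Finset.powersetCard r Sᶜ) (Finset.powersetCard j Sᶜ)
      (fun T T' => T' ⊆ T) (fun T T' => h T')]
    rw [Phi, Finset.mul_sum]
    apply Finset.sum_congr rfl
    intro T' hT'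
    rw [Finset.mem_powersetCard] at hT'
    rw [Finset.sum_const, nsmul_eq_mul]
    congr 1
    have hfc : (Finset.powersetCard r Sᶜ).filter (fun T => T' ⊆ T)
        = univ.filter (fun T => T' ⊆ T ∧ T ⊆ Sᶜ ∧ T.card = r) := by
      ext T
      rw [Finset.mem_filter, Finset.mem_filter, Finset.mem_powersetCard]
      simp only [Finset.mem_univ, true_and]
      tauto
    rw [hfc, card_between T' Sᶜ hT'.1 r (by omega), hSc, hT'.2]
  rw [e2, phi_compl j h hh hD S]
  have e3 : Uop^[r-j] h S = ((r-j).factorial : ℝ) * Phi j h S :=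
    Uop_iter_eq h j hh (r-j) S (by omega)
  rw [e3]
  ring

lemma dot_comm (f g : V n) : dot f g = dot g f := by
  rw [dot, dot]
  exact Finset.sum_congr rfl fun S _ => mul_comm _ _

lemma dot_sum_left {α : Type*} (s : Finset α) (F : α → V n) (g : V n) :
    dot (∑ j ∈ s, F j) g = ∑ j ∈ s, dot (F j) g := by
  simp only [dot, Finset.sum_apply, Finset.sum_mul]
  rw [Finset.sum_comm]

lemma dot_smul_left (c : ℝ) (f g : V n) : dot (c • f) g = c * dot f g := by
  simp only [dot, Pi.smul_apply, smul_eq_mul, Finset.mul_sum, mul_assoc]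

lemma dot_smul_right (c : ℝ) (f g : V n) : dot f (c • g) = c * dot f g := by
  simp only [dot, Pi.smul_apply, smul_eq_mul, Finset.mul_sum]
  apply Finset.sum_congr rfl
  intro S _
  ring

lemma dot_self_nonneg (f : V n) : 0 ≤ dot f f :=
  Finset.sum_nonneg fun S _ => mul_self_nonneg _

lemma K_apply_full (r : ℕ) (f : V n) (S : Finset (Fin n)) :
    Kop r f S = ∑ T ∈ univ, if S.card = r ∧ T.card = r ∧ Disjoint S T then f T else 0 := by
  rw [Kop]
  split_ifs with hS
  · rw [Finset.sum_filter]
    apply Finset.sum_congr rfl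
    intro T _
    by_cases h1 : T.card = r ∧ Disjoint S T
    · rw [if_pos h1, if_pos ⟨hS, h1⟩]
    · rw [if_neg h1, if_neg (by tauto)]
  · symm
    apply Finset.sum_eq_zero
    intro T _
    rw [if_neg (by tauto)]

lemma K_symm (r : ℕ) (f g : V n) : dot (Kop r f) g = dot f (Kop r g) := by
  have lhs : dot (Kop r f) g = ∑ S ∈ univ, ∑ T ∈ univ,
      (if S.card = r ∧ T.card = r ∧ Disjoint S T then f T * g S else 0) := by
    rw [dot]
    apply Finset.sum_congr rfl
    intro S _
    rw [K_apply_full, Finset.sum_mul]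
    apply Finset.sum_congr rfl
    intro T _
    rw [ite_mul, zero_mul]
  have rhs : dot f (Kop r g) = ∑ S ∈ univ, ∑ T ∈ univ,
      (if S.card = r ∧ T.card = r ∧ Disjoint S T then f S * g T else 0) := by
    rw [dot]
    apply Finset.sum_congr rfl
    intro S _
    rw [K_apply_full, Finset.mul_sum]
    apply Finset.sum_congr rfl
    intro T _
    rw [mul_ite, mul_zero]
  rw [lhs, rhs, Finset.sum_comm]
  apply Finset.sum_congr rfl
  intro T _
  apply Finset.sum_congr rfl
  intro S _
  have : (S.card = r ∧ T.card = r ∧ Disjoint S T) ↔ (T.card = r ∧ S.card = r ∧ Disjoint T S) := by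
    rw [disjoint_comm]; tauto
  by_cases hc : S.card = r ∧ T.card = r ∧ Disjoint S T
  · rw [if_pos hc, if_pos (this.1 hc), mul_comm]
  · rw [if_neg hc, if_neg (fun hh => hc (this.2 hh))]

lemma Kop_sum {α : Type*} (r : ℕ) (s : Finset α) (F : α → V n) :
    Kop r (∑ j ∈ s, F j) = ∑ j ∈ s, Kop r (F j) := by
  funext S
  rw [Finset.sum_apply]
  simp only [K_apply_full]
  rw [Finset.sum_comm]
  apply Finset.sum_congr rfl
  intro T _
  rw [Finset.sum_apply]
  split_ifs with hc
  · rfl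
  · exact (Finset.sum_eq_zero fun j _ => rfl).symm

lemma eigen_orth (r : ℕ) (f g : V n) (a b : ℝ) (hf : Kop r f = a • f)
    (hg : Kop r g = b • g) (hab : a ≠ b) : dot f g = 0 := by
  have h1 : a * dot f g = b * dot f g := by
    calc a * dot f g = dot (a • f) g := (dot_smul_left a f g).symm
      _ = dot (Kop r f) g := by rw [hf]
      _ = dot f (Kop r g) := K_symm r f g
      _ = dot f (b • g) := by rw [hg]
      _ = b * dot f g := dot_smul_right b f g
  by_contra hne
  exact hab (mul_right_cancel₀ hne h1)

def eAll (r : ℕ) : V n := fun S => if S.card = r then 1 else 0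

lemma eAll_mem (r : ℕ) : eAll r ∈ Xs n r := by
  intro S hS
  rw [eAll, if_neg hS]

lemma card_rsets (r : ℕ) : (univ.filter (fun T : Finset (Fin n) => T.card = r)).card
    = n.choose r := by
  have : univ.filter (fun T : Finset (Fin n) => T.card = r)
      = Finset.powersetCard r (univ : Finset (Fin n)) := by
    ext T
    rw [Finset.mem_filter, Finset.mem_powersetCard]
    simp
  rw [this, Finset.card_powersetCard, Finset.card_univ, Fintype.card_fin]

lemma K_eAll (r : ℕ) (hrn : 2*r ≤ n) :
    Kop r (eAll r : V n) = (((n-r).choose r : ℕ) : ℝ) • eAll r := by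
  funext S
  rw [Pi.smul_apply, smul_eq_mul, Kop, eAll]
  by_cases hS : S.card = r
  · rw [if_pos hS, if_pos hS, mul_one]
    have e0 : univ.filter (fun T : Finset (Fin n) => T.card = r ∧ Disjoint S T)
        = Finset.powersetCard r Sᶜ := by
      ext T
      rw [Finset.mem_filter, Finset.mem_powersetCard]
      constructor
      · rintro ⟨-, hc, hd⟩
        refine ⟨fun a ha => Finset.mem_compl.2 fun haS => ?_, hc⟩
        exact (Finset.disjoint_left.1 hd) haS ha
      · rintro ⟨hsub, hc⟩
        refine ⟨Finset.mem_univ _, hc, Finset.disjoint_left.2 fun a haS haT => ?_⟩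
        exact (Finset.mem_compl.1 (hsub haT)) haS
    rw [e0]
    have hterm : ∀ T ∈ Finset.powersetCard r Sᶜ, (eAll r : V n) T = 1 := by
      intro T hT
      rw [Finset.mem_powersetCard] at hT
      rw [eAll, if_pos hT.2]
    rw [Finset.sum_congr rfl hterm, Finset.sum_const, nsmul_eq_mul, mul_one]
    rw [Finset.card_powersetCard, Finset.card_compl, Fintype.card_fin, hS]
  · rw [if_neg hS, if_neg hS, mul_zero]

section chooseArith

lemma choose_step (a b : ℕ) (ha : 1 ≤ a) (hb : 1 ≤ b) :
    a * Nat.choose (a-1) (b-1) = Nat.choose a b * b := by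
  obtain ⟨a', rfl⟩ := Nat.exists_eq_add_of_le ha
  obtain ⟨b', rfl⟩ := Nat.exists_eq_add_of_le hb
  rw [show 1 + a' - 1 = a' from by omega, show 1 + b' - 1 = b' from by omega,
    show 1 + a' = a' + 1 from by omega, show 1 + b' = b' + 1 from by omega]
  exact Nat.add_one_mul_choose_eq a' b'

lemma choose_pascal_lt (a b : ℕ) (hb : 1 ≤ b) (hab : b + 1 ≤ a) :
    Nat.choose (a-1) (b-1) < Nat.choose a b := by
  obtain ⟨a', rfl⟩ := Nat.exists_eq_add_of_le (show 1 ≤ a by omega)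
  obtain ⟨b', rfl⟩ := Nat.exists_eq_add_of_le hb
  rw [show 1 + a' - 1 = a' from by omega, show 1 + b' - 1 = b' from by omega,
    show 1 + a' = a' + 1 from by omega, show 1 + b' = b' + 1 from by omega]
  rw [Nat.choose_succ_succ]
  have h1 : 0 < a'.choose b'.succ := Nat.choose_pos (by omega)
  omega

end chooseArith

lemma Cfun_lt (r : ℕ) (hn : 2*r+1 ≤ n) :
    ∀ j k : ℕ, j < k → k ≤ r →
      (n - r - k).choose (r - k) < (n - r - j).choose (r - j) := by
  intro j k hjk hk
  induction k with
  | zero => omega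
  | succ k ih =>
    have hstep : (n - r - (k+1)).choose (r - (k+1)) < (n - r - k).choose (r - k) := by
      have h1 : n - r - (k+1) = (n - r - k) - 1 := by omega
      have h2 : r - (k+1) = (r - k) - 1 := by omega
      rw [h1, h2]
      apply choose_pascal_lt
      · omega
      · omega
    rcases Nat.lt_succ_iff_lt_or_eq.1 hjk with h | h
    · exact lt_trans hstep (ih h (by omega))
    · rw [h]; exact hstep

theorem core (r : ℕ) (hr : 3 ≤ r) (hn : 2*r+1 ≤ n) (H : Finset (Finset (Fin n)))
    (hunif : ∀ e ∈ H, e.card = r)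
    (hint : ∀ e ∈ H, ∀ f ∈ H, (e ∩ f).Nonempty)
    (hd : ∀ v : Fin n, (H.filter (fun e => v ∈ e)).card = (n-2).choose (r-2)) :
    False := by
  classical
  set d : ℕ := (n-2).choose (r-2) with hdd
  set m : ℕ := H.card with hmdef
  set N : ℕ := n.choose r with hNdef
  set x : V n := (fun S => if S ∈ H then (1:ℝ) else 0) with hxdef
  have hxX : x ∈ Xs n r := by
    intro S hS
    rw [hxdef]
    exact if_neg (fun hSH => hS (hunif S hSH))
  -- degree sum identity
  have hdm : n * d = r * m := by
    have h1 : ∑ v : Fin n, ((H.filter (fun e => v ∈ e)).card) = ∑ e ∈ H, e.card := by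
      simp_rw [Finset.card_filter]
      rw [Finset.sum_comm]
      apply Finset.sum_congr rfl
      intro e _
      rw [Finset.sum_ite_mem, Finset.univ_inter, Finset.card_eq_sum_ones]
    have h2 : ∑ v : Fin n, ((H.filter (fun e => v ∈ e)).card) = n * d := by
      rw [Finset.sum_congr rfl (fun v _ => hd v), Finset.sum_const, Finset.card_univ,
        Fintype.card_fin, smul_eq_mul]
    have h3 : ∑ e ∈ H, e.card = m * r := by
      rw [Finset.sum_congr rfl hunif, Finset.sum_const, smul_eq_mul]
    rw [h2, h3] at h1
    rw [h1]
    exact Nat.mul_comm m r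
  have hd0 : 0 < d := Nat.choose_pos (by omega)
  have hm0 : 0 < m := by
    rcases Nat.eq_zero_or_pos m with h | h
    · rw [h, Nat.mul_zero] at hdm
      have : n * d ≠ 0 := Nat.mul_ne_zero (by omega) (by omega)
      omega
    · exact h
  have hN0 : 0 < N := Nat.choose_pos (by omega)
  -- decomposition
  obtain ⟨g, hg, hxdec⟩ := decomp r (by omega) x hxX
  set y : ℕ → V n := fun j => Uop^[r-j] (g j) with hydef
  set lam : ℕ → ℝ := fun j => (-1:ℝ)^j * (((n - r - j).choose (r - j) : ℕ) : ℝ) with hlam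
  have hKy : ∀ j, j ≤ r → Kop r (y j) = lam j • y j := by
    intro j hj
    exact K_eigen r j hj (by omega) (g j) (hg j).1 (hg j).2
  have habs : ∀ j, |lam j| = (((n - r - j).choose (r - j) : ℕ) : ℝ) := by
    intro j
    rw [hlam]
    rw [abs_mul, abs_pow, abs_neg, abs_one, one_pow, one_mul, Nat.abs_cast]
  have hdist : ∀ j k, j ≤ r → k ≤ r → j ≠ k → lam j ≠ lam k := by
    intro j k hj hk hjk heq
    have habs2 : (((n - r - j).choose (r - j) : ℕ) : ℝ)
        = (((n - r - k).choose (r - k) : ℕ) : ℝ) := by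
      rw [← habs, ← habs, heq]
    have habs3 : (n - r - j).choose (r - j) = (n - r - k).choose (r - k) := by
      exact_mod_cast habs2
    rcases Nat.lt_or_ge j k with h | h
    · have hlt := Cfun_lt r hn j k h hk
      omega
    · have hlt := Cfun_lt r hn k j (by omega) hj
      omega
  have horth : ∀ j k, j ≤ r → k ≤ r → j ≠ k → dot (y j) (y k) = 0 := by
    intro j k hj hk hjk
    exact eigen_orth r (y j) (y k) (lam j) (lam k) (hKy j hj) (hKy k hk)
      (hdist j k hj hk hjk)
  set s : ℕ → ℝ := fun j => dot (y j) (y j) with hsdef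
  have hs_nonneg : ∀ j, 0 ≤ s j := fun j => dot_self_nonneg _
  have hxy : ∀ j, j ≤ r → dot x (y j) = s j := by
    intro j hj
    rw [hxdec, dot_sum_left]
    exact Finset.sum_eq_single_of_mem j (Finset.mem_range.2 (by omega))
      (fun k hk hkj => horth k j (by rw [Finset.mem_range] at hk; omega) hj hkj)
  have hxx : dot x x = (m : ℝ) := by
    rw [dot]
    have hterm : ∀ S ∈ (univ : Finset (Finset (Fin n))),
        x S * x S = if S ∈ H then (1:ℝ) else 0 := by
      intro S _
      rw [hxdef]
      dsimp only
      split_ifs <;> norm_num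
    rw [Finset.sum_congr rfl hterm, Finset.sum_ite_mem, Finset.univ_inter,
      Finset.sum_const, nsmul_eq_mul, mul_one]
  have hsum : ∑ j ∈ Finset.range (r+1), s j = (m : ℝ) := by
    rw [← hxx]
    nth_rewrite 2 [hxdec]
    rw [dot_comm, dot_sum_left]
    apply Finset.sum_congr rfl
    intro j hj
    rw [dot_comm]
    exact (hxy j (by rw [Finset.mem_range] at hj; omega)).symm
  have hKx0 : dot x (Kop r x) = 0 := by
    rw [dot]
    apply Finset.sum_eq_zero
    intro S _
    by_cases hS : S ∈ H
    · have hK0 : Kop r x S = 0 := by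
        rw [Kop]
        split_ifs with hc
        · apply Finset.sum_eq_zero
          intro T hT
          rw [Finset.mem_filter] at hT
          rw [hxdef]
          dsimp only
          rw [if_neg]
          intro hTH
          have hne := hint S hS T hTH
          have hdisj := hT.2.2
          rw [Finset.disjoint_iff_inter_eq_empty] at hdisj
          rw [hdisj] at hne
          exact Finset.not_nonempty_empty hne
        · rfl
      rw [hK0, mul_zero]
    · rw [hxdef]
      dsimp only
      rw [if_neg hS, zero_mul]
  have hKxval : dot x (Kop r x) = ∑ j ∈ Finset.range (r+1), lam j * s j := by
    nth_rewrite 2 [hxdec]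
    rw [Kop_sum]
    have heig : ∀ j ∈ Finset.range (r+1), Kop r (y j) = lam j • y j := by
      intro j hj
      exact hKy j (by rw [Finset.mem_range] at hj; omega)
    rw [Finset.sum_congr rfl heig]
    rw [dot_comm, dot_sum_left]
    apply Finset.sum_congr rfl
    intro j hj
    rw [dot_comm (lam j • y j) x, dot_smul_right]
    congr 1
    exact hxy j (by rw [Finset.mem_range] at hj; omega)
  have hs1 : s 1 = 0 := by
    have h1 : s 1 = dot x (y 1) := (hxy 1 (by omega)).symm
    have hy1 : ∀ S ∈ H, y 1 S = (((r-1).factorial : ℕ) : ℝ) * ∑ v ∈ S, g 1 {v} := by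
      intro S hS
      have hcard : S.card = 1 + (r - 1) := by rw [hunif S hS]; omega
      rw [hydef]
      dsimp only
      rw [Uop_iter_eq (g 1) 1 (hg 1).1 (r-1) S hcard]
      congr 1
      rw [Phi]
      have himg : Finset.powersetCard 1 S = S.image (fun v => ({v} : Finset (Fin n))) := by
        ext T
        rw [Finset.mem_powersetCard, Finset.mem_image]
        constructor
        · rintro ⟨hsub, hcard1⟩
          obtain ⟨a, rfl⟩ := Finset.card_eq_one.1 hcard1
          exact ⟨a, hsub (Finset.mem_singleton_self a), rfl⟩
        · rintro ⟨v, hv, rfl⟩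
          exact ⟨Finset.singleton_subset_iff.2 hv, Finset.card_singleton v⟩
      rw [himg, Finset.sum_image (fun v _ w _ h => Finset.singleton_injective h)]
    have h2 : dot x (y 1) = (((r-1).factorial : ℕ) : ℝ) * ∑ S ∈ H, ∑ v ∈ S, g 1 {v} := by
      rw [dot]
      have hterm : ∀ S ∈ (univ : Finset (Finset (Fin n))), x S * y 1 S
          = if S ∈ H then (((r-1).factorial : ℕ) : ℝ) * ∑ v ∈ S, g 1 {v} else 0 := by
        intro S _
        rw [hxdef]
        dsimp only
        split_ifs with hS
        · rw [one_mul, hy1 S hS]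
        · rw [zero_mul]
      rw [Finset.sum_congr rfl hterm, Finset.sum_ite_mem, Finset.univ_inter, ← Finset.mul_sum]
    have h3 : ∑ S ∈ H, ∑ v ∈ S, g 1 {v} = (d : ℝ) * ∑ v ∈ (univ : Finset (Fin n)), g 1 {v} := by
      have hin : ∀ S ∈ H, ∑ v ∈ S, g 1 {v}
          = ∑ v ∈ univ.filter (fun v => v ∈ S), g 1 {v} := by
        intro S _
        congr 1
        ext v
        simp
      rw [Finset.sum_congr rfl hin]
      rw [swap_filter_sum H univ (fun S v => v ∈ S) (fun S v => g 1 {v})]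
      rw [Finset.mul_sum]
      apply Finset.sum_congr rfl
      intro v _
      rw [Finset.sum_const, nsmul_eq_mul, hd v]
    have h4 : ∑ v ∈ (univ : Finset (Fin n)), g 1 {v} = 0 := by
      have hDg := congrFun (hg 1).2 ∅
      rw [Dop] at hDg
      simpa using hDg
    rw [h1, h2, h3, h4, mul_zero, mul_zero]
  -- the all-r-sets eigenvector
  have hKeAll : Kop r (eAll r : V n) = lam 0 • eAll r := by
    rw [K_eAll r (by omega)]
    congr 1
    rw [hlam]
    norm_num
  have hye : ∀ j, j ≤ r → j ≠ 0 → dot (y j) (eAll r) = 0 := by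
    intro j hj hj0
    exact eigen_orth r (y j) (eAll r) (lam j) (lam 0) (hKy j hj) hKeAll
      (hdist j 0 hj (by omega) hj0)
  have hme : dot x (eAll r) = (m : ℝ) := by
    rw [dot]
    have hterm : ∀ S ∈ (univ : Finset (Finset (Fin n))),
        x S * eAll r S = if S ∈ H then (1:ℝ) else 0 := by
      intro S _
      rw [hxdef, eAll]
      dsimp only
      by_cases hS : S ∈ H
      · rw [if_pos hS, if_pos (hunif S hS), one_mul]
      · rw [if_neg hS, zero_mul]
    rw [Finset.sum_congr rfl hterm, Finset.sum_ite_mem, Finset.univ_inter,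
      Finset.sum_const, nsmul_eq_mul, mul_one]
  have hee : dot (eAll r : V n) (eAll r) = (N : ℝ) := by
    rw [dot]
    have hterm : ∀ S ∈ (univ : Finset (Finset (Fin n))),
        (eAll r : V n) S * eAll r S = if S.card = r then (1:ℝ) else 0 := by
      intro S _
      rw [eAll]
      split_ifs <;> norm_num
    rw [Finset.sum_congr rfl hterm, ← Finset.sum_filter, Finset.sum_const, nsmul_eq_mul,
      mul_one, card_rsets]
  set t : ℝ := (r.factorial : ℝ) * g 0 ∅ with htdef
  have hy0 : y 0 = t • eAll r := by
    funext S
    rw [hydef]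
    dsimp only
    rw [Pi.smul_apply, smul_eq_mul, eAll]
    simp only [Nat.sub_zero]
    by_cases hS : S.card = r
    · rw [if_pos hS, mul_one]
      rw [Uop_iter_eq (g 0) 0 (hg 0).1 r S (by omega), Phi, Finset.powersetCard_zero,
        Finset.sum_singleton, htdef]
    · rw [if_neg hS, mul_zero]
      have hmem := Uop_iter_mem (g 0) 0 (hg 0).1 r
      exact hmem S (by omega)
  have htN : t * N = (m : ℝ) := by
    rw [← hme]
    rw [hxdec, dot_sum_left]
    have hsingle : ∑ k ∈ Finset.range (r+1), dot (y k) (eAll r) = dot (y 0) (eAll r) :=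
      Finset.sum_eq_single_of_mem 0 (Finset.mem_range.2 (by omega))
        (fun k hk hk0 => hye k (by rw [Finset.mem_range] at hk; omega) hk0)
    rw [hsingle, hy0, dot_smul_left, hee]
  have hs0 : s 0 * N = (m:ℝ) * m := by
    rw [hsdef]
    dsimp only
    rw [hy0, dot_smul_left, dot_smul_right, hee, ← htN]
    ring
  -- final spectral inequality
  set C0 : ℕ := (n-r).choose r with hC0def
  set c3 : ℕ := (n-r-3).choose (r-3) with hc3def
  have hlam0 : lam 0 = (C0:ℝ) := by
    rw [hlam, hC0def]
    norm_num
  have hlam_ge : ∀ j, 2 ≤ j → j ≤ r → -(c3:ℝ) ≤ lam j := by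
    intro j h2 hj
    rcases Nat.even_or_odd j with he | ho
    · rw [hlam]
      dsimp only
      rw [Even.neg_one_pow he, one_mul]
      have ha : (0:ℝ) ≤ (((n - r - j).choose (r - j) : ℕ) : ℝ) := Nat.cast_nonneg _
      have hb : (0:ℝ) ≤ (c3:ℝ) := Nat.cast_nonneg _
      linarith
    · rw [hlam]
      dsimp only
      rw [Odd.neg_one_pow ho, neg_one_mul, neg_le_neg_iff]
      have h3j : 3 ≤ j := by
        rcases ho with ⟨w, hw⟩
        omega
      rcases Nat.eq_or_lt_of_le h3j with h | h
      · rw [← h, hc3def]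
      · have hlt := Cfun_lt r hn 3 j h hj
        rw [hc3def]
        exact_mod_cast le_of_lt hlt
  have hsplit : ∀ F : ℕ → ℝ, ∑ j ∈ Finset.range (r+1), F j
      = F 0 + F 1 + ∑ j ∈ Finset.Ico 2 (r+1), F j := by
    intro F
    rw [Finset.range_eq_Ico]
    rw [← Finset.sum_Ico_consecutive F (by omega : (0:ℕ) ≤ 2) (by omega : 2 ≤ r+1)]
    congr 1
    rw [← Finset.range_eq_Ico]
    rw [Finset.sum_range_succ, Finset.sum_range_one]
  have hIco : -(c3:ℝ) * ∑ j ∈ Finset.Ico 2 (r+1), s j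
      ≤ ∑ j ∈ Finset.Ico 2 (r+1), lam j * s j := by
    rw [Finset.mul_sum]
    apply Finset.sum_le_sum
    intro j hj
    rw [Finset.mem_Ico] at hj
    exact mul_le_mul_of_nonneg_right (hlam_ge j hj.1 (by omega)) (hs_nonneg j)
  have hIco_s : ∑ j ∈ Finset.Ico 2 (r+1), s j = (m:ℝ) - s 0 := by
    have hsp := hsplit s
    rw [hsum, hs1] at hsp
    linarith
  have hzero : (0:ℝ) = lam 0 * s 0 + lam 1 * s 1
      + ∑ j ∈ Finset.Ico 2 (r+1), lam j * s j := by
    rw [← hsplit (fun j => lam j * s j), ← hKxval, hKx0]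
  have hfinal : ((C0:ℝ) + c3) * s 0 ≤ (c3:ℝ) * m := by
    rw [hs1, mul_zero, add_zero, hlam0] at hzero
    rw [hIco_s] at hIco
    nlinarith [hs_nonneg 0]
  have hRineq : ((C0:ℝ) + c3) * m ≤ (c3:ℝ) * N := by
    have hNpos : (0:ℝ) < N := by exact_mod_cast hN0
    have hmpos : (0:ℝ) < m := by exact_mod_cast hm0
    have h1 : (((C0:ℝ) + c3) * s 0) * N ≤ ((c3:ℝ) * m) * N :=
      mul_le_mul_of_nonneg_right hfinal (le_of_lt hNpos)
    have h2 : ((C0:ℝ) + c3) * ((m:ℝ) * m) ≤ (c3:ℝ) * m * N := by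
      calc ((C0:ℝ) + c3) * ((m:ℝ) * m) = (((C0:ℝ) + c3) * s 0) * N := by
            rw [← hs0]; ring
        _ ≤ ((c3:ℝ) * m) * N := h1
        _ = (c3:ℝ) * m * N := rfl
    nlinarith
  have hNineq : (C0 + c3) * m ≤ c3 * N := by exact_mod_cast hRineq
  -- purely arithmetic contradiction
  have hc3pos : 0 < c3 := Nat.choose_pos (by omega)
  have e1 : n * Nat.choose (n-1) (r-1) = N * r := by
    have hcs := choose_step n r (by omega) (by omega)
    rw [hNdef]
    exact hcs
  have e2 : (n-1) * Nat.choose (n-2) (r-2) = Nat.choose (n-1) (r-1) * (r-1) := by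
    have hcs := choose_step (n-1) (r-1) (by omega) (by omega)
    rw [show n-1-1 = n-2 from by omega, show r-1-1 = r-2 from by omega] at hcs
    exact hcs
  have eN : N * (r * (r-1)) = n * (n-1) * d := by
    calc N * (r*(r-1)) = (N * r) * (r-1) := by ring
      _ = (n * Nat.choose (n-1) (r-1)) * (r-1) := by rw [e1]
      _ = n * (Nat.choose (n-1) (r-1) * (r-1)) := by ring
      _ = n * ((n-1) * Nat.choose (n-2) (r-2)) := by rw [e2]
      _ = n * (n-1) * d := by rw [hdd]; ring
  have f1 : (n-r) * Nat.choose (n-r-1) (r-1) = C0 * r := by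
    have hcs := choose_step (n-r) r (by omega) (by omega)
    rw [hC0def]
    exact hcs
  have f2 : (n-r-1) * Nat.choose (n-r-2) (r-2) = Nat.choose (n-r-1) (r-1) * (r-1) := by
    have hcs := choose_step (n-r-1) (r-1) (by omega) (by omega)
    rw [show n-r-1-1 = n-r-2 from by omega, show r-1-1 = r-2 from by omega] at hcs
    exact hcs
  have f3 : (n-r-2) * Nat.choose (n-r-3) (r-3) = Nat.choose (n-r-2) (r-2) * (r-2) := by
    have hcs := choose_step (n-r-2) (r-2) (by omega) (by omega)
    rw [show n-r-2-1 = n-r-3 from by omega, show r-2-1 = r-3 from by omega] at hcs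
    exact hcs
  have eC : C0 * (r*(r-1)*(r-2)) = (n-r)*((n-r-1)*((n-r-2)*c3)) := by
    calc C0 * (r*(r-1)*(r-2)) = ((C0 * r) * (r-1)) * (r-2) := by ring
      _ = (((n-r) * Nat.choose (n-r-1) (r-1)) * (r-1)) * (r-2) := by rw [f1]
      _ = (n-r) * ((Nat.choose (n-r-1) (r-1) * (r-1)) * (r-2)) := by ring
      _ = (n-r) * (((n-r-1) * Nat.choose (n-r-2) (r-2)) * (r-2)) := by rw [f2]
      _ = (n-r) * ((n-r-1) * (Nat.choose (n-r-2) (r-2) * (r-2))) := by ring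
      _ = (n-r) * ((n-r-1) * ((n-r-2) * Nat.choose (n-r-3) (r-3))) := by rw [f3]
      _ = (n-r)*((n-r-1)*((n-r-2)*c3)) := by rw [hc3def]
  have hcmp : r * (r-2) < (n-r-1) * (n-r-2) := by
    have h1 : r ≤ n-r-1 := by omega
    have h2 : r-1 ≤ n-r-2 := by omega
    have h3 : r * (r-2) < r * (r-1) :=
      Nat.mul_lt_mul_of_pos_left (by omega) (by omega)
    calc r * (r-2) < r * (r-1) := h3
      _ ≤ (n-r-1)*(n-r-2) := Nat.mul_le_mul h1 h2
  have hA : c3 * (n-r) < C0 * (r-1) := by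
    have hlpos : 0 < c3 * (n-r) * (r-1) := by
      apply Nat.mul_pos (Nat.mul_pos hc3pos (by omega)) (by omega)
    have hscale : (c3 * (n-r)) * (r*(r-1)*(r-2)) < (C0 * (r-1)) * (r*(r-1)*(r-2)) := by
      calc (c3 * (n-r)) * (r*(r-1)*(r-2))
          = (c3 * (n-r) * (r-1)) * (r * (r-2)) := by ring
        _ < (c3 * (n-r) * (r-1)) * ((n-r-1)*(n-r-2)) :=
            Nat.mul_lt_mul_of_pos_left hcmp hlpos
        _ = (r-1) * ((n-r)*((n-r-1)*((n-r-2)*c3))) := by ring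
        _ = (r-1) * (C0 * (r*(r-1)*(r-2))) := by rw [eC]
        _ = (C0 * (r-1)) * (r*(r-1)*(r-2)) := by ring
    exact Nat.lt_of_mul_lt_mul_right hscale
  have hB : c3 * (n-1) < (C0 + c3) * (r-1) := by
    have hsplitn : c3 * (n-1) = c3 * (n-r) + c3 * (r-1) := by
      rw [← Nat.mul_add]
      congr 1
      omega
    have hdist2 : (C0 + c3) * (r-1) = C0 * (r-1) + c3 * (r-1) := by ring
    omega
  have harith : c3 * N < (C0 + c3) * m := by
    have hndpos : 0 < n * d := Nat.mul_pos (by omega) hd0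
    have hscale2 : (c3 * N) * (r * (r-1)) < ((C0 + c3) * m) * (r * (r-1)) := by
      calc (c3 * N) * (r * (r-1)) = c3 * (N * (r * (r-1))) := by ring
        _ = c3 * (n * (n-1) * d) := by rw [eN]
        _ = (c3 * (n-1)) * (n * d) := by ring
        _ < ((C0 + c3) * (r-1)) * (n * d) :=
            Nat.mul_lt_mul_of_pos_right hB hndpos
        _ = ((C0 + c3) * (r-1)) * (r * m) := by rw [hdm]
        _ = ((C0 + c3) * m) * (r * (r-1)) := by ring
    exact Nat.lt_of_mul_lt_mul_right hscale2
  omega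

end IKproof

/-- The degree of a vertex `v`: the number of edges of `H` containing `v`. -/
def hdeg {n : ℕ} (H : Finset (Finset (Fin n))) (v : Fin n) : ℕ :=
  (H.filter fun e => v ∈ e).card

/-- The Ore-degree `σ_r(H)`: the minimum of `∑_{v ∈ S} deg(v)` over all
    non-edge `r`-subsets `S` of the vertex set. -/
noncomputable def oreDeg {n : ℕ} (r : ℕ) (H : Finset (Finset (Fin n))) : ℕ :=
  sInf {d : ℕ | ∃ S : Finset (Fin n), S.card = r ∧ S ∉ H ∧ d = ∑ v ∈ S, hdeg H v}

theorem stmt3 (n r : ℕ) (hn : 2*r+1 ≤ n) (H : Finset (Finset (Fin n)))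
    (hunif : ∀ e ∈ H, e.card = r)
    (hint : ∀ e ∈ H, ∀ f ∈ H, (e ∩ f).Nonempty) :
    ¬ (∀ v : Fin n, hdeg H v = (n-2).choose (r-2)) := by
  intro hdegs
  have hdegs' : ∀ v : Fin n, (H.filter fun e => v ∈ e).card = (n-2).choose (r-2) :=
    fun v => hdegs v
  rcases Nat.lt_or_ge r 3 with hr | hr
  swap
  · exact IKproof.core r hr hn H hunif hint hdegs'
  -- small cases : the degree is (n-2).choose 0 = 1
  have hch : (n-2).choose (r-2) = 1 := by
    rw [show r - 2 = 0 from by omega, Nat.choose_zero_right]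
  rw [hch] at hdegs'
  -- every vertex lies in exactly one edge
  have hedge : ∀ v : Fin n, ∃ e ∈ H, v ∈ e := by
    intro v
    have h1 := hdegs' v
    have h2 : (H.filter fun e => v ∈ e).Nonempty := by
      rw [← Finset.card_pos, h1]; omega
    obtain ⟨e, he⟩ := h2
    rw [Finset.mem_filter] at he
    exact ⟨e, he.1, he.2⟩
  -- all edges are equal
  have hall : ∀ e ∈ H, ∀ f ∈ H, e = f := by
    intro e he f hf
    by_contra hef
    obtain ⟨w, hw⟩ := hint e he f hf
    rw [Finset.mem_inter] at hw
    have hsub : ({e, f} : Finset (Finset (Fin n))) ⊆ H.filter (fun e => w ∈ e) := by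
      intro a ha
      rw [Finset.mem_insert, Finset.mem_singleton] at ha
      rw [Finset.mem_filter]
      rcases ha with rfl | rfl
      · exact ⟨he, hw.1⟩
      · exact ⟨hf, hw.2⟩
    have hcard : 2 ≤ (H.filter (fun e => w ∈ e)).card := by
      have := Finset.card_le_card hsub
      rw [Finset.card_pair hef] at this
      exact this
    rw [hdegs' w] at hcard
    omega
  -- dispose of r = 0
  rcases Nat.eq_zero_or_pos r with hr0 | hr1
  · obtain ⟨e, he, hv⟩ := hedge ⟨0, by omega⟩
    have hce := hunif e he
    rw [hr0] at hce
    rw [Finset.card_eq_zero.1 hce] at hv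
    exact absurd hv (Finset.notMem_empty _)
  -- get three distinct vertices, all in the same edge
  have h0n : (0:ℕ) < n := by omega
  have h1n : (1:ℕ) < n := by omega
  have h2n : (2:ℕ) < n := by omega
  obtain ⟨e0, he0, hv0⟩ := hedge ⟨0, h0n⟩
  obtain ⟨e1, he1, hv1⟩ := hedge ⟨1, h1n⟩
  obtain ⟨e2, he2, hv2⟩ := hedge ⟨2, h2n⟩
  have he01 : e0 = e1 := hall e0 he0 e1 he1
  have he02 : e0 = e2 := hall e0 he0 e2 he2
  rw [← he01] at hv1
  rw [← he02] at hv2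
  have hsub3 : ({⟨0, h0n⟩, ⟨1, h1n⟩, ⟨2, h2n⟩} : Finset (Fin n)) ⊆ e0 := by
    intro a ha
    rw [Finset.mem_insert, Finset.mem_insert, Finset.mem_singleton] at ha
    rcases ha with rfl | rfl | rfl
    · exact hv0
    · exact hv1
    · exact hv2
  have hc3 : ({⟨0, h0n⟩, ⟨1, h1n⟩, ⟨2, h2n⟩} : Finset (Fin n)).card = 3 := by
    rw [Finset.card_insert_of_notMem, Finset.card_insert_of_notMem, Finset.card_singleton]
    · rw [Finset.mem_singleton]
      intro h
      have := Fin.mk.injEq 1 h1n 2 h2n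
      simp [Fin.ext_iff] at h
    · rw [Finset.mem_insert, Finset.mem_singleton]
      rintro (h | h) <;> simp [Fin.ext_iff] at h
  have := Finset.card_le_card hsub3
  rw [hc3, hunif e0 he0] at this
  omega
end

section
/- Let r ≥ 3 and n ≥ r². If H is an intersecting r-uniform hypergraph on n vertices that is not a subfamily of a 1-star, then σ_r(H) < r·C(n-2, r-2). -/
open Finset

open Finset.Colex
open scoped FinsetFamily

namespace StmtAux

lemma sum_hdeg_eq {n : ℕ} (H : Finset (Finset (Fin n))) (T : Finset (Fin n)) :
    ∑ v ∈ T, hdeg H v = ∑ g ∈ H, (g ∩ T).card := by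
  unfold hdeg
  simp_rw [Finset.card_filter]
  rw [Finset.sum_comm]
  refine Finset.sum_congr rfl fun g _ => ?_
  rw [← Finset.card_filter, Finset.filter_mem_eq_inter, Finset.inter_comm]

lemma exists_low_subset {α : Type*} [DecidableEq α] (W : Finset α) (f : α → ℕ) (r : ℕ)
    (h : r ≤ W.card) :
    ∃ S, S ⊆ W ∧ S.card = r ∧ W.card * ∑ v ∈ S, f v ≤ r * ∑ v ∈ W, f v := by
  obtain ⟨S, hSmem, hSmin⟩ := Finset.exists_min_image (W.powersetCard r)
    (fun S => ∑ v ∈ S, f v) (Finset.powersetCard_nonempty.2 h)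
  rw [Finset.mem_powersetCard] at hSmem
  obtain ⟨hSW, hScard⟩ := hSmem
  refine ⟨S, hSW, hScard, ?_⟩
  have key : ∀ v ∈ S, ∀ w ∈ W \ S, f v ≤ f w := by
    intro v hv w hw
    rw [Finset.mem_sdiff] at hw
    by_contra hlt
    push_neg at hlt
    have hwS : w ∉ S.erase v := fun hc => hw.2 (Finset.mem_of_mem_erase hc)
    have hS' : insert w (S.erase v) ∈ W.powersetCard r := by
      rw [Finset.mem_powersetCard]
      constructor
      · intro a ha
        rcases Finset.mem_insert.1 ha with rfl | ha
        · exact hw.1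
        · exact hSW (Finset.mem_of_mem_erase ha)
      · have hv1 : 1 ≤ S.card := Finset.card_pos.2 ⟨v, hv⟩
        rw [Finset.card_insert_of_notMem hwS, Finset.card_erase_of_mem hv]
        omega
    have hmin := hSmin _ hS'
    have hsum1 : ∑ v ∈ insert w (S.erase v), f v = f w + ∑ u ∈ S.erase v, f u :=
      Finset.sum_insert hwS
    have hsum2 : f v + ∑ u ∈ S.erase v, f u = ∑ u ∈ S, f u :=
      Finset.add_sum_erase _ f hv
    rw [hsum1, ← hsum2] at hmin
    omega
  have h1 : (W \ S).card * ∑ v ∈ S, f v ≤ r * ∑ w ∈ W \ S, f w := by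
    calc (W \ S).card * ∑ v ∈ S, f v = ∑ _w ∈ W \ S, ∑ v ∈ S, f v := by
          rw [Finset.sum_const, smul_eq_mul]
      _ ≤ ∑ w ∈ W \ S, r * f w := by
          refine Finset.sum_le_sum fun w hw => ?_
          calc ∑ v ∈ S, f v ≤ ∑ _v ∈ S, f w := Finset.sum_le_sum fun v hv => key v hv w hw
            _ = r * f w := by rw [Finset.sum_const, smul_eq_mul, hScard]
      _ = r * ∑ w ∈ W \ S, f w := by rw [Finset.mul_sum]
  have h2 : (W \ S).card + r = W.card := by
    rw [Finset.card_sdiff_of_subset hSW]; omega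
  have h3 : ∑ w ∈ W \ S, f w + ∑ v ∈ S, f v = ∑ v ∈ W, f v := Finset.sum_sdiff hSW
  calc W.card * ∑ v ∈ S, f v = (W \ S).card * ∑ v ∈ S, f v + r * ∑ v ∈ S, f v := by
        rw [← h2]; ring
    _ ≤ r * ∑ w ∈ W \ S, f w + r * ∑ v ∈ S, f v := by omega
    _ = r * ∑ v ∈ W, f v := by rw [← h3]; ring

lemma card_le_of_fixed {n : ℕ} (G : Finset (Finset (Fin n))) (P : Finset (Fin n)) (p k : ℕ)
    (hP : P.card = p) (hG : ∀ g ∈ G, g.card = k ∧ P ⊆ g) :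
    G.card ≤ (n - p).choose (k - p) := by
  have : G.card ≤ (Finset.powersetCard (k - p) (Finset.univ \ P)).card := by
    apply Finset.card_le_card_of_injOn (fun g => g \ P)
    · intro g hg
      obtain ⟨hgk, hPg⟩ := hG g hg
      rw [Finset.mem_coe, Finset.mem_powersetCard]
      exact ⟨fun a ha => Finset.mem_sdiff.2 ⟨Finset.mem_univ a, (Finset.mem_sdiff.1 ha).2⟩,
        by rw [Finset.card_sdiff_of_subset hPg, hgk, hP]⟩
    · intro g1 h1 g2 h2 he
      dsimp only at he
      have e1 := (hG g1 h1).2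
      have e2 := (hG g2 h2).2
      have h12 : g1 \ P ∪ P = g2 \ P ∪ P := by rw [he]
      rwa [Finset.sdiff_union_of_subset e1, Finset.sdiff_union_of_subset e2] at h12
  rwa [Finset.card_powersetCard, Finset.card_sdiff_of_subset (Finset.subset_univ P),
    Finset.card_univ, Fintype.card_fin, hP] at this

lemma tele (a s : ℕ) : ∀ j : ℕ, (a + j).choose (s + 1) ≤ a.choose (s + 1) + j * (a + j - 1).choose s := by
  intro j
  induction j with
  | zero => simp
  | succ j ih =>
    have h1 : a + (j + 1) = (a + j) + 1 := by omega
    have h3 : a + (j + 1) - 1 = a + j := by omega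
    rw [h3, h1, Nat.choose_succ_succ']
    have h2 : j * (a + j - 1).choose s ≤ j * (a + j).choose s :=
      Nat.mul_le_mul_left j (Nat.choose_le_choose s (by omega))
    have h4 : (j + 1) * (a + j).choose s = j * (a + j).choose s + (a + j).choose s := by ring
    omega


lemma iterated_kk' {n r k : ℕ} {𝒜 𝒞 : Finset (Finset (Fin n))}
    (h₁ : Set.Sized r (𝒜 : Set (Finset (Fin n)))) (h₂ : #𝒞 ≤ #𝒜) (h₃ : IsInitSeg 𝒞 r) :
    #(∂^[k] 𝒞) ≤ #(∂^[k] 𝒜) := by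
  have e : ∀ (i1 i2 : DecidableEq (Fin n)), @Finset.shadow (Fin n) i1 = @Finset.shadow (Fin n) i2 :=
    fun i1 i2 => congrArg _ (Subsingleton.elim i1 i2)
  convert Finset.iterated_kk h₁ h₂ h₃ using 3 <;> apply e

lemma kkc {n r k : ℕ} (hr : 3 ≤ r) (hrn : 3 * r ≤ n) (hk2 : 2 ≤ k) (hkr : k ≤ r)
    (x : Fin n) (A F : Finset (Finset (Fin n)))
    (hA : ∀ a ∈ A, a.card = r ∧ x ∉ a)
    (hF : ∀ f ∈ F, f.card = n - r ∧ x ∉ f)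
    (hdisj : ∀ a ∈ A, ∀ f ∈ F, ¬ a ⊆ f)
    (hFc : (n-2).choose (n-r) + (n-1-k).choose (n-r-1) ≤ F.card) :
    A.card + ((n-2).choose r + (n-1-k).choose (r-1)) ≤ (n-1).choose r := by
  have hw2 : n - 2 < n := by omega
  set i := n - 2*r with hi
  set w : Fin n := ⟨n-2, hw2⟩ with hwdef
  have hRk' : ∀ m ∈ Finset.range (n-1-k), m < n := fun m hm => by
    rw [Finset.mem_range] at hm; omega
  have hR2' : ∀ m ∈ Finset.range (n-2), m < n := fun m hm => by
    rw [Finset.mem_range] at hm; omega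
  set Rk := Finset.attachFin (Finset.range (n-1-k)) hRk' with hRkdef
  set R2 := Finset.attachFin (Finset.range (n-2)) hR2' with hR2def
  have hmemRk : ∀ c : Fin n, c ∈ Rk ↔ (c : ℕ) < n-1-k := fun c => by
    rw [hRkdef, Finset.mem_attachFin, Finset.mem_range]
  have hmemR2 : ∀ c : Fin n, c ∈ R2 ↔ (c : ℕ) < n-2 := fun c => by
    rw [hR2def, Finset.mem_attachFin, Finset.mem_range]
  have hwRk : w ∉ Rk := by rw [hmemRk]; simp [hwdef]; omega
  have hwR2 : w ∉ R2 := by rw [hmemR2]; simp [hwdef]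
  have hRkR2 : Rk ⊆ R2 := fun c hc => by
    rw [hmemRk] at hc; rw [hmemR2]; omega
  have hcRk : Rk.card = n-1-k := by rw [hRkdef, Finset.card_attachFin, Finset.card_range]
  have hcR2 : R2.card = n-2 := by rw [hR2def, Finset.card_attachFin, Finset.card_range]
  set 𝒞 : Finset (Finset (Fin n)) :=
    Finset.powersetCard (n-r) R2 ∪ (Finset.powersetCard (n-r-1) Rk).image (insert w) with h𝒞
  -- basic facts about 𝒞
  have hwb : ∀ b : Finset (Fin n), b ⊆ Rk → w ∉ b := fun b hb hc => hwRk (hb hc)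
  have hdisjU : Disjoint (Finset.powersetCard (n-r) R2)
      ((Finset.powersetCard (n-r-1) Rk).image (insert w)) := by
    rw [Finset.disjoint_left]
    intro s hs1 hs2
    rw [Finset.mem_powersetCard] at hs1
    obtain ⟨b, hb, rfl⟩ := Finset.mem_image.1 hs2
    exact hwR2 (hs1.1 (Finset.mem_insert_self w b))
  have hinj : Set.InjOn (insert w) ((Finset.powersetCard (n-r-1) Rk : Finset (Finset (Fin n))) : Set (Finset (Fin n))) := by
    intro b1 h1 b2 h2 he
    rw [Finset.mem_coe, Finset.mem_powersetCard] at h1 h2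
    rw [← Finset.erase_insert (hwb _ h1.1), ← Finset.erase_insert (hwb _ h2.1), he]
  have hc𝒞 : 𝒞.card = (n-2).choose (n-r) + (n-1-k).choose (n-r-1) := by
    rw [h𝒞, Finset.card_union_of_disjoint hdisjU, Finset.card_powersetCard,
      Finset.card_image_of_injOn hinj, Finset.card_powersetCard, hcR2, hcRk]
  have hsz𝒞 : Set.Sized (n-r) (𝒞 : Set (Finset (Fin n))) := by
    intro s hs
    rw [Finset.mem_coe, h𝒞, Finset.mem_union] at hs
    rcases hs with hs | hs
    · exact (Finset.mem_powersetCard.1 hs).2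
    · obtain ⟨b, hb, rfl⟩ := Finset.mem_image.1 hs
      rw [Finset.mem_powersetCard] at hb
      rw [Finset.card_insert_of_notMem (hwb _ hb.1), hb.2]
      omega
  have hinit : IsInitSeg 𝒞 (n-r) := by
    refine ⟨hsz𝒞, ?_⟩
    rintro s t hs ⟨hlt, htcard⟩
    obtain ⟨a, has, hat, hall⟩ := toColex_lt_toColex_iff_exists_forall_lt.1 hlt
    rw [h𝒞, Finset.mem_union] at hs ⊢
    rcases hs with hs | hs
    · left
      rw [Finset.mem_powersetCard] at hs ⊢
      refine ⟨fun c hc => ?_, htcard⟩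
      by_cases hcs : c ∈ s
      · exact hs.1 hcs
      · have hca : c < a := hall c hc hcs
        have haR2 : (a : ℕ) < n - 2 := (hmemR2 a).1 (hs.1 has)
        rw [hmemR2]
        rw [Fin.lt_def] at hca
        omega
    · obtain ⟨b, hb, rfl⟩ := Finset.mem_image.1 hs
      rw [Finset.mem_powersetCard] at hb
      by_cases hwt : w ∈ t
      · right
        refine Finset.mem_image.2 ⟨t.erase w, ?_, Finset.insert_erase hwt⟩
        rw [Finset.mem_powersetCard]
        refine ⟨fun c hc => ?_, by rw [Finset.card_erase_of_mem hwt, htcard]⟩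
        obtain ⟨hcw, hct⟩ := Finset.mem_erase.1 hc
        by_cases hcs : c ∈ insert w b
        · rcases Finset.mem_insert.1 hcs with rfl | hmem
          · exact absurd rfl hcw
          · exact hb.1 hmem
        · have hca : c < a := hall c hct hcs
          rcases Finset.mem_insert.1 has with rfl | hab
          · exact absurd hwt hat
          · have haRk : (a : ℕ) < n-1-k := (hmemRk a).1 (hb.1 hab)
            rw [hmemRk]
            rw [Fin.lt_def] at hca
            omega
      · left
        rw [Finset.mem_powersetCard]
        refine ⟨fun c hc => ?_, htcard⟩
        by_cases hcs : c ∈ insert w b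
        · rcases Finset.mem_insert.1 hcs with rfl | hmem
          · exact absurd hc hwt
          · exact hRkR2 (hb.1 hmem)
        · have hca : c < a := hall c hc hcs
          have haval : (a : ℕ) ≤ n - 2 := by
            rcases Finset.mem_insert.1 has with rfl | hab
            · simp [hwdef]
            · have := (hmemRk a).1 (hb.1 hab); omega
          rw [hmemR2]
          rw [Fin.lt_def] at hca
          omega
  -- the explicit subfamily of the iterated shadow of 𝒞
  set 𝒟 : Finset (Finset (Fin n)) :=
    Finset.powersetCard r R2 ∪ (Finset.powersetCard (r-1) Rk).image (insert w) with h𝒟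
  have hdisjUD : Disjoint (Finset.powersetCard r R2)
      ((Finset.powersetCard (r-1) Rk).image (insert w)) := by
    rw [Finset.disjoint_left]
    intro s hs1 hs2
    rw [Finset.mem_powersetCard] at hs1
    obtain ⟨b, hb, rfl⟩ := Finset.mem_image.1 hs2
    exact hwR2 (hs1.1 (Finset.mem_insert_self w b))
  have hinjD : Set.InjOn (insert w) ((Finset.powersetCard (r-1) Rk : Finset (Finset (Fin n))) : Set (Finset (Fin n))) := by
    intro b1 h1 b2 h2 he
    rw [Finset.mem_coe, Finset.mem_powersetCard] at h1 h2
    rw [← Finset.erase_insert (hwb _ h1.1), ← Finset.erase_insert (hwb _ h2.1), he]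
  have hc𝒟 : 𝒟.card = (n-2).choose r + (n-1-k).choose (r-1) := by
    rw [h𝒟, Finset.card_union_of_disjoint hdisjUD, Finset.card_powersetCard,
      Finset.card_image_of_injOn hinjD, Finset.card_powersetCard, hcR2, hcRk]
  have hDsub : 𝒟 ⊆ ∂^[i] 𝒞 := by
    intro s hs
    rw [h𝒟, Finset.mem_union] at hs
    rw [Finset.mem_shadow_iterate_iff_exists_sdiff]
    rcases hs with hs | hs
    · rw [Finset.mem_powersetCard] at hs
      obtain ⟨u, hsu, huR2, hucard⟩ := Finset.exists_subsuperset_card_eq hs.1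
        (by omega : s.card ≤ n - r) (by omega : n - r ≤ R2.card)
      refine ⟨u, ?_, hsu, ?_⟩
      · rw [h𝒞, Finset.mem_union]
        exact Or.inl (Finset.mem_powersetCard.2 ⟨huR2, hucard⟩)
      · rw [Finset.card_sdiff_of_subset hsu, hucard, hs.2]
        omega
    · obtain ⟨b, hb, rfl⟩ := Finset.mem_image.1 hs
      rw [Finset.mem_powersetCard] at hb
      obtain ⟨u, hbu, huRk, hucard⟩ := Finset.exists_subsuperset_card_eq hb.1
        (by omega : b.card ≤ n - r - 1) (by omega : n - r - 1 ≤ Rk.card)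
      refine ⟨insert w u, ?_, Finset.insert_subset_insert w hbu, ?_⟩
      · rw [h𝒞, Finset.mem_union]
        exact Or.inr (Finset.mem_image.2 ⟨u, Finset.mem_powersetCard.2 ⟨huRk, hucard⟩, rfl⟩)
      · have h1 : (insert w b) ⊆ (insert w u) := Finset.insert_subset_insert w hbu
        rw [Finset.card_sdiff_of_subset h1, Finset.card_insert_of_notMem (hwb _ huRk),
          Finset.card_insert_of_notMem (hwb _ hb.1), hucard, hb.2]
        omega
  -- apply Kruskal-Katona
  have hFsz : Set.Sized (n-r) (F : Set (Finset (Fin n))) := fun f hf => (hF f hf).1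
  have hkk : #(∂^[i] 𝒞) ≤ #(∂^[i] F) := iterated_kk' hFsz (by omega) hinit
  have hDF : (n-2).choose r + (n-1-k).choose (r-1) ≤ #(∂^[i] F) := by
    calc (n-2).choose r + (n-1-k).choose (r-1) = 𝒟.card := hc𝒟.symm
      _ ≤ #(∂^[i] 𝒞) := Finset.card_le_card hDsub
      _ ≤ #(∂^[i] F) := hkk
  -- A and the shadow are disjoint, both live among r-subsets avoiding x
  have hAD : Disjoint A (∂^[i] F) := by
    rw [Finset.disjoint_left]
    intro a ha haF
    rw [Finset.mem_shadow_iterate_iff_exists_sdiff] at haF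
    obtain ⟨f, hf, haf, -⟩ := haF
    exact hdisj a ha f hf haf
  have hsubP : A ∪ ∂^[i] F ⊆ Finset.powersetCard r (Finset.univ.erase x) := by
    intro s hs
    rw [Finset.mem_union] at hs
    rw [Finset.mem_powersetCard]
    rcases hs with hs | hs
    · obtain ⟨hcard, hx⟩ := hA s hs
      exact ⟨fun c hc => Finset.mem_erase.2 ⟨fun hcx => hx (hcx ▸ hc), Finset.mem_univ c⟩, hcard⟩
    · rw [Finset.mem_shadow_iterate_iff_exists_sdiff] at hs
      obtain ⟨f, hf, hsf, hcd⟩ := hs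
      obtain ⟨hfcard, hfx⟩ := hF f hf
      constructor
      · intro c hc
        exact Finset.mem_erase.2 ⟨fun hcx => hfx (hcx ▸ hsf hc), Finset.mem_univ c⟩
      · have h1 := Finset.card_sdiff_of_subset hsf
        have h2 := Finset.card_le_card hsf
        omega
  have hfinal : A.card + #(∂^[i] F) ≤ (n-1).choose r := by
    rw [← Finset.card_union_of_disjoint hAD]
    calc #(A ∪ ∂^[i] F) ≤ #(Finset.powersetCard r (Finset.univ.erase x)) :=
          Finset.card_le_card hsubP
      _ = (n-1).choose r := by
          rw [Finset.card_powersetCard, Finset.card_erase_of_mem (Finset.mem_univ x),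
            Finset.card_univ, Fintype.card_fin]
  omega


lemma master {n r t D C C₂ C' : ℕ} (q : ℕ → ℕ) (hr : 3 ≤ r) (hn : r^2 ≤ n)
    (hCs : C = C₂ + C')
    (h2C' : (r-1)*(r-2) ≤ 2*C')
    (htD : t + D ≤ r * D)
    (hDrC : D ≤ r * C)
    (hqmono : ∀ j1 j2, j1 ≤ j2 → q j2 ≤ q j1)
    (hq2 : q 2 = C₂)
    (hqr1 : q (r-1) = n - r)
    (hqr : q r = 1)
    (htb : ∀ k, 2 ≤ k → k ≤ r → C + q k ≤ D → t ≤ (k-1) * C₂) :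
    (r-1)*t + (r-2)*D + 2 ≤ (n-r-1)*C + r := by
  obtain ⟨r', rfl⟩ : ∃ r', r = r' + 3 := ⟨r - 3, by omega⟩
  have hsq : (r'+3)^2 = r'*r' + 6*r' + 9 := by ring
  have hN : r'*r' + 5*r' + 5 ≤ n - (r'+3) - 1 := by omega
  have hC2C : C₂ ≤ C := by omega
  have e1 : (r'+3) - 1 = r' + 2 := rfl
  have e2 : (r'+3) - 2 = r' + 1 := rfl
  rw [e1, e2]
  by_cases hDC : D ≤ C
  · -- case a
    have ht : t ≤ (r'+2) * D := by nlinarith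
    calc (r'+2)*t + (r'+1)*D + 2 ≤ (r'+2)*((r'+2)*D) + (r'+1)*D + 2 := by
          have := Nat.mul_le_mul_left (r'+2) ht; omega
      _ = (r'*r' + 5*r' + 5)*D + 2 := by ring
      _ ≤ (n-(r'+3)-1)*C + (r'+3) := by
          have h1 : (r'*r'+5*r'+5)*D ≤ (r'*r'+5*r'+5)*C := Nat.mul_le_mul_left _ hDC
          have h2 : (r'*r'+5*r'+5)*C ≤ (n-(r'+3)-1)*C := Nat.mul_le_mul_right _ hN
          omega
  · push_neg at hDC
    by_cases hb : C + C₂ ≤ D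
    · -- case b
      have ht : t ≤ C₂ := by
        have := htb 2 (le_refl 2) (by omega) (by rw [hq2]; exact hb)
        simpa using this
      calc (r'+2)*t + (r'+1)*D + 2 ≤ (r'+2)*C₂ + (r'+1)*((r'+3)*C) + 2 := by
            have h1 := Nat.mul_le_mul_left (r'+2) ht
            have h2 := Nat.mul_le_mul_left (r'+1) hDrC
            omega
        _ ≤ (r'+2)*C + (r'*r'+4*r'+3)*C + 2 := by
            have h1 := Nat.mul_le_mul_left (r'+2) hC2C
            have h2 : (r'+1)*((r'+3)*C) = (r'*r'+4*r'+3)*C := by ring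
            omega
        _ = (r'*r'+5*r'+5)*C + 2 := by ring
        _ ≤ (n-(r'+3)-1)*C + (r'+3) := by
            have h2 : (r'*r'+5*r'+5)*C ≤ (n-(r'+3)-1)*C := Nat.mul_le_mul_right _ hN
            omega
    · -- case c : C < D < C + C₂
      push_neg at hb
      set K := (Finset.Icc 2 (r'+2)).filter (fun j => C + q (j+1) ≤ D) with hK
      have hKne : K.Nonempty := by
        refine ⟨r'+2, ?_⟩
        rw [hK, Finset.mem_filter, Finset.mem_Icc]
        have : r'+2+1 = r'+3 := rfl
        rw [this]
        refine ⟨⟨by omega, le_refl _⟩, ?_⟩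
        have hq3 : q (r'+3) = 1 := by
          have : r' + 3 = (r'+3) := rfl
          simpa using hqr
        omega
      set k := K.min' hKne with hkdef
      have hkK : k ∈ K := Finset.min'_mem _ _
      rw [hK, Finset.mem_filter, Finset.mem_Icc] at hkK
      obtain ⟨⟨hk2, hkr2⟩, hthr⟩ := hkK
      have ht : t ≤ k * C₂ := by
        have := htb (k+1) (by omega) (by omega) hthr
        simpa using this
      have hupper : D < C + q k := by
        rcases Nat.eq_or_lt_of_le hk2 with heq | hlt
        · rw [← heq, hq2]; omega
        · by_contra hc
          push_neg at hc
          have hmem : k - 1 ∈ K := by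
            rw [hK, Finset.mem_filter, Finset.mem_Icc]
            refine ⟨⟨by omega, by omega⟩, ?_⟩
            rw [show k - 1 + 1 = k from by omega]
            exact hc
          have := Finset.min'_le _ _ hmem
          rw [← hkdef] at this
          omega
      by_cases hklast : k = r' + 2
      · -- top band
        have hDub : D < C + (n - (r'+3)) := by
          rw [hklast] at hupper
          rw [show r'+2 = (r'+3)-1 from rfl] at hupper
          rwa [hqr1] at hupper
        have ht' : t ≤ (r'+2) * C₂ := by rw [hklast] at ht; exact ht
        rw [hCs]
        have hDub' : D + 1 ≤ C₂ + C' + (n - (r'+3)) := by omega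
        set M := n - 2*(r'+3) + 1 with hM
        have hnr1 : n - (r'+3) - 1 = M + (r'+1) := by omega
        rw [hnr1]
        have h2C'' : (r'+2)*(r'+1) ≤ 2*C' := by
          simpa [e1, e2] using h2C'
        have hM2 : 2 ≤ M := by omega
        have hM44 : r'*r' + 4*r' + 4 ≤ M := by omega
        have hnM : n - (r'+3) = M + (r'+2) := by omega
        have s2 : D ≤ C₂ + C' + M + r' + 1 := by omega
        have u1 : (r'+2)*t ≤ (r'+2)*((r'+2)*C₂) := Nat.mul_le_mul_left _ ht'
        have u2 : (r'+1)*D ≤ (r'+1)*(C₂ + C' + M + r' + 1) := Nat.mul_le_mul_left _ s2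
        have w1 : (r'+2)*((r'+2)*C₂) = (r'*r'+4*r'+4)*C₂ := by ring
        have w2 : (r'+1)*(C₂ + C' + M + r' + 1)
            = (r'+1)*C₂ + (r'+1)*C' + (r'+1)*M + (r'+1)*(r'+1) := by ring
        have w3 : (M+(r'+1))*(C₂+C') = M*C₂ + M*C' + (r'+1)*C₂ + (r'+1)*C' := by ring
        have u3 : (r'*r'+4*r'+4)*C₂ ≤ M*C₂ := Nat.mul_le_mul_right _ hM44
        -- core inequality
        have d2 : M*((r'+2)*(r'+1)) ≤ M*(2*C') := Nat.mul_le_mul_left M h2C''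
        have d3 : 2*(r'*(r'+1)) ≤ M*(r'*(r'+1)) := Nat.mul_le_mul_right _ hM2
        have d4 : M*((r'+2)*(r'+1)) = M*(r'*(r'+1)) + 2*((r'+1)*M) := by ring
        have d5 : 2*((r'+1)*(r'+1)) = 2*(r'*(r'+1)) + 2*(r'+1) := by ring
        have d6 : M*(2*C') = 2*(M*C') := by ring
        have core : (r'+1)*M + (r'+1)*(r'+1) + 2 ≤ M*C' + (r'+3) := by omega
        omega
      · -- middle bands : k ≤ r'+1
        have hkle : k ≤ r' + 1 := by omega
        have hqk : q k ≤ C₂ := by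
          have := hqmono 2 k hk2
          rwa [hq2] at this
        have hDub : D ≤ 2*C := by omega
        calc (r'+2)*t + (r'+1)*D + 2
            ≤ (r'+2)*(k*C₂) + (r'+1)*(2*C) + 2 := by
              have h1 := Nat.mul_le_mul_left (r'+2) ht
              have h2 := Nat.mul_le_mul_left (r'+1) hDub
              omega
          _ ≤ (r'+2)*((r'+1)*C) + (r'+1)*(2*C) + 2 := by
              have hkC : k*C₂ ≤ (r'+1)*C :=
                Nat.mul_le_mul hkle hC2C
              have := Nat.mul_le_mul_left (r'+2) hkC
              omega
          _ = (r'*r'+5*r'+4)*C + 2 := by ring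
          _ ≤ (n-(r'+3)-1)*C + (r'+3) := by
              have h2 : (r'*r'+5*r'+4)*C + C ≤ (n-(r'+3)-1)*C := by
                have : (r'*r'+5*r'+4)*C + C = (r'*r'+5*r'+5)*C := by ring
                rw [this]
                exact Nat.mul_le_mul_right _ hN
              omega


end StmtAux

theorem stmt5 (n r : ℕ) (hr : 3 ≤ r) (hn : r^2 ≤ n) (H : Finset (Finset (Fin n)))
    (hunif : ∀ e ∈ H, e.card = r)
    (hint : ∀ e ∈ H, ∀ f ∈ H, (e ∩ f).Nonempty)
    (hnt : ¬ ∃ x : Fin n, ∀ e ∈ H, x ∈ e) :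
    oreDeg r H < r * (n-2).choose (r-2) := by
  classical
  push_neg at hnt
  have hsq : r^2 = r*r := sq r
  have hrr : 3 * r ≤ n := by
    have : 3 * r ≤ r * r := Nat.mul_le_mul_right r hr
    omega
  have hn9 : 9 ≤ n := by
    have : 9 ≤ r * r := Nat.mul_le_mul hr hr
    omega
  have hnrr : r * r ≤ n := by omega
  set C := (n-2).choose (r-2) with hC
  set C₂ := (n-3).choose (r-2) with hC2
  set C' := (n-3).choose (r-3) with hC'
  -- maximum degree vertex
  obtain ⟨x, -, hmax⟩ := Finset.exists_max_image Finset.univ (hdeg H)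
    ⟨⟨0, by omega⟩, Finset.mem_univ _⟩
  set Δ := hdeg H x with hΔ
  obtain ⟨e, he, hxe⟩ := hnt x
  have her : e.card = r := hunif e he
  set A := H.filter (fun g => x ∉ g) with hA
  set t := A.card with ht
  have htH : Δ + t = H.card := by
    rw [ht, hΔ, hA]
    show (H.filter fun g => x ∈ g).card + (H.filter fun g => x ∉ g).card = H.card
    exact Finset.card_filter_add_card_filter_not (fun g => x ∈ g)
  have hsum : ∀ T, ∑ v ∈ T, hdeg H v = ∑ g ∈ H, (g ∩ T).card := StmtAux.sum_hdeg_eq H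
  set De := ∑ u ∈ e, hdeg H u with hDe
  have hDeEq : De = ∑ g ∈ H, (g ∩ e).card := by rw [hDe, hsum e]
  have hDe1 : H.card + (r-1) ≤ De := by
    rw [hDeEq]
    have hsplit : ∑ g ∈ H, (g ∩ e).card = (e ∩ e).card + ∑ g ∈ H.erase e, (g ∩ e).card :=
      (Finset.add_sum_erase H _ he).symm
    have h1 : (e ∩ e).card = r := by rw [Finset.inter_self]; exact her
    have h2 : (H.erase e).card ≤ ∑ g ∈ H.erase e, (g ∩ e).card := by
      calc (H.erase e).card = ∑ _g ∈ H.erase e, 1 := by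
            rw [Finset.sum_const, smul_eq_mul, mul_one]
        _ ≤ ∑ g ∈ H.erase e, (g ∩ e).card := Finset.sum_le_sum fun g hg =>
            Finset.card_pos.2 (hint g (Finset.mem_of_mem_erase hg) e he)
    have h3 : (H.erase e).card = H.card - 1 := Finset.card_erase_of_mem he
    have h4 : 1 ≤ H.card := Finset.card_pos.2 ⟨e, he⟩
    omega
  have hHDe : H.card ≤ De := by
    rw [hDeEq]
    calc H.card = ∑ _g ∈ H, 1 := by rw [Finset.sum_const, smul_eq_mul, mul_one]
      _ ≤ ∑ g ∈ H, (g ∩ e).card := Finset.sum_le_sum fun g hg =>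
          Finset.card_pos.2 (hint g hg e he)
  have hDe2 : De ≤ r * Δ := by
    rw [hDe]
    calc ∑ u ∈ e, hdeg H u ≤ ∑ _u ∈ e, Δ :=
          Finset.sum_le_sum fun u _ => hmax u (Finset.mem_univ u)
      _ = r * Δ := by rw [Finset.sum_const, smul_eq_mul, her]
  have htΔ : t + Δ ≤ r * Δ := by omega
  -- Δ ≤ r * C
  have hΔrC : Δ ≤ r * C := by
    have hsub : H.filter (fun g => x ∈ g) ⊆
        e.biUnion (fun u => H.filter (fun g => x ∈ g ∧ u ∈ g)) := by
      intro g hg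
      rw [Finset.mem_filter] at hg
      obtain ⟨v, hv⟩ := hint g hg.1 e he
      rw [Finset.mem_inter] at hv
      exact Finset.mem_biUnion.2 ⟨v, hv.2, Finset.mem_filter.2 ⟨hg.1, hg.2, hv.1⟩⟩
    have h1 : Δ ≤ (e.biUnion (fun u => H.filter (fun g => x ∈ g ∧ u ∈ g))).card := by
      rw [hΔ]
      exact Finset.card_le_card hsub
    have h2 : ∀ u ∈ e, (H.filter (fun g => x ∈ g ∧ u ∈ g)).card ≤ C := by
      intro u hu
      have hxu : x ≠ u := fun hc => hxe (hc ▸ hu)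
      have hcard2 : ({x, u} : Finset (Fin n)).card = 2 := by
        rw [Finset.card_insert_of_notMem (Finset.notMem_singleton.2 hxu),
          Finset.card_singleton]
      have := StmtAux.card_le_of_fixed (H.filter (fun g => x ∈ g ∧ u ∈ g)) {x, u} 2 r hcard2
        (fun g hg => by
          rw [Finset.mem_filter] at hg
          exact ⟨hunif g hg.1, Finset.insert_subset hg.2.1 (Finset.singleton_subset_iff.2 hg.2.2)⟩)
      rwa [hC]
    calc Δ ≤ (e.biUnion (fun u => H.filter (fun g => x ∈ g ∧ u ∈ g))).card := h1
      _ ≤ ∑ u ∈ e, (H.filter (fun g => x ∈ g ∧ u ∈ g)).card := Finset.card_biUnion_le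
      _ ≤ ∑ _u ∈ e, C := Finset.sum_le_sum h2
      _ = r * C := by rw [Finset.sum_const, smul_eq_mul, her]
  -- the complement family
  set F := (H.filter (fun g => x ∈ g)).image (fun g => Finset.univ \ g) with hF
  have hcompl : ∀ g : Finset (Fin n), Finset.univ \ (Finset.univ \ g) = g := fun g => by
    rw [Finset.sdiff_sdiff_self_left, Finset.univ_inter]
  have hFcard : F.card = Δ := by
    rw [hF, Finset.card_image_of_injOn (fun g1 _ g2 _ h12 => by
      have h13 : Finset.univ \ (Finset.univ \ g1) = Finset.univ \ (Finset.univ \ g2) := by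
        rw [h12]
      rwa [hcompl, hcompl] at h13)]
    rfl
  have hFprop : ∀ f ∈ F, f.card = n - r ∧ x ∉ f := by
    intro f hf
    rw [hF, Finset.mem_image] at hf
    obtain ⟨g, hg, rfl⟩ := hf
    rw [Finset.mem_filter] at hg
    constructor
    · rw [Finset.card_sdiff_of_subset (Finset.subset_univ g), Finset.card_univ, Fintype.card_fin,
        hunif g hg.1]
    · rw [Finset.mem_sdiff]
      exact fun hc => hc.2 hg.2
  have hAprop : ∀ a ∈ A, a.card = r ∧ x ∉ a := by
    intro a ha
    rw [hA, Finset.mem_filter] at ha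
    exact ⟨hunif a ha.1, ha.2⟩
  have hdisjAF : ∀ a ∈ A, ∀ f ∈ F, ¬ a ⊆ f := by
    intro a ha f hf hsub
    rw [hF, Finset.mem_image] at hf
    obtain ⟨g, hg, rfl⟩ := hf
    rw [Finset.mem_filter] at hg
    rw [hA, Finset.mem_filter] at ha
    obtain ⟨v, hv⟩ := hint a ha.1 g hg.1
    rw [Finset.mem_inter] at hv
    have hvm := hsub hv.1
    rw [Finset.mem_sdiff] at hvm
    exact hvm.2 hv.2
  -- the KK consequence
  have hq' : ∀ k, 2 ≤ k → k ≤ r → C + (n-1-k).choose (n-r-1) ≤ Δ →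
      t + (n-1-k).choose (r-1) ≤ (n-2).choose (r-1) := by
    intro k hk2 hkr hthr
    have hCsym : (n-2).choose (n-r) = C := by
      rw [hC, show n - r = (n-2) - (r-2) from by omega]
      exact Nat.choose_symm (by omega)
    have hkk := StmtAux.kkc hr hrr hk2 hkr x A F hAprop hFprop hdisjAF
      (by rw [hFcard, hCsym]; exact hthr)
    have e3 : r - 1 + 1 = r := by omega
    have e4 : n - 2 + 1 = n - 1 := by omega
    have hpas : (n-1).choose r = (n-2).choose (r-1) + (n-2).choose r := by
      calc (n-1).choose r = ((n-2)+1).choose ((r-1)+1) := by rw [e3, e4]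
        _ = (n-2).choose (r-1) + (n-2).choose ((r-1)+1) := Nat.choose_succ_succ' _ _
        _ = (n-2).choose (r-1) + (n-2).choose r := by rw [e3]
    omega
  -- t bound
  have htb : ∀ k, 2 ≤ k → k ≤ r → C + (n-1-k).choose (n-r-1) ≤ Δ → t ≤ (k-1) * C₂ := by
    intro k hk2 hkr hthr
    have h1 := hq' k hk2 hkr hthr
    have h2 := StmtAux.tele (n-1-k) (r-2) (k-1)
    rw [show n-1-k + (k-1) = n-2 from by omega, show r-2+1 = r-1 from by omega,
      show n-2-1 = n-3 from by omega, ← hC2] at h2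
    omega
  -- q facts
  have hq2 : (n-1-2).choose (n-r-1) = C₂ := by
    rw [hC2, show n-1-2 = n-3 from by omega, show n-r-1 = (n-3)-(r-2) from by omega]
    exact Nat.choose_symm (by omega)
  have hqr1 : (n-1-(r-1)).choose (n-r-1) = n - r := by
    rw [show n-1-(r-1) = n-r from by omega, show n-r-1 = (n-r)-1 from rfl]
    rw [Nat.choose_symm (by omega : 1 ≤ n-r), Nat.choose_one_right]
  have hqr : (n-1-r).choose (n-r-1) = 1 := by
    rw [show n-1-r = n-r-1 from by omega]
    exact Nat.choose_self _
  have hqmono : ∀ j1 j2, j1 ≤ j2 →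
      (n-1-j2).choose (n-r-1) ≤ (n-1-j1).choose (n-r-1) :=
    fun j1 j2 h => Nat.choose_le_choose _ (by omega)
  have hCs : C = C₂ + C' := by
    rw [hC, hC2, hC']
    calc (n-2).choose (r-2) = ((n-3)+1).choose ((r-3)+1) := by
          rw [show (n-3)+1 = n-2 from by omega, show (r-3)+1 = r-2 from by omega]
      _ = (n-3).choose (r-3) + (n-3).choose ((r-3)+1) := Nat.choose_succ_succ' _ _
      _ = (n-3).choose (r-2) + (n-3).choose (r-3) := by
          rw [show (r-3)+1 = r-2 from by omega]; omega
  have h2C' : (r-1)*(r-2) ≤ 2*C' := by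
    have m1 : (r-1).choose (r-3) ≤ (n-3).choose (r-3) := Nat.choose_le_choose _ (by omega)
    have m2 : (r-1).choose (r-3) = (r-1).choose 2 := by
      rw [show r-3 = (r-1)-2 from by omega]
      exact Nat.choose_symm (by omega)
    have m3 : (r-1).choose 2 = (r-1)*(r-2)/2 := by
      rw [Nat.choose_two_right, show r-1-1 = r-2 from by omega]
    have m4 : 2 ∣ (r-1)*(r-2) := by
      have hev := Nat.even_mul_succ_self (r-2)
      rw [show (r-2)+1 = r-1 from by omega] at hev
      rw [mul_comm]
      exact hev.two_dvd
    have m5 := Nat.div_mul_cancel m4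
    rw [hC']
    omega
  have hMaster := StmtAux.master (fun k => (n-1-k).choose (n-r-1)) hr hn hCs h2C' htΔ hΔrC
    hqmono hq2 hqr1 hqr htb
  -- sum over the low-degree region
  set W := Finset.univ \ insert x e with hW
  have hWcard : W.card = n - r - 1 := by
    rw [hW, Finset.card_sdiff_of_subset (Finset.subset_univ _), Finset.card_insert_of_notMem hxe,
      her, Finset.card_univ, Fintype.card_fin]
    omega
  have hsumU : ∑ v ∈ Finset.univ, hdeg H v = r * H.card := by
    rw [hsum]
    calc ∑ g ∈ H, (g ∩ Finset.univ).card = ∑ g ∈ H, r :=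
          Finset.sum_congr rfl fun g hg => by rw [Finset.inter_univ]; exact hunif g hg
      _ = r * H.card := by rw [Finset.sum_const, smul_eq_mul, mul_comm]
  set SW := ∑ v ∈ W, hdeg H v with hSWdef
  have hsplit2 : SW + (Δ + De) = r * H.card := by
    have h1 : SW + ∑ v ∈ insert x e, hdeg H v = ∑ v ∈ Finset.univ, hdeg H v := by
      rw [hSWdef, hW]
      exact Finset.sum_sdiff (Finset.subset_univ _)
    have h2 : ∑ v ∈ insert x e, hdeg H v = Δ + De := by
      rw [Finset.sum_insert hxe, hΔ, hDe]
    omega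
  have hSW1 : SW + 1 ≤ (n-r-1) * C := by
    have e1 : (r-1)*t = r*t - t := Nat.sub_one_mul r t
    have e1' : t ≤ r*t := Nat.le_mul_of_pos_left t (by omega)
    have e2 : (r-2)*Δ = (r-1)*Δ - Δ := by
      rw [show r-2 = (r-1)-1 from by omega]
      exact Nat.sub_one_mul _ Δ
    have e2' : (r-1)*Δ = r*Δ - Δ := Nat.sub_one_mul r Δ
    have e2a : Δ ≤ (r-1)*Δ := Nat.le_mul_of_pos_left Δ (by omega)
    have e2b : Δ ≤ r*Δ := Nat.le_mul_of_pos_left Δ (by omega)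
    have e6 : r * H.card = r*t + r*Δ := by
      rw [← htH]; ring
    omega
  -- choose the low-degree non-edge
  obtain ⟨S, hSsub, hScard, hSavg⟩ := StmtAux.exists_low_subset W (hdeg H) r
    (by rw [hWcard]; omega)
  have hSnot : S ∉ H := by
    intro hSH
    obtain ⟨v, hv⟩ := hint S hSH e he
    rw [Finset.mem_inter] at hv
    have hvW := hSsub hv.1
    rw [hW, Finset.mem_sdiff] at hvW
    exact hvW.2 (Finset.mem_insert_of_mem hv.2)
  have hore : oreDeg r H ≤ ∑ v ∈ S, hdeg H v := Nat.sInf_le ⟨S, hScard, hSnot, rfl⟩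
  have hfin : ∑ v ∈ S, hdeg H v < r * C := by
    have h1 : (n-r-1) * (∑ v ∈ S, hdeg H v) ≤ r * SW := by
      rw [← hWcard]; exact hSavg
    have h2 : r * (SW+1) ≤ r * ((n-r-1)*C) := Nat.mul_le_mul_left r hSW1
    have e5 : r * (SW+1) = r*SW + r := by ring
    have h3 : r * ((n-r-1)*C) = (n-r-1) * (r*C) := by ring
    have h4 : (n-r-1) * (∑ v ∈ S, hdeg H v) < (n-r-1) * (r*C) := by omega
    exact Nat.lt_of_mul_lt_mul_left h4
  calc oreDeg r H ≤ ∑ v ∈ S, hdeg H v := hore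
    _ < r * C := hfin
end

section
/- Let r ≥ 3 and n ≥ r²(r−1). If H is a non-trivial intersecting r-uniform hypergraph on n vertices, then σ_r(H) ≤ r·(C(n-2, r-2) − C(n-r-2, r-2)). -/
open Finset

/-- Pascal upper expansion: C(b+j, t+1) ≤ C(b, t+1) + j * C(b+j, t). -/
lemma choose_L1 (b t : ℕ) : ∀ j, (b+j).choose (t+1) ≤ b.choose (t+1) + j * (b+j).choose t := by
  intro j
  induction j with
  | zero => simp
  | succ j ih =>
    have h1 : (b+(j+1)).choose (t+1) = (b+j).choose t + (b+j).choose (t+1) := by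
      have e : b+(j+1) = (b+j)+1 := by ring
      rw [e]; exact Nat.choose_succ_succ (b+j) t
    have hm : (b+j).choose t ≤ (b+(j+1)).choose t := Nat.choose_le_choose t (by omega)
    have hm2 : j * (b+j).choose t ≤ j * (b+(j+1)).choose t :=
      Nat.mul_le_mul_left j hm
    have : (j+1) * (b+(j+1)).choose t = j * (b+(j+1)).choose t + (b+(j+1)).choose t := by ring
    linarith

/-- Pascal lower expansion: C(b, t+1) + j * C(b, t) ≤ C(b+j, t+1). -/
lemma choose_L2 (b t : ℕ) : ∀ j, b.choose (t+1) + j * b.choose t ≤ (b+j).choose (t+1) := by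
  intro j
  induction j with
  | zero => simp
  | succ j ih =>
    have h1 : (b+(j+1)).choose (t+1) = (b+j).choose t + (b+j).choose (t+1) := by
      have e : b+(j+1) = (b+j)+1 := by ring
      rw [e]; exact Nat.choose_succ_succ (b+j) t
    have hm : b.choose t ≤ (b+j).choose t := Nat.choose_le_choose t (by omega)
    have : (j+1) * b.choose t = j * b.choose t + b.choose t := by ring
    linarith

/-- Ratio lemma: if (q+1)*d*t + t ≤ a + 1 then q*C(a+d,t) ≤ (q+1)*C(a,t). -/
lemma choose_Lq (q d : ℕ) : ∀ t a, (q+1)*d*t + t ≤ a + 1 → q * (a+d).choose t ≤ (q+1) * a.choose t := by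
  intro t
  induction t with
  | zero => intro a _; simp
  | succ t ih =>
    intro a hyp
    have hL1 : (a+d).choose (t+1) ≤ a.choose (t+1) + d * (a+d).choose t := choose_L1 a t d
    have hIH : q * (a+d).choose t ≤ (q+1) * a.choose t := by
      apply ih
      have e1 : (q+1)*d*(t+1) = (q+1)*d*t + (q+1)*d := by ring
      rw [e1] at hyp
      linarith [Nat.zero_le ((q+1)*d)]
    -- key: d*(q+1)*C(a,t) ≤ C(a,t+1)
    have hkey : d * ((q+1) * a.choose t) ≤ a.choose (t+1) := by
      have hid : a.choose (t+1) * (t+1) = a.choose t * (a - t) := Nat.choose_succ_right_eq a t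
      have hdt : (q+1)*d*(t+1) ≤ a - t := by
        apply Nat.le_sub_of_add_le
        have e2 : (q+1)*d*(t+1) + t ≤ (q+1)*d*(t+1) + (t+1) := by omega
        linarith
      have h2 : d * ((q+1) * a.choose t) * (t+1) ≤ a.choose (t+1) * (t+1) := by
        calc d * ((q+1) * a.choose t) * (t+1) = a.choose t * ((q+1)*d*(t+1)) := by ring
          _ ≤ a.choose t * (a - t) := Nat.mul_le_mul_left _ hdt
          _ = a.choose (t+1) * (t+1) := hid.symm
      exact Nat.le_of_mul_le_mul_right h2 (by omega)
    calc q * (a+d).choose (t+1) ≤ q * (a.choose (t+1) + d * (a+d).choose t) := Nat.mul_le_mul_left q hL1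
      _ = q * a.choose (t+1) + d * (q * (a+d).choose t) := by ring
      _ ≤ q * a.choose (t+1) + d * ((q+1) * a.choose t) := by
          linarith [Nat.mul_le_mul_left d hIH]
      _ ≤ q * a.choose (t+1) + a.choose (t+1) := by linarith
      _ = (q+1) * a.choose (t+1) := by ring
variable {α : Type*} [DecidableEq α]

lemma count_disj (W Q : Finset α) (t : ℕ) (hQW : Q ⊆ W) :
    ((W.powersetCard t).filter (fun A => A ∩ Q = ∅)).card = (W.card - Q.card).choose t := by
  have h : (W.powersetCard t).filter (fun A => A ∩ Q = ∅) = (W \ Q).powersetCard t := by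
    ext A
    simp only [mem_filter, mem_powersetCard, subset_sdiff, ← disjoint_iff_inter_eq_empty]
    tauto
  rw [h, card_powersetCard, card_sdiff_of_subset hQW]

lemma count_meet (W Q : Finset α) (t : ℕ) (hQW : Q ⊆ W) :
    ((W.powersetCard t).filter (fun A => (A ∩ Q).Nonempty)).card + (W.card - Q.card).choose t
      = W.card.choose t := by
  have h := Finset.card_filter_add_card_filter_not
    (s := W.powersetCard t) (p := fun A => (A ∩ Q).Nonempty)
  have h2 : (W.powersetCard t).filter (fun A => ¬ (A ∩ Q).Nonempty)
      = (W.powersetCard t).filter (fun A => A ∩ Q = ∅) := by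
    apply filter_congr; intro A _; simp [Finset.not_nonempty_iff_eq_empty]
  rw [h2, count_disj W Q t hQW, card_powersetCard] at h
  exact h

lemma count_meet2 (W Q1 Q2 : Finset α) (t : ℕ) (hQ1 : Q1 ⊆ W) (hQ2 : Q2 ⊆ W) :
    ((W.powersetCard t).filter (fun A => (A ∩ Q1).Nonempty ∧ (A ∩ Q2).Nonempty)).card
      + (W.card - Q1.card).choose t + (W.card - Q2.card).choose t
    = W.card.choose t + (W.card - (Q1 ∪ Q2).card).choose t := by
  set s := W.powersetCard t with hs
  have hmain := Finset.card_filter_add_card_filter_not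
    (s := s) (p := fun A => (A ∩ Q1).Nonempty ∧ (A ∩ Q2).Nonempty)
  have hneg : s.filter (fun A => ¬ ((A ∩ Q1).Nonempty ∧ (A ∩ Q2).Nonempty))
      = s.filter (fun A => A ∩ Q1 = ∅ ∨ A ∩ Q2 = ∅) := by
    apply filter_congr; intro A _
    simp only [not_and_or, Finset.not_nonempty_iff_eq_empty]
  have hunion : s.filter (fun A => A ∩ Q1 = ∅ ∨ A ∩ Q2 = ∅)
      = s.filter (fun A => A ∩ Q1 = ∅) ∪ s.filter (fun A => A ∩ Q2 = ∅) := by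
    rw [filter_or]
  have hinter : s.filter (fun A => A ∩ Q1 = ∅) ∩ s.filter (fun A => A ∩ Q2 = ∅)
      = s.filter (fun A => A ∩ (Q1 ∪ Q2) = ∅) := by
    rw [← filter_and]
    apply filter_congr; intro A _
    simp only [inter_union_distrib_left, union_eq_empty]
  have hcui := Finset.card_union_add_card_inter
    (s.filter (fun A => A ∩ Q1 = ∅)) (s.filter (fun A => A ∩ Q2 = ∅))
  rw [hinter] at hcui
  have c1 := count_disj W Q1 t hQ1
  have c2 := count_disj W Q2 t hQ2
  have cu := count_disj W (Q1 ∪ Q2) t (union_subset hQ1 hQ2)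
  have hT : s.card = W.card.choose t := card_powersetCard t W
  rw [hneg, hunion] at hmain
  rw [← hs] at c1 c2 cu
  omega

lemma count_mem (U : Finset α) (v : α) (hv : v ∈ U) (t : ℕ) :
    ((U.powersetCard (t+1)).filter (fun A => v ∈ A)).card = (U.card - 1).choose t := by
  have h : ((U.powersetCard (t+1)).filter (fun A => v ∈ A)).card
      = ((U.erase v).powersetCard t).card := by
    refine Finset.card_bij' (fun A _ => A.erase v) (fun B _ => insert v B) ?hi ?hj ?li ?ri
    case hi =>
      intro A hA
      rw [mem_filter, mem_powersetCard] at hA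
      rw [mem_powersetCard]
      constructor
      · exact Finset.erase_subset_erase v hA.1.1
      · rw [Finset.card_erase_of_mem hA.2, hA.1.2]; omega
    case hj =>
      intro B hB
      rw [mem_powersetCard] at hB
      have hvB : v ∉ B := fun hc => (Finset.notMem_erase v U) (hB.1 hc)
      rw [mem_filter, mem_powersetCard]
      refine ⟨⟨?_, ?_⟩, mem_insert_self v B⟩
      · exact insert_subset hv (hB.1.trans (erase_subset v U))
      · rw [card_insert_of_notMem hvB, hB.2]
    case li =>
      intro A hA
      rw [mem_filter] at hA
      exact insert_erase hA.2
    case ri =>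
      intro B hB
      rw [mem_powersetCard] at hB
      have hvB : v ∉ B := fun hc => (Finset.notMem_erase v U) (hB.1 hc)
      exact erase_insert hvB
  rw [h, card_powersetCard, card_erase_of_mem hv]

lemma filter_card_le_count {n : ℕ} (r : ℕ) (H : Finset (Finset (Fin n)))
    (hunif : ∀ e ∈ H, e.card = r)
    (P W : Finset (Fin n)) (p : Finset (Fin n) → Prop) [DecidablePred p]
    (p' : Finset (Fin n) → Prop) [DecidablePred p']
    (h1 : ∀ e ∈ H, p e → P ⊆ e)
    (h2 : ∀ e ∈ H, p e → e \ P ⊆ W)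
    (h3 : ∀ e ∈ H, p e → p' (e \ P)) :
    (H.filter p).card ≤ ((W.powersetCard (r - P.card)).filter p').card := by
  apply Finset.card_le_card_of_injOn (fun e => e \ P)
  · intro e he
    rw [mem_coe, mem_filter] at he
    obtain ⟨heH, hpe⟩ := he
    rw [mem_coe, mem_filter, mem_powersetCard]
    exact ⟨⟨h2 e heH hpe, by rw [card_sdiff_of_subset (h1 e heH hpe), hunif e heH]⟩, h3 e heH hpe⟩
  · intro e he e' he' heq
    simp only [coe_filter, Set.mem_setOf_eq] at he he'
    have hee : e \ P ∪ P = e := Finset.sdiff_union_of_subset (h1 e he.1 he.2)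
    have hee' : e' \ P ∪ P = e' := Finset.sdiff_union_of_subset (h1 e' he'.1 he'.2)
    simp only at heq
    rw [← hee, ← hee', heq]

lemma caseI {n r : ℕ} (hr : 3 ≤ r) (hn : r^2*(r-1) ≤ n)
    (H : Finset (Finset (Fin n)))
    (hunif : ∀ e ∈ H, e.card = r)
    (hint : ∀ e ∈ H, ∀ f ∈ H, (e ∩ f).Nonempty)
    (hI : ∀ a b : Fin n, ∃ e ∈ H, a ∉ e ∧ b ∉ e) :
    ∃ S : Finset (Fin n), S.card = r ∧ S ∉ H ∧
      (∑ v ∈ S, hdeg H v) ≤ r * ((n-2).choose (r-2) - (n-r-2).choose (r-2)) := by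
  set Dn := (n-2).choose (r-2) - (n-r-2).choose (r-2) with hDn
  have hn' : r*r*(r-1) ≤ n := by rw [pow_two] at hn; exact hn
  have h18 : 18 ≤ n := by
    have h9 : 9 ≤ r*r := Nat.mul_le_mul hr hr
    have h2 : 2 ≤ r - 1 := by omega
    have := Nat.mul_le_mul h9 h2
    omega
  choose E hEH hEa hEb using hI
  have hv0 : 0 < n := by omega
  set v0 : Fin n := ⟨0, hv0⟩ with hv0def
  set e1 := E v0 v0 with he1def
  have he1 : e1 ∈ H := hEH v0 v0
  set J2 := e1 ∪ e1.biUnion (fun u => (E u u) \ e1) with hJ2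
  -- J2 card bound
  have hJ2card : J2.card ≤ r*r := by
    have h1 : J2.card ≤ e1.card + (e1.biUnion (fun u => (E u u) \ e1)).card := card_union_le _ _
    have h2 : (e1.biUnion (fun u => (E u u) \ e1)).card ≤ ∑ u ∈ e1, ((E u u) \ e1).card :=
      card_biUnion_le
    have h3 : ∀ u ∈ e1, ((E u u) \ e1).card ≤ r - 1 := by
      intro u _
      have hne : ((E u u) ∩ e1).Nonempty := hint _ (hEH u u) _ he1
      have hc := Finset.card_inter_add_card_sdiff (E u u) e1
      have : 1 ≤ ((E u u) ∩ e1).card := Finset.card_pos.mpr hne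
      have hcu : (E u u).card = r := hunif _ (hEH u u)
      omega
    have h4 : ∑ u ∈ e1, ((E u u) \ e1).card ≤ ∑ u ∈ e1, (r-1) := sum_le_sum h3
    have h5 : ∑ u ∈ e1, (r-1) = r * (r-1) := by
      rw [sum_const, hunif e1 he1, smul_eq_mul]
    have h6 : r + r * (r-1) = r * r := by
      obtain ⟨k, hk⟩ : ∃ k, r = k + 1 := ⟨r - 1, by omega⟩
      subst hk; simp only [Nat.add_sub_cancel]; ring
    have he1c : e1.card = r := hunif e1 he1
    omega
  set T := (univ : Finset (Fin n)) \ J2 with hT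
  have hTcard : T.card = n - J2.card := by
    rw [hT, card_sdiff_of_subset (subset_univ _), card_univ, Fintype.card_fin]
  have hsT : r*r*(r-2) ≤ T.card := by
    have e2 : r*r*(r-2) + r*r = r*r*(r-1) := by
      have : r - 1 = (r-2) + 1 := by omega
      rw [this, Nat.mul_succ]
    omega
  have hrT : r ≤ T.card := by
    have h1 : 1 ≤ r*(r-2) := by
      have : 1*1 ≤ r*(r-2) := Nat.mul_le_mul (by omega) (by omega)
      omega
    have h2 : r*1 ≤ r*(r*(r-2)) := Nat.mul_le_mul_left r h1
    have h3 : r*(r*(r-2)) = r*r*(r-2) := by ring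
    omega
  -- sum over T of degrees
  have hswap : ∑ v ∈ T, hdeg H v = ∑ f ∈ H, (f ∩ T).card := by
    unfold hdeg
    simp_rw [Finset.card_filter]
    rw [Finset.sum_comm]
    congr 1
    ext f
    rw [← Finset.card_filter, Finset.filter_mem_eq_inter, inter_comm]
  have hfT : ∀ f ∈ H, (f ∩ T).card ≤ r - 2 := by
    intro f hf
    obtain ⟨u, hu⟩ := hint f hf e1 he1
    rw [mem_inter] at hu
    obtain ⟨w, hw⟩ := hint f hf (E u u) (hEH u u)
    rw [mem_inter] at hw
    have huJ : u ∈ J2 := mem_union_left _ hu.2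
    have hwJ : w ∈ J2 := by
      by_cases hwe : w ∈ e1
      · exact mem_union_left _ hwe
      · exact mem_union_right _ (mem_biUnion.mpr ⟨u, hu.2, mem_sdiff.mpr ⟨hw.2, hwe⟩⟩)
    have hne : u ≠ w := fun h => (hEa u u) (h ▸ hw.2)
    have hsub : ({u, w} : Finset (Fin n)) ⊆ f ∩ J2 := by
      intro z hz
      rw [mem_insert, mem_singleton] at hz
      rcases hz with h | h <;> subst h <;> rw [mem_inter]
      · exact ⟨hu.1, huJ⟩
      · exact ⟨hw.1, hwJ⟩
    have hcard2 : 2 ≤ (f ∩ J2).card := by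
      have := Finset.card_le_card hsub
      rwa [Finset.card_pair hne] at this
    have hTsplit : f ∩ T = f \ J2 := by
      rw [hT]; ext z; simp [mem_sdiff, mem_inter]
    have hc := Finset.card_inter_add_card_sdiff f J2
    have hfc : f.card = r := hunif f hf
    have hTc : (f ∩ T).card = (f \ J2).card := by rw [hTsplit]
    omega
  have hSigT : ∑ v ∈ T, hdeg H v ≤ (r-2) * H.card := by
    rw [hswap]
    calc ∑ f ∈ H, (f ∩ T).card ≤ ∑ f ∈ H, (r-2) := sum_le_sum hfT
      _ = (r-2) * H.card := by rw [sum_const, smul_eq_mul, mul_comm]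
  -- H card bound
  have hHcard : H.card ≤ r * (r * Dn) := by
    have hcov : H ⊆ e1.biUnion (fun u => (E u u).biUnion (fun w =>
        H.filter (fun f => u ∈ f ∧ w ∈ f ∧ (f ∩ E u w).Nonempty))) := by
      intro f hf
      obtain ⟨u, hu⟩ := hint f hf e1 he1
      rw [mem_inter] at hu
      obtain ⟨w, hw⟩ := hint f hf (E u u) (hEH u u)
      rw [mem_inter] at hw
      exact mem_biUnion.mpr ⟨u, hu.2, mem_biUnion.mpr ⟨w, hw.2,
        mem_filter.mpr ⟨hf, hu.1, hw.1, hint f hf _ (hEH u w)⟩⟩⟩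
    have hcell : ∀ u ∈ e1, ∀ w ∈ E u u,
        (H.filter (fun f => u ∈ f ∧ w ∈ f ∧ (f ∩ E u w).Nonempty)).card ≤ Dn := by
      intro u _ w hwE
      have hne : u ≠ w := fun h => (hEa u u) (h ▸ hwE)
      have hP : ({u, w} : Finset (Fin n)).card = 2 := Finset.card_pair hne
      have hEuw : E u w ∈ H := hEH u w
      have hEc : (E u w).card = r := hunif _ hEuw
      have hQW : E u w ⊆ univ \ ({u, w} : Finset (Fin n)) := by
        intro z hz
        rw [mem_sdiff]
        refine ⟨mem_univ _, ?_⟩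
        rw [mem_insert, mem_singleton]
        rintro (rfl | rfl)
        · exact (hEa z w) hz
        · exact (hEb u z) hz
      have hWc : ((univ : Finset (Fin n)) \ ({u, w} : Finset (Fin n))).card = n - 2 := by
        rw [card_sdiff_of_subset (subset_univ _), card_univ, Fintype.card_fin, hP]
      have hwork := filter_card_le_count r H hunif ({u, w} : Finset (Fin n))
        (univ \ ({u, w} : Finset (Fin n)))
        (fun f => u ∈ f ∧ w ∈ f ∧ (f ∩ E u w).Nonempty)
        (fun A => (A ∩ E u w).Nonempty)
        (by intro e _ hp
            intro z hz
            rw [mem_insert, mem_singleton] at hz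
            rcases hz with rfl | rfl
            · exact hp.1
            · exact hp.2.1)
        (by intro e _ hp
            intro z hz
            rw [mem_sdiff] at hz ⊢
            exact ⟨mem_univ _, hz.2⟩)
        (by intro e heH hp
            obtain ⟨t, ht⟩ := hp.2.2
            rw [mem_inter] at ht
            refine ⟨t, mem_inter.mpr ⟨mem_sdiff.mpr ⟨ht.1, ?_⟩, ht.2⟩⟩
            rw [mem_insert, mem_singleton]
            rintro (rfl | rfl)
            · exact (hEa t w) ht.2
            · exact (hEb u t) ht.2)
      have hcnt := count_meet (univ \ ({u, w} : Finset (Fin n))) (E u w) (r - 2) hQW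
      rw [hWc, hEc] at hcnt
      rw [hP] at hwork
      have hidx : n - 2 - r = n - r - 2 := by omega
      rw [hidx] at hcnt
      omega
    calc H.card ≤ (e1.biUnion (fun u => (E u u).biUnion (fun w =>
            H.filter (fun f => u ∈ f ∧ w ∈ f ∧ (f ∩ E u w).Nonempty)))).card :=
          card_le_card hcov
      _ ≤ ∑ u ∈ e1, ((E u u).biUnion (fun w =>
            H.filter (fun f => u ∈ f ∧ w ∈ f ∧ (f ∩ E u w).Nonempty))).card := card_biUnion_le
      _ ≤ ∑ u ∈ e1, (r * Dn) := by
          apply sum_le_sum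
          intro u hu
          calc ((E u u).biUnion _).card ≤ ∑ w ∈ E u u,
                (H.filter (fun f => u ∈ f ∧ w ∈ f ∧ (f ∩ E u w).Nonempty)).card := card_biUnion_le
            _ ≤ ∑ w ∈ E u u, Dn := sum_le_sum (hcell u hu)
            _ = r * Dn := by rw [sum_const, hunif _ (hEH u u), smul_eq_mul]
      _ = r * (r * Dn) := by rw [sum_const, hunif e1 he1, smul_eq_mul]
  -- averaging
  obtain ⟨S0, hS0sub, hS0card⟩ := Finset.exists_subset_card_eq hrT
  have hpc : (T.powersetCard r).Nonempty := ⟨S0, mem_powersetCard.mpr ⟨hS0sub, hS0card⟩⟩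
  obtain ⟨S, hSpc, hSmin⟩ := Finset.exists_min_image (T.powersetCard r)
    (fun S => ∑ v ∈ S, hdeg H v) hpc
  rw [mem_powersetCard] at hSpc
  set s := T.card with hs
  set c := (s - 1).choose (r-1) with hc
  have hdouble : ∑ S' ∈ T.powersetCard r, ∑ v ∈ S', hdeg H v = ∑ v ∈ T, c * hdeg H v := by
    have hstep : ∀ S' ∈ T.powersetCard r, ∑ v ∈ S', hdeg H v
        = ∑ v ∈ T, if v ∈ S' then hdeg H v else 0 := by
      intro S' hS'
      rw [mem_powersetCard] at hS'
      rw [Finset.sum_ite_mem, inter_eq_right.mpr hS'.1]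
    rw [Finset.sum_congr rfl hstep, Finset.sum_comm]
    apply Finset.sum_congr rfl
    intro v hv
    rw [← Finset.sum_filter]
    rw [Finset.sum_const, smul_eq_mul]
    congr 1
    obtain ⟨r', hr'⟩ : ∃ r', r = r' + 1 := ⟨r - 1, by omega⟩
    subst hr'
    rw [count_mem T v hv r']
    simp [hc, hs]
  have htot := Finset.card_nsmul_le_sum (T.powersetCard r)
    (fun S => ∑ v ∈ S, hdeg H v) (∑ v ∈ S, hdeg H v) (fun x hx => hSmin x hx)
  rw [card_powersetCard, hdouble, ← hs] at htot
  rw [smul_eq_mul] at htot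
  have hsum2 : ∑ v ∈ T, c * hdeg H v = c * ∑ v ∈ T, hdeg H v := by rw [mul_sum]
  have hchain : (∑ v ∈ S, hdeg H v) * s.choose r ≤ c * ((r-2) * (r * (r * Dn))) := by
    rw [mul_comm]
    calc s.choose r * (∑ v ∈ S, hdeg H v) ≤ ∑ v ∈ T, c * hdeg H v := htot
      _ = c * ∑ v ∈ T, hdeg H v := hsum2
      _ ≤ c * ((r-2) * H.card) := Nat.mul_le_mul_left c hSigT
      _ ≤ c * ((r-2) * (r * (r * Dn))) := by
          apply Nat.mul_le_mul_left
          exact Nat.mul_le_mul_left _ hHcard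
  have hid : s * c = r * s.choose r := by
    obtain ⟨s', hs'⟩ : ∃ s', s = s' + 1 := ⟨s - 1, by omega⟩
    obtain ⟨r', hr'⟩ : ∃ r', r = r' + 1 := ⟨r - 1, by omega⟩
    have h := Nat.add_one_mul_choose_eq s' r'
    rw [hc, hs', hr']
    simp only [Nat.add_sub_cancel]
    rw [h]
    ring
  have hspos : 0 < s := by omega
  have hCpos : 0 < s.choose r := Nat.choose_pos hrT
  have hfinal : (∑ v ∈ S, hdeg H v) ≤ r * Dn := by
    have hstep : c * ((r-2) * (r * (r * Dn))) ≤ (r * Dn) * s.choose r := by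
      have h1 : s * (c * ((r-2) * (r * (r * Dn)))) = (s.choose r * Dn * r) * (r*r*(r-2)) := by
        rw [show s * (c * ((r-2) * (r * (r * Dn)))) = (s * c) * ((r-2) * (r * (r * Dn))) by ring,
          hid]; ring
      have h2 : (s.choose r * Dn * r) * (r*r*(r-2)) ≤ (s.choose r * Dn * r) * s :=
        Nat.mul_le_mul_left _ hsT
      have h3 : (s.choose r * Dn * r) * s = s * ((r * Dn) * s.choose r) := by ring
      have h4 : s * (c * ((r-2) * (r * (r * Dn)))) ≤ s * ((r * Dn) * s.choose r) := by
        rw [h1, ← h3]; exact h2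
      exact Nat.le_of_mul_le_mul_left h4 hspos
    have := le_trans hchain hstep
    exact Nat.le_of_mul_le_mul_right this hCpos
  refine ⟨S, hSpc.2, ?_, hfinal⟩
  intro hSH
  obtain ⟨z, hz⟩ := hint S hSH e1 he1
  rw [mem_inter] at hz
  have := hSpc.1 hz.1
  rw [hT, mem_sdiff] at this
  exact this.2 (mem_union_left _ hz.2)
section Keys
variable {n r : ℕ}

lemma aux3r (hr : 3 ≤ r) (hn : r*r*(r-1) ≤ n) : 3*r ≤ n ∧ 18 ≤ n := by
  have h1 : 3*r ≤ r*r := Nat.mul_le_mul_right r hr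
  have h2 : r*r*1 ≤ r*r*(r-1) := Nat.mul_le_mul_left _ (by omega)
  rw [mul_one] at h2
  have h18 : 18 ≤ n := by
    have := Nat.mul_le_mul (Nat.mul_le_mul hr hr) (show 2 ≤ r-1 by omega); omega
  omega

lemma keyL2 (hr : 3 ≤ r) (hn : r*r*(r-1) ≤ n) :
    (n-r-2).choose (r-2) + (r-1)*(n-r-2).choose (r-3) ≤ (n-3).choose (r-2) := by
  obtain ⟨h3r, h18⟩ := aux3r hr hn
  have h := choose_L2 (n-r-2) (r-3) (r-1)
  have e1 : (n-r-2) + (r-1) = n - 3 := by omega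
  have e2 : (r-3) + 1 = r - 2 := by omega
  rw [e1, e2] at h
  exact h

lemma key2 (hr : 3 ≤ r) (hn : r*r*(r-1) ≤ n) :
    2*(n-3).choose (r-3) ≤ 3*(n-r-2).choose (r-3) := by
  obtain ⟨h3r, h18⟩ := aux3r hr hn
  rcases Nat.eq_or_lt_of_le hr with heq | hlt
  · rw [← heq]; simp
  · obtain ⟨k, rfl⟩ : ∃ k, r = k + 4 := ⟨r - 4, by omega⟩
    have hnn : (k+4)*(k+4)*(k+3) ≤ n := by
      have e4 : (k+4) - 1 = k+3 := by omega
      rw [e4] at hn; exact hn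
    have hcond : (2+1)*(k+3)*(k+1) + (k+1) ≤ (n-k-6) + 1 := by
      have hsub : (n-k-6) + 1 = n + 1 - (k+6) := by omega
      rw [hsub]
      apply Nat.le_sub_of_add_le
      nlinarith
    have h2 := choose_Lq 2 (k+3) (k+1) (n-k-6) hcond
    have e1 : (n-k-6) + (k+3) = n - 3 := by omega
    rw [e1] at h2
    have e2 : (k+4) - 3 = k+1 := by omega
    have e3 : n - (k+4) - 2 = n-k-6 := by omega
    rw [e2, e3]
    omega

lemma key3 (hr : 3 ≤ r) (hn : r*r*(r-1) ≤ n) :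
    2*(n-3).choose (r-3) + (n-r-2).choose (r-2) ≤ (n-3).choose (r-2) := by
  have hkL2 := keyL2 hr hn
  have hmain : 2*(n-3).choose (r-3) ≤ (r-1)*(n-r-2).choose (r-3) := by
    rcases Nat.eq_or_lt_of_le hr with heq | hlt
    · rw [← heq]
      simp only [show (3:ℕ)-3 = 0 from rfl, Nat.choose_zero_right]
      omega
    · calc 2*(n-3).choose (r-3) ≤ 3*(n-r-2).choose (r-3) := key2 hr hn
        _ ≤ (r-1)*(n-r-2).choose (r-3) := Nat.mul_le_mul_right _ (by omega)
  linarith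

lemma key1 (hr : 3 ≤ r) (hn : r*r*(r-1) ≤ n) :
    (n-4).choose (r-3) ≤ 2*(n-r-3).choose (r-3) := by
  obtain ⟨h3r, h18⟩ := aux3r hr hn
  obtain ⟨k, rfl⟩ : ∃ k, r = k + 3 := ⟨r - 3, by omega⟩
  have hnn : (k+3)*(k+3)*(k+2) ≤ n := by
    have e4 : (k+3) - 1 = k+2 := by omega
    rw [e4] at hn; exact hn
  have hcond : (1+1)*(k+2)*k + k ≤ (n-(k+3)-3) + 1 := by
    have hsub : (n-(k+3)-3) + 1 = n + 1 - (k+6) := by omega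
    rw [hsub]
    apply Nat.le_sub_of_add_le
    nlinarith
  have h2 := choose_Lq 1 (k+2) k (n-(k+3)-3) hcond
  have e1 : (n-(k+3)-3) + (k+2) = n - 4 := by omega
  rw [e1] at h2
  have e6 : (k+3) - 3 = k := by omega
  rw [e6]
  omega

lemma key4 (hr : 3 ≤ r) (hn : r*r*(r-1) ≤ n) :
    (n-3).choose (r-2) + 2*(n-2*r-1).choose (r-2) ≤ 3*(n-r-2).choose (r-2) := by
  obtain ⟨h3r, h18⟩ := aux3r hr hn
  have hA : (n-3).choose (r-2) ≤ (n-r-2).choose (r-2) + (r-1)*(n-3).choose (r-3) := by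
    have h := choose_L1 (n-r-2) (r-3) (r-1)
    have e1 : (n-r-2) + (r-1) = n - 3 := by omega
    have e2 : (r-3) + 1 = r - 2 := by omega
    rw [e1, e2] at h
    exact h
  have hB : (n-2*r-1).choose (r-2) + (r-1)*(n-2*r-1).choose (r-3) ≤ (n-r-2).choose (r-2) := by
    have h := choose_L2 (n-2*r-1) (r-3) (r-1)
    have e1 : (n-2*r-1) + (r-1) = n - r - 2 := by omega
    have e2 : (r-3) + 1 = r - 2 := by omega
    rw [e1, e2] at h
    exact h
  have hC : (n-3).choose (r-3) ≤ 2*(n-2*r-1).choose (r-3) := by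
    obtain ⟨k, rfl⟩ : ∃ k, r = k + 3 := ⟨r - 3, by omega⟩
    have hnn : (k+3)*(k+3)*(k+2) ≤ n := by
      have e4 : (k+3) - 1 = k+2 := by omega
      rw [e4] at hn; exact hn
    have hcond : (1+1)*(2*k+4)*k + k ≤ (n-2*(k+3)-1) + 1 := by
      have hsub : (n-2*(k+3)-1) + 1 = n + 1 - (2*k+7) := by omega
      rw [hsub]
      apply Nat.le_sub_of_add_le
      nlinarith
    have h2 := choose_Lq 1 (2*k+4) k (n-2*(k+3)-1) hcond
    have e1 : (n-2*(k+3)-1) + (2*k+4) = n - 3 := by omega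
    rw [e1] at h2
    have e6 : (k+3) - 3 = k := by omega
    rw [e6]
    omega
  have hC' : (r-1)*(n-3).choose (r-3) ≤ 2*((r-1)*(n-2*r-1).choose (r-3)) := by
    calc (r-1)*(n-3).choose (r-3) ≤ (r-1)*(2*(n-2*r-1).choose (r-3)) :=
          Nat.mul_le_mul_left _ hC
      _ = 2*((r-1)*(n-2*r-1).choose (r-3)) := by ring
  linarith
end Keys
lemma card_univ_sdiff {n : ℕ} (S : Finset (Fin n)) :
    ((univ : Finset (Fin n)) \ S).card = n - S.card := by
  rw [card_sdiff_of_subset (subset_univ _), card_univ, Fintype.card_fin]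

lemma card3 {α : Type*} [DecidableEq α] {a b c : α} (hab : a ≠ b) (hac : a ≠ c) (hbc : b ≠ c) :
    ({a,b,c} : Finset α).card = 3 := by
  rw [card_insert_of_notMem (by simp [hab, hac]), card_insert_of_notMem (by simp [hbc]),
    card_singleton]

lemma card4 {α : Type*} [DecidableEq α] {a b c d : α} (hab : a ≠ b) (hac : a ≠ c) (had : a ≠ d)
    (hbc : b ≠ c) (hbd : b ≠ d) (hcd : c ≠ d) : ({a,b,c,d} : Finset α).card = 4 := by
  rw [card_insert_of_notMem (by simp [hab, hac, had]),
    card_insert_of_notMem (by simp [hbc, hbd]), card_insert_of_notMem (by simp [hcd]),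
    card_singleton]

lemma filter_meet_bound {n r : ℕ} (H : Finset (Finset (Fin n))) (hunif : ∀ e ∈ H, e.card = r)
    (p : Finset (Fin n) → Prop) [DecidablePred p]
    (P E Q : Finset (Fin n))
    (h1 : ∀ e ∈ H, p e → P ⊆ e)
    (h2 : ∀ e ∈ H, p e → ∀ z ∈ e, z ∉ P → z ∉ E)
    (h3 : ∀ e ∈ H, p e → ((e \ P) ∩ Q).Nonempty)
    (hQE : ∀ z ∈ Q, z ∉ E) :
    (H.filter p).card + ((n - E.card) - Q.card).choose (r - P.card)
      ≤ (n - E.card).choose (r - P.card) := by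
  set W := (univ : Finset (Fin n)) \ E with hW
  have hQW : Q ⊆ W := fun z hz => mem_sdiff.mpr ⟨mem_univ _, hQE z hz⟩
  have hwork := filter_card_le_count r H hunif P W p (fun A => (A ∩ Q).Nonempty)
    h1
    (fun e he hp => fun z hz => by
      rw [mem_sdiff] at hz
      exact mem_sdiff.mpr ⟨mem_univ _, h2 e he hp z hz.1 hz.2⟩)
    h3
  have hcnt := count_meet W Q (r - P.card) hQW
  have hWc : W.card = n - E.card := card_univ_sdiff E
  rw [hWc] at hcnt
  omega

lemma filter_sub_bound {n r : ℕ} (H : Finset (Finset (Fin n))) (hunif : ∀ e ∈ H, e.card = r)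
    (p : Finset (Fin n) → Prop) [DecidablePred p]
    (P E : Finset (Fin n))
    (h1 : ∀ e ∈ H, p e → P ⊆ e)
    (h2 : ∀ e ∈ H, p e → ∀ z ∈ e, z ∉ P → z ∉ E) :
    (H.filter p).card ≤ (n - E.card).choose (r - P.card) := by
  set W := (univ : Finset (Fin n)) \ E with hW
  have hwork := filter_card_le_count r H hunif P W p (fun _ => True)
    h1
    (fun e he hp => fun z hz => by
      rw [mem_sdiff] at hz
      exact mem_sdiff.mpr ⟨mem_univ _, h2 e he hp z hz.1 hz.2⟩)
    (fun _ _ _ => trivial)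
  have heq : (W.powersetCard (r - P.card)).filter (fun _ => True) = W.powersetCard (r - P.card) :=
    Finset.filter_true _
  rw [heq, card_powersetCard, _root_.card_univ_sdiff E] at hwork
  exact hwork

lemma filter_meet2_bound {n r : ℕ} (H : Finset (Finset (Fin n))) (hunif : ∀ e ∈ H, e.card = r)
    (p : Finset (Fin n) → Prop) [DecidablePred p]
    (P E Q1 Q2 : Finset (Fin n))
    (h1 : ∀ e ∈ H, p e → P ⊆ e)
    (h2 : ∀ e ∈ H, p e → ∀ z ∈ e, z ∉ P → z ∉ E)
    (h3 : ∀ e ∈ H, p e → ((e \ P) ∩ Q1).Nonempty ∧ ((e \ P) ∩ Q2).Nonempty)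
    (hQ1E : ∀ z ∈ Q1, z ∉ E) (hQ2E : ∀ z ∈ Q2, z ∉ E) :
    (H.filter p).card + ((n - E.card) - Q1.card).choose (r - P.card)
      + ((n - E.card) - Q2.card).choose (r - P.card)
    ≤ (n - E.card).choose (r - P.card)
      + ((n - E.card) - (Q1 ∪ Q2).card).choose (r - P.card) := by
  set W := (univ : Finset (Fin n)) \ E with hW
  have hQ1W : Q1 ⊆ W := fun z hz => mem_sdiff.mpr ⟨mem_univ _, hQ1E z hz⟩
  have hQ2W : Q2 ⊆ W := fun z hz => mem_sdiff.mpr ⟨mem_univ _, hQ2E z hz⟩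
  have hwork := filter_card_le_count r H hunif P W p
    (fun A => (A ∩ Q1).Nonempty ∧ (A ∩ Q2).Nonempty)
    h1
    (fun e he hp => fun z hz => by
      rw [mem_sdiff] at hz
      exact mem_sdiff.mpr ⟨mem_univ _, h2 e he hp z hz.1 hz.2⟩)
    h3
  have hcnt := count_meet2 W Q1 Q2 (r - P.card) hQ1W hQ2W
  have hWc : W.card = n - E.card := card_univ_sdiff E
  rw [hWc] at hcnt
  omega
lemma key5 {n r : ℕ} (hr : 3 ≤ r) (hn : r*r*(r-1) ≤ n) :
    (n-4).choose (r-3) + (n-r-2).choose (r-3)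
      ≤ (n-3).choose (r-3) + (n-r-3).choose (r-3) := by
  obtain ⟨h3r, h18⟩ := aux3r hr hn
  rcases Nat.eq_or_lt_of_le hr with heq | hlt
  · rw [← heq]; simp
  · have e1 : n - 3 = (n-4) + 1 := by omega
    have e2 : r - 3 = (r-4) + 1 := by omega
    have e3 : n - r - 2 = (n-r-3) + 1 := by omega
    have hA : ((n-4)+1).choose ((r-4)+1) = (n-4).choose (r-4) + (n-4).choose ((r-4)+1) :=
      Nat.choose_succ_succ _ _
    have hB : ((n-r-3)+1).choose ((r-4)+1) = (n-r-3).choose (r-4) + (n-r-3).choose ((r-4)+1) :=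
      Nat.choose_succ_succ _ _
    have hm : (n-r-3).choose (r-4) ≤ (n-4).choose (r-4) := Nat.choose_le_choose _ (by omega)
    rw [e1, e2, e3, hA, hB]
    omega
lemma caseII_half {n r : ℕ} (hr : 3 ≤ r) (hn : r*r*(r-1) ≤ n)
    (H : Finset (Finset (Fin n)))
    (hunif : ∀ e ∈ H, e.card = r)
    (hint : ∀ e ∈ H, ∀ f ∈ H, (e ∩ f).Nonempty)
    (x y : Fin n) (hxy : x ≠ y)
    (hHyne : (H.filter (fun e => y ∈ e ∧ x ∉ e)).Nonempty)
    (hYint : ∀ e ∈ H.filter (fun e => y ∈ e ∧ x ∉ e),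
             ∀ e' ∈ H.filter (fun e => y ∈ e ∧ x ∉ e),
        ((e.erase y) ∩ (e'.erase y)).Nonempty) :
    ∃ Z : Finset (Fin n), Z.card ≤ r*r ∧ ∀ v : Fin n, v ∉ Z → v ≠ x → v ≠ y →
      (H.filter (fun e => v ∈ e ∧ x ∈ e ∧ y ∉ e)).card
        + (H.filter (fun e => v ∈ e ∧ y ∈ e ∧ x ∉ e)).card
        + (n-r-2).choose (r-2) ≤ (n-3).choose (r-2) := by
  obtain ⟨h3r, h18⟩ := aux3r hr hn
  have hrsq : 3*r ≤ r*r := Nat.mul_le_mul_right r hr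
  have herase : ∀ e ∈ H, y ∈ e → (e.erase y).card = r - 1 := by
    intro e he hy; rw [card_erase_of_mem hy, hunif e he]
  -- generic dx bound against one Q
  have dxbound : ∀ (v : Fin n), v ≠ x → v ≠ y → ∀ (Q : Finset (Fin n)),
      Q.card = r - 1 → x ∉ Q → y ∉ Q → v ∉ Q →
      (∀ e ∈ H, (v ∈ e ∧ x ∈ e ∧ y ∉ e) → ((e \ ({x,v} : Finset (Fin n))) ∩ Q).Nonempty) →
      (H.filter (fun e => v ∈ e ∧ x ∈ e ∧ y ∉ e)).card + (n-r-2).choose (r-2)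
        ≤ (n-3).choose (r-2) := by
    intro v hvx hvy Q hQc hQx hQy hQv h3
    have hb := filter_meet_bound H hunif (fun e => v ∈ e ∧ x ∈ e ∧ y ∉ e)
      ({x,v} : Finset (Fin n)) ({x,y,v} : Finset (Fin n)) Q
      (by intro e he hp z hz
          simp only [mem_insert, mem_singleton] at hz
          rcases hz with rfl | rfl
          · exact hp.2.1
          · exact hp.1)
      (by intro e he hp z hze hzP
          simp only [mem_insert, mem_singleton] at hzP ⊢
          push_neg at hzP ⊢
          exact ⟨hzP.1, fun h => hp.2.2 (h ▸ hze), hzP.2⟩)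
      h3
      (by intro z hzQ
          simp only [mem_insert, mem_singleton]
          push_neg
          refine ⟨fun h => hQx (h ▸ hzQ), fun h => hQy (h ▸ hzQ), fun h => hQv (h ▸ hzQ)⟩)
    rw [card3 hxy (Ne.symm hvx) (Ne.symm hvy), Finset.card_pair (Ne.symm hvx), hQc] at hb
    have e1 : n - 3 - (r-1) = n - r - 2 := by omega
    rw [e1] at hb
    exact hb
  by_cases hall : ∀ e ∈ H.filter (fun e => y ∈ e ∧ x ∉ e),
      ∀ e' ∈ H.filter (fun e => y ∈ e ∧ x ∉ e), e.erase y = e'.erase y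
  · -- S2a : all hats equal
    obtain ⟨e0, he0⟩ := hHyne
    have he0f := mem_filter.mp he0
    refine ⟨e0.erase y, ?_, ?_⟩
    · rw [herase e0 he0f.1 he0f.2.1]; omega
    · intro v hvZ hvx hvy
      have hdy : (H.filter (fun e => v ∈ e ∧ y ∈ e ∧ x ∉ e)).card = 0 := by
        rw [Finset.card_eq_zero, Finset.filter_eq_empty_iff]
        intro e heH hcond
        apply hvZ
        rw [← hall e (mem_filter.mpr ⟨heH, hcond.2⟩) e0 he0]
        exact mem_erase.mpr ⟨hvy, hcond.1⟩
      have hdx := dxbound v hvx hvy (e0.erase y) (herase e0 he0f.1 he0f.2.1)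
        (fun h => he0f.2.2 (mem_of_mem_erase h)) (Finset.notMem_erase y e0) hvZ
        (by intro e he hp
            obtain ⟨t, ht⟩ := hint e he e0 he0f.1
            rw [mem_inter] at ht
            have hty : t ≠ y := fun h => hp.2.2 (h ▸ ht.1)
            have htQ : t ∈ e0.erase y := mem_erase.mpr ⟨hty, ht.2⟩
            have htx : t ≠ x := fun h => he0f.2.2 (h ▸ ht.2)
            have htv : t ≠ v := fun h => hvZ (h ▸ htQ)
            refine ⟨t, mem_inter.mpr ⟨mem_sdiff.mpr ⟨ht.1, ?_⟩, htQ⟩⟩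
            simp only [mem_insert, mem_singleton]
            push_neg
            exact ⟨htx, htv⟩)
      omega
  · push_neg at hall
    obtain ⟨e0, he0, e1, he1, hne01⟩ := hall
    have he0f := mem_filter.mp he0
    have he1f := mem_filter.mp he1
    by_cases hz : ∃ z : Fin n, ∀ e ∈ H.filter (fun e => y ∈ e ∧ x ∉ e), z ∈ e.erase y
    · obtain ⟨z, hzall⟩ := hz
      have hz0 : z ∈ e0.erase y := hzall e0 he0
      have hzy : z ≠ y := (mem_erase.mp hz0).1
      have hzx' : z ≠ x := fun h => he0f.2.2 (h ▸ mem_of_mem_erase hz0)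
      by_cases hzx : ∀ c ∈ H.filter (fun e => x ∈ e ∧ y ∉ e), z ∈ c
      · -- S2b2
        refine ⟨{z}, by simp; omega, ?_⟩
        intro v hvZ hvx hvy
        have hvz : v ≠ z := by simp at hvZ; exact hvZ
        have hdx : (H.filter (fun e => v ∈ e ∧ x ∈ e ∧ y ∉ e)).card ≤ (n-3).choose (r-3) := by
          have hb := filter_sub_bound H hunif (fun e => v ∈ e ∧ x ∈ e ∧ y ∉ e)
            ({x,z,v} : Finset (Fin n)) ({x,z,v} : Finset (Fin n))
            (by intro e he hp t ht
                simp only [mem_insert, mem_singleton] at ht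
                rcases ht with rfl | rfl | rfl
                · exact hp.2.1
                · exact hzx e (mem_filter.mpr ⟨he, hp.2⟩)
                · exact hp.1)
            (fun e he hp t hte htP => htP)
          rw [card3 hzx'.symm (Ne.symm hvx) (Ne.symm hvz)] at hb
          exact hb
        have hdy : (H.filter (fun e => v ∈ e ∧ y ∈ e ∧ x ∉ e)).card ≤ (n-3).choose (r-3) := by
          have hb := filter_sub_bound H hunif (fun e => v ∈ e ∧ y ∈ e ∧ x ∉ e)
            ({y,z,v} : Finset (Fin n)) ({y,z,v} : Finset (Fin n))
            (by intro e he hp t ht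
                simp only [mem_insert, mem_singleton] at ht
                rcases ht with rfl | rfl | rfl
                · exact hp.2.1
                · exact mem_of_mem_erase (hzall e (mem_filter.mpr ⟨he, hp.2⟩))
                · exact hp.1)
            (fun e he hp t hte htP => htP)
          rw [card3 hzy.symm (Ne.symm hvy) (Ne.symm hvz)] at hb
          exact hb
        have hk3 := key3 hr hn
        omega
      · -- S2b1
        push_neg at hzx
        obtain ⟨c0, hc0, hzc0⟩ := hzx
        have hc0f := mem_filter.mp hc0
        refine ⟨(e0.erase y) ∪ ((e1.erase y) ∪ ((c0.erase x) ∪ {z})), ?_, ?_⟩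
        · have h1 := card_union_le (e0.erase y) ((e1.erase y) ∪ ((c0.erase x) ∪ {z}))
          have h2 := card_union_le (e1.erase y) ((c0.erase x) ∪ {z})
          have h3 := card_union_le (c0.erase x) ({z} : Finset (Fin n))
          rw [herase e0 he0f.1 he0f.2.1] at h1
          rw [herase e1 he1f.1 he1f.2.1] at h2
          have hc0c : (c0.erase x).card = r - 1 := by
            rw [card_erase_of_mem hc0f.2.1, hunif _ hc0f.1]
          rw [hc0c] at h3
          simp only [card_singleton] at h3
          omega
        · intro v hvZ hvx hvy
          simp only [mem_union, not_or] at hvZ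
          have hv0 := hvZ.1
          have hv1 := hvZ.2.1
          have hvc := hvZ.2.2.1
          have hvz : v ≠ z := by
            have := hvZ.2.2.2
            simp only [mem_singleton] at this
            exact this
          -- dy bound
          have hdy : (H.filter (fun e => v ∈ e ∧ y ∈ e ∧ x ∉ e)).card
              + (n-r-3).choose (r-3) ≤ (n-4).choose (r-3) := by
            have hb := filter_meet_bound H hunif (fun e => v ∈ e ∧ y ∈ e ∧ x ∉ e)
              ({y,z,v} : Finset (Fin n)) ({x,y,z,v} : Finset (Fin n)) (c0.erase x)
              (by intro e he hp t ht
                  simp only [mem_insert, mem_singleton] at ht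
                  rcases ht with rfl | rfl | rfl
                  · exact hp.2.1
                  · exact mem_of_mem_erase (hzall e (mem_filter.mpr ⟨he, hp.2⟩))
                  · exact hp.1)
              (by intro e he hp t hte htP
                  simp only [mem_insert, mem_singleton] at htP ⊢
                  push_neg at htP ⊢
                  exact ⟨fun h => hp.2.2 (h ▸ hte), htP⟩)
              (by intro e he hp
                  obtain ⟨t, ht⟩ := hint e he c0 hc0f.1
                  rw [mem_inter] at ht
                  have htx : t ≠ x := fun h => hp.2.2 (h ▸ ht.1)
                  have htQ : t ∈ c0.erase x := mem_erase.mpr ⟨htx, ht.2⟩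
                  have hty : t ≠ y := fun h => hc0f.2.2 (h ▸ ht.2)
                  have htz : t ≠ z := fun h => hzc0 (h ▸ ht.2)
                  have htv : t ≠ v := fun h => hvc (h ▸ htQ)
                  refine ⟨t, mem_inter.mpr ⟨mem_sdiff.mpr ⟨ht.1, ?_⟩, htQ⟩⟩
                  simp only [mem_insert, mem_singleton]
                  push_neg
                  exact ⟨hty, htz, htv⟩)
              (by intro t htQ
                  have htc0 : t ∈ c0 := mem_of_mem_erase htQ
                  simp only [mem_insert, mem_singleton]
                  push_neg
                  exact ⟨(mem_erase.mp htQ).1, fun h => hc0f.2.2 (h ▸ htc0),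
                    fun h => hzc0 (h ▸ htc0), fun h => hvc (h ▸ htQ)⟩)
            have hE4 : ({x,y,z,v} : Finset (Fin n)).card = 4 :=
              card4 hxy hzx'.symm (Ne.symm hvx) hzy.symm (Ne.symm hvy) (Ne.symm hvz)
            have hP3 : ({y,z,v} : Finset (Fin n)).card = 3 :=
              card3 hzy.symm (Ne.symm hvy) (Ne.symm hvz)
            have hQc : (c0.erase x).card = r - 1 := by
              rw [card_erase_of_mem hc0f.2.1, hunif _ hc0f.1]
            rw [hE4, hP3, hQc] at hb
            have e1' : n - 4 - (r-1) = n - r - 3 := by omega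
            rw [e1'] at hb
            exact hb
          -- dx bound (meets two distinct hats)
          have hdx : (H.filter (fun e => v ∈ e ∧ x ∈ e ∧ y ∉ e)).card
              + (n-r-2).choose (r-2) + (n-r-2).choose (r-2)
              ≤ (n-3).choose (r-2) + (n-r-3).choose (r-2) := by
            have hb := filter_meet2_bound H hunif (fun e => v ∈ e ∧ x ∈ e ∧ y ∉ e)
              ({x,v} : Finset (Fin n)) ({x,y,v} : Finset (Fin n)) (e0.erase y) (e1.erase y)
              (by intro e he hp t ht
                  simp only [mem_insert, mem_singleton] at ht
                  rcases ht with rfl | rfl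
                  · exact hp.2.1
                  · exact hp.1)
              (by intro e he hp t hte htP
                  simp only [mem_insert, mem_singleton] at htP ⊢
                  push_neg at htP ⊢
                  exact ⟨htP.1, fun h => hp.2.2 (h ▸ hte), htP.2⟩)
              (by intro e he hp
                  constructor
                  · obtain ⟨t, ht⟩ := hint e he e0 he0f.1
                    rw [mem_inter] at ht
                    have hty : t ≠ y := fun h => hp.2.2 (h ▸ ht.1)
                    have htQ : t ∈ e0.erase y := mem_erase.mpr ⟨hty, ht.2⟩
                    have htx : t ≠ x := fun h => he0f.2.2 (h ▸ ht.2)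
                    have htv : t ≠ v := fun h => hv0 (h ▸ htQ)
                    refine ⟨t, mem_inter.mpr ⟨mem_sdiff.mpr ⟨ht.1, ?_⟩, htQ⟩⟩
                    simp only [mem_insert, mem_singleton]
                    push_neg
                    exact ⟨htx, htv⟩
                  · obtain ⟨t, ht⟩ := hint e he e1 he1f.1
                    rw [mem_inter] at ht
                    have hty : t ≠ y := fun h => hp.2.2 (h ▸ ht.1)
                    have htQ : t ∈ e1.erase y := mem_erase.mpr ⟨hty, ht.2⟩
                    have htx : t ≠ x := fun h => he1f.2.2 (h ▸ ht.2)
                    have htv : t ≠ v := fun h => hv1 (h ▸ htQ)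
                    refine ⟨t, mem_inter.mpr ⟨mem_sdiff.mpr ⟨ht.1, ?_⟩, htQ⟩⟩
                    simp only [mem_insert, mem_singleton]
                    push_neg
                    exact ⟨htx, htv⟩)
              (by intro t htQ
                  have hte0 : t ∈ e0 := mem_of_mem_erase htQ
                  simp only [mem_insert, mem_singleton]
                  push_neg
                  exact ⟨fun h => he0f.2.2 (h ▸ hte0), (mem_erase.mp htQ).1,
                    fun h => hv0 (h ▸ htQ)⟩)
              (by intro t htQ
                  have hte1 : t ∈ e1 := mem_of_mem_erase htQ
                  simp only [mem_insert, mem_singleton]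
                  push_neg
                  exact ⟨fun h => he1f.2.2 (h ▸ hte1), (mem_erase.mp htQ).1,
                    fun h => hv1 (h ▸ htQ)⟩)
            have hE3 : ({x,y,v} : Finset (Fin n)).card = 3 :=
              card3 hxy (Ne.symm hvx) (Ne.symm hvy)
            have hP2 : ({x,v} : Finset (Fin n)).card = 2 := Finset.card_pair (Ne.symm hvx)
            have hQ0 : (e0.erase y).card = r - 1 := herase e0 he0f.1 he0f.2.1
            have hQ1 : (e1.erase y).card = r - 1 := herase e1 he1f.1 he1f.2.1
            rw [hE3, hP2, hQ0, hQ1] at hb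
            have e1' : n - 3 - (r-1) = n - r - 2 := by omega
            rw [e1'] at hb
            -- union of two distinct (r-1)-sets has card ≥ r
            have hUc : r ≤ ((e0.erase y) ∪ (e1.erase y)).card := by
              by_contra hcon
              push_neg at hcon
              have hsub0 : e0.erase y ⊆ (e0.erase y) ∪ (e1.erase y) := subset_union_left
              have heq0 : e0.erase y = (e0.erase y) ∪ (e1.erase y) :=
                Finset.eq_of_subset_of_card_le hsub0 (by omega)
              have hsub1 : e1.erase y ⊆ e0.erase y := by
                rw [heq0]; exact subset_union_right
              have : e1.erase y = e0.erase y :=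
                Finset.eq_of_subset_of_card_le hsub1 (by rw [hQ0, hQ1])
              exact hne01 this.symm
            have hmono : (n - 3 - ((e0.erase y) ∪ (e1.erase y)).card).choose (r-2)
                ≤ (n-r-3).choose (r-2) := Nat.choose_le_choose _ (by omega)
            omega
          -- assemble
          have hk1 := key1 hr hn
          have hpas : (n-r-2).choose (r-2) = (n-r-3).choose (r-3) + (n-r-3).choose (r-2) := by
            have e1' : n - r - 2 = (n-r-3) + 1 := by omega
            have e2' : r - 2 = (r-3) + 1 := by omega
            rw [e1', e2', Nat.choose_succ_succ]
          omega
    · -- S2c : no common element in hats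
      push_neg at hz
      choose Qf hQf1 hQf2 using hz
      set E0 := e0.erase y with hE0
      have hE0c : E0.card = r - 1 := herase e0 he0f.1 he0f.2.1
      refine ⟨E0 ∪ E0.biUnion (fun w => (Qf w).erase y), ?_, ?_⟩
      · have h1 := card_union_le E0 (E0.biUnion (fun w => (Qf w).erase y))
        have h2 : (E0.biUnion (fun w => (Qf w).erase y)).card ≤ ∑ w ∈ E0, ((Qf w).erase y).card :=
          card_biUnion_le
        have h3 : ∀ w ∈ E0, ((Qf w).erase y).card = r - 1 := by
          intro w _
          have hf := mem_filter.mp (hQf1 w)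
          rw [card_erase_of_mem hf.2.1, hunif _ hf.1]
        have h4 : ∑ w ∈ E0, ((Qf w).erase y).card = (r-1) * (r-1) := by
          rw [Finset.sum_congr rfl h3, sum_const, hE0c, smul_eq_mul]
        have h5 : (r-1) + (r-1)*(r-1) ≤ r*r := by
          obtain ⟨k, rfl⟩ : ∃ k, r = k + 3 := ⟨r - 3, by omega⟩
          have e1 : k+3-1 = k+2 := by omega
          rw [e1]
          nlinarith
        omega
      · intro v hvZ hvx hvy
        simp only [mem_union, not_or] at hvZ
        obtain ⟨hv0, hvB⟩ := hvZ
        have hvq : ∀ w ∈ E0, v ∉ (Qf w).erase y := by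
          intro w hw hvin
          exact hvB (mem_biUnion.mpr ⟨w, hw, hvin⟩)
        set A := (n-3).choose (r-3) with hA
        set Bc := (n-r-2).choose (r-3) with hBc
        have hBA : Bc ≤ A := Nat.choose_le_choose _ (by omega)
        -- dy bound
        have hdy : (H.filter (fun e => v ∈ e ∧ y ∈ e ∧ x ∉ e)).card ≤ (r-1) * (A - Bc) := by
          have hcov : H.filter (fun e => v ∈ e ∧ y ∈ e ∧ x ∉ e) ⊆
              E0.biUnion (fun w => H.filter (fun e => (v ∈ e ∧ y ∈ e ∧ x ∉ e) ∧ w ∈ e)) := by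
            intro e he
            have hef := mem_filter.mp he
            obtain ⟨t, ht⟩ := hYint e (mem_filter.mpr ⟨hef.1, hef.2.2⟩) e0 he0
            rw [mem_inter] at ht
            exact mem_biUnion.mpr ⟨t, ht.2, mem_filter.mpr ⟨hef.1, hef.2,
              mem_of_mem_erase ht.1⟩⟩
          have hcell : ∀ w ∈ E0,
              (H.filter (fun e => (v ∈ e ∧ y ∈ e ∧ x ∉ e) ∧ w ∈ e)).card ≤ A - Bc := by
            intro w hw
            have hwy : w ≠ y := (mem_erase.mp hw).1
            have hvw : v ≠ w := fun h => hv0 (h ▸ hw)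
            have hqf := mem_filter.mp (hQf1 w)
            have hb := filter_meet_bound H hunif (fun e => (v ∈ e ∧ y ∈ e ∧ x ∉ e) ∧ w ∈ e)
              ({y,v,w} : Finset (Fin n)) ({y,v,w} : Finset (Fin n)) ((Qf w).erase y)
              (by intro e he hp t ht
                  simp only [mem_insert, mem_singleton] at ht
                  rcases ht with rfl | rfl | rfl
                  · exact hp.1.2.1
                  · exact hp.1.1
                  · exact hp.2)
              (fun e he hp t hte htP => htP)
              (by intro e he hp
                  obtain ⟨t, ht⟩ := hYint e (mem_filter.mpr ⟨he, hp.1.2⟩) (Qf w) (hQf1 w)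
                  rw [mem_inter] at ht
                  have hty : t ≠ y := (mem_erase.mp ht.1).1
                  have htv : t ≠ v := fun h => (hvq w hw) (h ▸ ht.2)
                  have htw : t ≠ w := fun h => (hQf2 w) (h ▸ ht.2)
                  refine ⟨t, mem_inter.mpr ⟨mem_sdiff.mpr ⟨mem_of_mem_erase ht.1, ?_⟩, ht.2⟩⟩
                  simp only [mem_insert, mem_singleton]
                  push_neg
                  exact ⟨hty, htv, htw⟩)
              (by intro t htQ
                  simp only [mem_insert, mem_singleton]
                  push_neg
                  exact ⟨(mem_erase.mp htQ).1, fun h => (hvq w hw) (h ▸ htQ),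
                    fun h => (hQf2 w) (h ▸ htQ)⟩)
            have hP3 : ({y,v,w} : Finset (Fin n)).card = 3 :=
              card3 (Ne.symm hvy) hwy.symm hvw
            have hQc : ((Qf w).erase y).card = r - 1 := by
              rw [card_erase_of_mem hqf.2.1, hunif _ hqf.1]
            rw [hP3, hQc] at hb
            have e1' : n - 3 - (r-1) = n - r - 2 := by omega
            rw [e1'] at hb
            omega
          calc (H.filter (fun e => v ∈ e ∧ y ∈ e ∧ x ∉ e)).card
              ≤ (E0.biUnion (fun w => H.filter (fun e => (v ∈ e ∧ y ∈ e ∧ x ∉ e) ∧ w ∈ e))).card :=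
                card_le_card hcov
            _ ≤ ∑ w ∈ E0, (H.filter (fun e => (v ∈ e ∧ y ∈ e ∧ x ∉ e) ∧ w ∈ e)).card :=
                card_biUnion_le
            _ ≤ ∑ w ∈ E0, (A - Bc) := sum_le_sum hcell
            _ = (r-1) * (A - Bc) := by rw [sum_const, hE0c, smul_eq_mul]
        -- dx bound
        have hdx : (H.filter (fun e => v ∈ e ∧ x ∈ e ∧ y ∉ e)).card ≤ (r-1) * (A - Bc) := by
          have hcov : H.filter (fun e => v ∈ e ∧ x ∈ e ∧ y ∉ e) ⊆
              E0.biUnion (fun w => H.filter (fun e => (v ∈ e ∧ x ∈ e ∧ y ∉ e) ∧ w ∈ e)) := by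
            intro e he
            have hef := mem_filter.mp he
            obtain ⟨t, ht⟩ := hint e hef.1 e0 he0f.1
            rw [mem_inter] at ht
            have hty : t ≠ y := fun h => hef.2.2.2 (h ▸ ht.1)
            exact mem_biUnion.mpr ⟨t, mem_erase.mpr ⟨hty, ht.2⟩,
              mem_filter.mpr ⟨hef.1, hef.2, ht.1⟩⟩
          have hcell : ∀ w ∈ E0,
              (H.filter (fun e => (v ∈ e ∧ x ∈ e ∧ y ∉ e) ∧ w ∈ e)).card ≤ A - Bc := by
            intro w hw
            have hwy : w ≠ y := (mem_erase.mp hw).1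
            have hwx : w ≠ x := fun h => he0f.2.2 (h ▸ mem_of_mem_erase hw)
            have hvw : v ≠ w := fun h => hv0 (h ▸ hw)
            have hqf := mem_filter.mp (hQf1 w)
            have hb := filter_meet_bound H hunif (fun e => (v ∈ e ∧ x ∈ e ∧ y ∉ e) ∧ w ∈ e)
              ({x,v,w} : Finset (Fin n)) ({x,y,v,w} : Finset (Fin n)) ((Qf w).erase y)
              (by intro e he hp t ht
                  simp only [mem_insert, mem_singleton] at ht
                  rcases ht with rfl | rfl | rfl
                  · exact hp.1.2.1
                  · exact hp.1.1
                  · exact hp.2)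
              (by intro e he hp t hte htP
                  simp only [mem_insert, mem_singleton] at htP ⊢
                  push_neg at htP ⊢
                  exact ⟨htP.1, fun h => hp.1.2.2 (h ▸ hte), htP.2⟩)
              (by intro e he hp
                  obtain ⟨t, ht⟩ := hint e he (Qf w) hqf.1
                  rw [mem_inter] at ht
                  have hty : t ≠ y := fun h => hp.1.2.2 (h ▸ ht.1)
                  have htQ : t ∈ (Qf w).erase y := mem_erase.mpr ⟨hty, ht.2⟩
                  have htx : t ≠ x := fun h => hqf.2.2 (h ▸ ht.2)
                  have htv : t ≠ v := fun h => (hvq w hw) (h ▸ htQ)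
                  have htw : t ≠ w := fun h => (hQf2 w) (h ▸ htQ)
                  refine ⟨t, mem_inter.mpr ⟨mem_sdiff.mpr ⟨ht.1, ?_⟩, htQ⟩⟩
                  simp only [mem_insert, mem_singleton]
                  push_neg
                  exact ⟨htx, htv, htw⟩)
              (by intro t htQ
                  have htqf : t ∈ Qf w := mem_of_mem_erase htQ
                  simp only [mem_insert, mem_singleton]
                  push_neg
                  exact ⟨fun h => hqf.2.2 (h ▸ htqf), (mem_erase.mp htQ).1,
                    fun h => (hvq w hw) (h ▸ htQ), fun h => (hQf2 w) (h ▸ htQ)⟩)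
            have hP3 : ({x,v,w} : Finset (Fin n)).card = 3 :=
              card3 (Ne.symm hvx) hwx.symm hvw
            have hE4 : ({x,y,v,w} : Finset (Fin n)).card = 4 :=
              card4 hxy (Ne.symm hvx) hwx.symm (Ne.symm hvy) hwy.symm hvw
            have hQc : ((Qf w).erase y).card = r - 1 := by
              rw [card_erase_of_mem hqf.2.1, hunif _ hqf.1]
            rw [hP3, hE4, hQc] at hb
            have e1' : n - 4 - (r-1) = n - r - 3 := by omega
            rw [e1'] at hb
            have hk5 := key5 hr hn
            omega
          calc (H.filter (fun e => v ∈ e ∧ x ∈ e ∧ y ∉ e)).card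
              ≤ (E0.biUnion (fun w => H.filter (fun e => (v ∈ e ∧ x ∈ e ∧ y ∉ e) ∧ w ∈ e))).card :=
                card_le_card hcov
            _ ≤ ∑ w ∈ E0, (H.filter (fun e => (v ∈ e ∧ x ∈ e ∧ y ∉ e) ∧ w ∈ e)).card :=
                card_biUnion_le
            _ ≤ ∑ w ∈ E0, (A - Bc) := sum_le_sum hcell
            _ = (r-1) * (A - Bc) := by rw [sum_const, hE0c, smul_eq_mul]
        -- assemble S2c
        have hk2 := key2 hr hn
        have hkL2 := keyL2 hr hn
        have h5 : 2*(A - Bc) ≤ Bc := by omega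
        have h6 : (r-1)*(2*(A-Bc)) ≤ (r-1)*Bc := Nat.mul_le_mul_left _ h5
        have h7 : (r-1)*(A-Bc) + (r-1)*(A-Bc) = (r-1)*(2*(A-Bc)) := by ring
        linarith

lemma caseII {n r : ℕ} (hr : 3 ≤ r) (hn : r*r*(r-1) ≤ n)
    (H : Finset (Finset (Fin n)))
    (hunif : ∀ e ∈ H, e.card = r)
    (hint : ∀ e ∈ H, ∀ f ∈ H, (e ∩ f).Nonempty)
    (hnt : ¬ ∃ x : Fin n, ∀ e ∈ H, x ∈ e)
    (x y : Fin n) (hcov : ∀ e ∈ H, x ∈ e ∨ y ∈ e) :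
    ∃ S : Finset (Fin n), S.card = r ∧ S ∉ H ∧
      (∑ v ∈ S, hdeg H v) ≤ r * ((n-2).choose (r-2) - (n-r-2).choose (r-2)) := by
  obtain ⟨h3r, h18⟩ := aux3r hr hn
  have hxy : x ≠ y := by
    rintro rfl
    exact hnt ⟨x, fun e he => (hcov e he).elim id id⟩
  have hHyne : (H.filter (fun e => y ∈ e ∧ x ∉ e)).Nonempty := by
    by_contra hcon
    rw [Finset.not_nonempty_iff_eq_empty, Finset.filter_eq_empty_iff] at hcon
    apply hnt
    refine ⟨x, fun e he => ?_⟩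
    by_contra hxe
    rcases hcov e he with h | h
    · exact hxe h
    · exact hcon he ⟨h, hxe⟩
  have hHxne : (H.filter (fun e => x ∈ e ∧ y ∉ e)).Nonempty := by
    by_contra hcon
    rw [Finset.not_nonempty_iff_eq_empty, Finset.filter_eq_empty_iff] at hcon
    apply hnt
    refine ⟨y, fun e he => ?_⟩
    by_contra hye
    rcases hcov e he with h | h
    · exact hcon he ⟨h, hye⟩
    · exact hye h
  have claim : ∃ Z : Finset (Fin n), Z.card ≤ r*r ∧ ∀ v : Fin n, v ∉ Z → v ≠ x → v ≠ y →
      (H.filter (fun e => v ∈ e ∧ x ∈ e ∧ y ∉ e)).card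
        + (H.filter (fun e => v ∈ e ∧ y ∈ e ∧ x ∉ e)).card
        + (n-r-2).choose (r-2) ≤ (n-3).choose (r-2) := by
    by_cases hY : ∀ e ∈ H.filter (fun e => y ∈ e ∧ x ∉ e),
        ∀ e' ∈ H.filter (fun e => y ∈ e ∧ x ∉ e), ((e.erase y) ∩ (e'.erase y)).Nonempty
    · exact caseII_half hr hn H hunif hint x y hxy hHyne hY
    by_cases hX : ∀ e ∈ H.filter (fun e => x ∈ e ∧ y ∉ e),
        ∀ e' ∈ H.filter (fun e => x ∈ e ∧ y ∉ e), ((e.erase x) ∩ (e'.erase x)).Nonempty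
    · obtain ⟨Z, hZc, hZ⟩ := caseII_half hr hn H hunif hint y x hxy.symm hHxne hX
      exact ⟨Z, hZc, fun v hvZ hvx hvy => by have := hZ v hvZ hvy hvx; omega⟩
    · -- S1 : both sides have two disjoint "hats"
      push_neg at hY hX
      obtain ⟨e0, he0, e1, he1, hYd⟩ := hY
      obtain ⟨c0, hc0, c1, hc1, hXd⟩ := hX
      have he0f := mem_filter.mp he0
      have he1f := mem_filter.mp he1
      have hc0f := mem_filter.mp hc0
      have hc1f := mem_filter.mp hc1
      have hQ0 : (e0.erase y).card = r - 1 := by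
        rw [card_erase_of_mem he0f.2.1, hunif _ he0f.1]
      have hQ1 : (e1.erase y).card = r - 1 := by
        rw [card_erase_of_mem he1f.2.1, hunif _ he1f.1]
      have hR0 : (c0.erase x).card = r - 1 := by
        rw [card_erase_of_mem hc0f.2.1, hunif _ hc0f.1]
      have hR1 : (c1.erase x).card = r - 1 := by
        rw [card_erase_of_mem hc1f.2.1, hunif _ hc1f.1]
      refine ⟨(e0.erase y) ∪ ((e1.erase y) ∪ ((c0.erase x) ∪ (c1.erase x))), ?_, ?_⟩
      · have h1 := card_union_le (e0.erase y) ((e1.erase y) ∪ ((c0.erase x) ∪ (c1.erase x)))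
        have h2 := card_union_le (e1.erase y) ((c0.erase x) ∪ (c1.erase x))
        have h3 := card_union_le (c0.erase x) (c1.erase x)
        have h4r : 4*r ≤ r*r + 4 := by nlinarith
        omega
      · intro v hvZ hvx hvy
        simp only [mem_union, not_or] at hvZ
        have hv0 := hvZ.1
        have hv1 := hvZ.2.1
        have hw0 := hvZ.2.2.1
        have hw1 := hvZ.2.2.2
        have hdx : (H.filter (fun e => v ∈ e ∧ x ∈ e ∧ y ∉ e)).card
            + (n-r-2).choose (r-2) + (n-r-2).choose (r-2)
            ≤ (n-3).choose (r-2) + (n-2*r-1).choose (r-2) := by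
          have hb := filter_meet2_bound H hunif (fun e => v ∈ e ∧ x ∈ e ∧ y ∉ e)
            ({x,v} : Finset (Fin n)) ({x,y,v} : Finset (Fin n)) (e0.erase y) (e1.erase y)
            (by intro e he hp t ht
                simp only [mem_insert, mem_singleton] at ht
                rcases ht with rfl | rfl
                · exact hp.2.1
                · exact hp.1)
            (by intro e he hp t hte htP
                simp only [mem_insert, mem_singleton] at htP ⊢
                push_neg at htP ⊢
                exact ⟨htP.1, fun h => hp.2.2 (h ▸ hte), htP.2⟩)
            (by intro e he hp
                constructor
                · obtain ⟨t, ht⟩ := hint e he e0 he0f.1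
                  rw [mem_inter] at ht
                  have hty : t ≠ y := fun h => hp.2.2 (h ▸ ht.1)
                  have htQ : t ∈ e0.erase y := mem_erase.mpr ⟨hty, ht.2⟩
                  have htx : t ≠ x := fun h => he0f.2.2 (h ▸ ht.2)
                  have htv : t ≠ v := fun h => hv0 (h ▸ htQ)
                  refine ⟨t, mem_inter.mpr ⟨mem_sdiff.mpr ⟨ht.1, ?_⟩, htQ⟩⟩
                  simp only [mem_insert, mem_singleton]
                  push_neg
                  exact ⟨htx, htv⟩
                · obtain ⟨t, ht⟩ := hint e he e1 he1f.1
                  rw [mem_inter] at ht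
                  have hty : t ≠ y := fun h => hp.2.2 (h ▸ ht.1)
                  have htQ : t ∈ e1.erase y := mem_erase.mpr ⟨hty, ht.2⟩
                  have htx : t ≠ x := fun h => he1f.2.2 (h ▸ ht.2)
                  have htv : t ≠ v := fun h => hv1 (h ▸ htQ)
                  refine ⟨t, mem_inter.mpr ⟨mem_sdiff.mpr ⟨ht.1, ?_⟩, htQ⟩⟩
                  simp only [mem_insert, mem_singleton]
                  push_neg
                  exact ⟨htx, htv⟩)
            (by intro t htQ
                have hte0 : t ∈ e0 := mem_of_mem_erase htQ
                simp only [mem_insert, mem_singleton]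
                push_neg
                exact ⟨fun h => he0f.2.2 (h ▸ hte0), (mem_erase.mp htQ).1,
                  fun h => hv0 (h ▸ htQ)⟩)
            (by intro t htQ
                have hte1 : t ∈ e1 := mem_of_mem_erase htQ
                simp only [mem_insert, mem_singleton]
                push_neg
                exact ⟨fun h => he1f.2.2 (h ▸ hte1), (mem_erase.mp htQ).1,
                  fun h => hv1 (h ▸ htQ)⟩)
          have hE3 : ({x,y,v} : Finset (Fin n)).card = 3 :=
            card3 hxy (Ne.symm hvx) (Ne.symm hvy)
          have hP2 : ({x,v} : Finset (Fin n)).card = 2 := Finset.card_pair (Ne.symm hvx)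
          have hU : ((e0.erase y) ∪ (e1.erase y)).card = (r-1) + (r-1) := by
            rw [card_union_of_disjoint (disjoint_iff_inter_eq_empty.mpr hYd), hQ0, hQ1]
          rw [hE3, hP2, hQ0, hQ1, hU] at hb
          have e1' : n - 3 - (r-1) = n - r - 2 := by omega
          have e2' : n - 3 - ((r-1) + (r-1)) = n - 2*r - 1 := by omega
          rw [e1', e2'] at hb
          exact hb
        have hdy : (H.filter (fun e => v ∈ e ∧ y ∈ e ∧ x ∉ e)).card
            + (n-r-2).choose (r-2) + (n-r-2).choose (r-2)
            ≤ (n-3).choose (r-2) + (n-2*r-1).choose (r-2) := by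
          have hb := filter_meet2_bound H hunif (fun e => v ∈ e ∧ y ∈ e ∧ x ∉ e)
            ({y,v} : Finset (Fin n)) ({x,y,v} : Finset (Fin n)) (c0.erase x) (c1.erase x)
            (by intro e he hp t ht
                simp only [mem_insert, mem_singleton] at ht
                rcases ht with rfl | rfl
                · exact hp.2.1
                · exact hp.1)
            (by intro e he hp t hte htP
                simp only [mem_insert, mem_singleton] at htP ⊢
                push_neg at htP ⊢
                exact ⟨fun h => hp.2.2 (h ▸ hte), htP.1, htP.2⟩)
            (by intro e he hp
                constructor
                · obtain ⟨t, ht⟩ := hint e he c0 hc0f.1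
                  rw [mem_inter] at ht
                  have htx : t ≠ x := fun h => hp.2.2 (h ▸ ht.1)
                  have htQ : t ∈ c0.erase x := mem_erase.mpr ⟨htx, ht.2⟩
                  have hty : t ≠ y := fun h => hc0f.2.2 (h ▸ ht.2)
                  have htv : t ≠ v := fun h => hw0 (h ▸ htQ)
                  refine ⟨t, mem_inter.mpr ⟨mem_sdiff.mpr ⟨ht.1, ?_⟩, htQ⟩⟩
                  simp only [mem_insert, mem_singleton]
                  push_neg
                  exact ⟨hty, htv⟩
                · obtain ⟨t, ht⟩ := hint e he c1 hc1f.1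
                  rw [mem_inter] at ht
                  have htx : t ≠ x := fun h => hp.2.2 (h ▸ ht.1)
                  have htQ : t ∈ c1.erase x := mem_erase.mpr ⟨htx, ht.2⟩
                  have hty : t ≠ y := fun h => hc1f.2.2 (h ▸ ht.2)
                  have htv : t ≠ v := fun h => hw1 (h ▸ htQ)
                  refine ⟨t, mem_inter.mpr ⟨mem_sdiff.mpr ⟨ht.1, ?_⟩, htQ⟩⟩
                  simp only [mem_insert, mem_singleton]
                  push_neg
                  exact ⟨hty, htv⟩)
            (by intro t htQ
                have htc0 : t ∈ c0 := mem_of_mem_erase htQ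
                simp only [mem_insert, mem_singleton]
                push_neg
                exact ⟨(mem_erase.mp htQ).1, fun h => hc0f.2.2 (h ▸ htc0),
                  fun h => hw0 (h ▸ htQ)⟩)
            (by intro t htQ
                have htc1 : t ∈ c1 := mem_of_mem_erase htQ
                simp only [mem_insert, mem_singleton]
                push_neg
                exact ⟨(mem_erase.mp htQ).1, fun h => hc1f.2.2 (h ▸ htc1),
                  fun h => hw1 (h ▸ htQ)⟩)
          have hE3 : ({x,y,v} : Finset (Fin n)).card = 3 :=
            card3 hxy (Ne.symm hvx) (Ne.symm hvy)
          have hP2 : ({y,v} : Finset (Fin n)).card = 2 := Finset.card_pair (Ne.symm hvy)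
          have hU : ((c0.erase x) ∪ (c1.erase x)).card = (r-1) + (r-1) := by
            rw [card_union_of_disjoint (disjoint_iff_inter_eq_empty.mpr hXd), hR0, hR1]
          rw [hE3, hP2, hR0, hR1, hU] at hb
          have e1' : n - 3 - (r-1) = n - r - 2 := by omega
          have e2' : n - 3 - ((r-1) + (r-1)) = n - 2*r - 1 := by omega
          rw [e1', e2'] at hb
          exact hb
        have hk4 := key4 hr hn
        omega
  obtain ⟨Z, hZc, hZ⟩ := claim
  have hZZc : (Z ∪ ({x,y} : Finset (Fin n))).card ≤ r*r + 2 := by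
    have h1 := card_union_le Z ({x,y} : Finset (Fin n))
    rw [Finset.card_pair hxy] at h1
    omega
  set T := (univ : Finset (Fin n)) \ (Z ∪ ({x,y} : Finset (Fin n))) with hT
  have hTcard : T.card = n - (Z ∪ ({x,y} : Finset (Fin n))).card := card_univ_sdiff _
  have hrT : r ≤ T.card := by
    have h1 : r*r*2 ≤ r*r*(r-1) := Nat.mul_le_mul_left _ (by omega)
    have h2 : r + 2 ≤ r*r := by nlinarith
    omega
  obtain ⟨S, hSsub, hScard⟩ := Finset.exists_subset_card_eq hrT
  have hSmemT : ∀ v ∈ S, v ∉ Z ∧ v ≠ x ∧ v ≠ y := by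
    intro v hv
    have := hSsub hv
    rw [hT, mem_sdiff, mem_union] at this
    push_neg at this
    refine ⟨this.2.1, ?_, ?_⟩
    · intro h; subst h; exact this.2.2 (mem_insert_self v {y})
    · intro h; subst h; exact this.2.2 (mem_insert_of_mem (mem_singleton_self v))
  refine ⟨S, hScard, ?_, ?_⟩
  · intro hSH
    rcases hcov S hSH with h | h
    · exact ((hSmemT x h).2.1) rfl
    · exact ((hSmemT y h).2.2) rfl
  · have hdegv : ∀ v ∈ S, hdeg H v ≤ (n-2).choose (r-2) - (n-r-2).choose (r-2) := by
      intro v hv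
      obtain ⟨hvZ, hvx, hvy⟩ := hSmemT v hv
      have hsplit : H.filter (fun e => v ∈ e) ⊆
          (H.filter (fun e => v ∈ e ∧ x ∈ e ∧ y ∈ e)) ∪
          ((H.filter (fun e => v ∈ e ∧ x ∈ e ∧ y ∉ e)) ∪
           (H.filter (fun e => v ∈ e ∧ y ∈ e ∧ x ∉ e))) := by
        intro e he
        have hef := mem_filter.mp he
        rw [mem_union, mem_union]
        by_cases hx : x ∈ e
        · by_cases hy : y ∈ e
          · exact Or.inl (mem_filter.mpr ⟨hef.1, hef.2, hx, hy⟩)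
          · exact Or.inr (Or.inl (mem_filter.mpr ⟨hef.1, hef.2, hx, hy⟩))
        · rcases hcov e hef.1 with h | h
          · exact absurd h hx
          · exact Or.inr (Or.inr (mem_filter.mpr ⟨hef.1, hef.2, h, hx⟩))
      have hcard : hdeg H v ≤ (H.filter (fun e => v ∈ e ∧ x ∈ e ∧ y ∈ e)).card
          + ((H.filter (fun e => v ∈ e ∧ x ∈ e ∧ y ∉ e)).card
          + (H.filter (fun e => v ∈ e ∧ y ∈ e ∧ x ∉ e)).card) := by
        unfold hdeg
        calc (H.filter (fun e => v ∈ e)).card ≤ _ := card_le_card hsplit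
          _ ≤ _ := le_trans (card_union_le _ _)
              (by exact Nat.add_le_add_left (card_union_le _ _) _)
      have hdxy : (H.filter (fun e => v ∈ e ∧ x ∈ e ∧ y ∈ e)).card ≤ (n-3).choose (r-3) := by
        have hb := filter_sub_bound H hunif (fun e => v ∈ e ∧ x ∈ e ∧ y ∈ e)
          ({x,y,v} : Finset (Fin n)) ({x,y,v} : Finset (Fin n))
          (by intro e he hp t ht
              simp only [mem_insert, mem_singleton] at ht
              rcases ht with rfl | rfl | rfl
              · exact hp.2.1
              · exact hp.2.2
              · exact hp.1)
          (fun e he hp t hte htP => htP)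
        rw [card3 hxy (Ne.symm hvx) (Ne.symm hvy)] at hb
        exact hb
      have hcl := hZ v hvZ hvx hvy
      have hpas : (n-2).choose (r-2) = (n-3).choose (r-3) + (n-3).choose (r-2) := by
        have e1' : n - 2 = (n-3) + 1 := by omega
        have e2' : r - 2 = (r-3) + 1 := by omega
        rw [e1', e2', Nat.choose_succ_succ]
      omega
    calc ∑ v ∈ S, hdeg H v
        ≤ ∑ v ∈ S, ((n-2).choose (r-2) - (n-r-2).choose (r-2)) := sum_le_sum hdegv
      _ = r * ((n-2).choose (r-2) - (n-r-2).choose (r-2)) := by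
          rw [sum_const, hScard, smul_eq_mul]

theorem stmt6 (n r : ℕ) (hr : 3 ≤ r) (hn : r^2*(r-1) ≤ n) (H : Finset (Finset (Fin n)))
    (hunif : ∀ e ∈ H, e.card = r)
    (hint : ∀ e ∈ H, ∀ f ∈ H, (e ∩ f).Nonempty)
    (hnt : ¬ ∃ x : Fin n, ∀ e ∈ H, x ∈ e) :
    oreDeg r H ≤ r * ((n-2).choose (r-2) - (n-r-2).choose (r-2)) := by
  have hn' : r*r*(r-1) ≤ n := by rw [pow_two] at hn; exact hn
  obtain ⟨S, hScard, hSnH, hSle⟩ : ∃ S : Finset (Fin n), S.card = r ∧ S ∉ H ∧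
      (∑ v ∈ S, hdeg H v) ≤ r * ((n-2).choose (r-2) - (n-r-2).choose (r-2)) := by
    by_cases hcase : ∃ x y : Fin n, ∀ e ∈ H, x ∈ e ∨ y ∈ e
    · obtain ⟨x, y, hcov⟩ := hcase
      exact caseII hr hn' H hunif hint hnt x y hcov
    · push_neg at hcase
      apply caseI hr hn H hunif hint
      intro a b
      obtain ⟨e, he, hne⟩ := hcase a b
      exact ⟨e, he, hne⟩
  have hmem : (∑ v ∈ S, hdeg H v) ∈
      {d : ℕ | ∃ S : Finset (Fin n), S.card = r ∧ S ∉ H ∧ d = ∑ v ∈ S, hdeg H v} :=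
    ⟨S, hScard, hSnH, rfl⟩
  exact le_trans (Nat.sInf_le hmem) hSle
end

section
/- Let H be an intersecting r-uniform hypergraph on [n] which is non-trivial. Then there exists a set T ⊆ [n] with |T| ≤ r² − r + 1 such that every edge of H intersects T in at least two vertices. -/
open Finset

theorem stmt8 (n r : ℕ) (H : Finset (Finset (Fin n)))
    (hunif : ∀ e ∈ H, e.card = r)
    (hint : ∀ e ∈ H, ∀ f ∈ H, (e ∩ f).Nonempty)
    (hnt : ¬ ∃ x : Fin n, ∀ e ∈ H, x ∈ e) :
    ∃ T : Finset (Fin n), T.card ≤ r^2 - r + 1 ∧ ∀ e ∈ H, 2 ≤ (e ∩ T).card := by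
  classical
  by_cases hH : H = ∅
  · exact ⟨∅, by simp, by simp [hH]⟩
  push_neg at hnt
  choose g hgH hgx using hnt
  obtain ⟨e₀, he₀⟩ := Finset.nonempty_iff_ne_empty.mpr hH
  have hr0 : e₀.Nonempty := by
    rcases Finset.eq_empty_or_nonempty e₀ with h | h
    · exact absurd (hint e₀ he₀ e₀ he₀) (by simp [h])
    · exact h
  obtain ⟨x, hx⟩ := hr0
  set P := (H ×ˢ H).filter (fun p => p.1 ≠ p.2) with hP
  have hPne : P.Nonempty := by
    refine ⟨(e₀, g x), ?_⟩
    simp only [hP, Finset.mem_filter, Finset.mem_product]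
    refine ⟨⟨he₀, hgH x⟩, ?_⟩
    intro h
    exact hgx x (by rw [h] at hx; exact hx)
  obtain ⟨p, hpP, hmin⟩ := P.exists_min_image (fun p => (p.1 ∩ p.2).card) hPne
  simp only [hP, Finset.mem_filter, Finset.mem_product] at hpP
  obtain ⟨⟨he, he'⟩, hne⟩ := hpP
  set e := p.1
  set e' := p.2
  have hmin' : ∀ a ∈ H, ∀ b ∈ H, a ≠ b → (e ∩ e').card ≤ (a ∩ b).card := by
    intro a ha b hb hab
    exact hmin (a, b) (by simp [hP, Finset.mem_filter, Finset.mem_product, ha, hb, hab])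
  set t := (e ∩ e').card with htdef
  have ht1 : 1 ≤ t := Finset.card_pos.mpr (hint e he e' he')
  have hce : e.card = r := hunif e he
  have hce' : e'.card = r := hunif e' he'
  have htlt : t < r := by
    have hss : e ∩ e' ⊂ e := by
      refine Finset.ssubset_iff_subset_ne.mpr ⟨Finset.inter_subset_left, ?_⟩
      intro h
      have hsub : e ⊆ e' := Finset.inter_eq_left.mp h
      exact hne (Finset.eq_of_subset_of_card_le hsub (by rw [hce, hce']))
    have := Finset.card_lt_card hss
    omega
  -- the covering set
  set B := (e ∩ e').biUnion (fun z => g z \ (e ∪ e')) with hB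
  set T := (e ∪ e') ∪ B with hT
  have hgsub : ∀ z ∈ e ∩ e', g z ⊆ T := by
    intro z hz y hy
    by_cases hy2 : y ∈ e ∪ e'
    · exact Finset.mem_union_left _ hy2
    · refine Finset.mem_union_right _ ?_
      rw [hB]
      exact Finset.mem_biUnion.mpr ⟨z, hz, Finset.mem_sdiff.mpr ⟨hy, hy2⟩⟩
  have hcover : ∀ f ∈ H, 2 ≤ (f ∩ T).card := by
    intro f hf
    obtain ⟨a, ha⟩ := hint f hf e he
    obtain ⟨b, hb⟩ := hint f hf e' he'
    rw [Finset.mem_inter] at ha hb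
    by_cases hab : a = b
    · have hc : a ∈ e ∩ e' := Finset.mem_inter.mpr ⟨ha.2, hab ▸ hb.2⟩
      obtain ⟨d, hd⟩ := hint f hf (g a) (hgH a)
      rw [Finset.mem_inter] at hd
      have hdc : d ≠ a := fun h => hgx a (h ▸ hd.2)
      refine Finset.one_lt_card.mpr ⟨a, ?_, d, ?_, fun h => hdc h.symm⟩
      · exact Finset.mem_inter.mpr ⟨ha.1,
          Finset.mem_union_left _ (Finset.mem_union_left _ ha.2)⟩
      · exact Finset.mem_inter.mpr ⟨hd.1, hgsub a hc hd.2⟩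
    · refine Finset.one_lt_card.mpr ⟨a, ?_, b, ?_, hab⟩
      · exact Finset.mem_inter.mpr ⟨ha.1,
          Finset.mem_union_left _ (Finset.mem_union_left _ ha.2)⟩
      · exact Finset.mem_inter.mpr ⟨hb.1,
          Finset.mem_union_left _ (Finset.mem_union_right _ hb.2)⟩
  refine ⟨T, ?_, hcover⟩
  -- cardinality bound
  have hgne : ∀ z ∈ e ∩ e', g z ≠ e := by
    intro z hz h
    exact hgx z (h ▸ (Finset.mem_inter.mp hz).1)
  have hterm : ∀ z ∈ e ∩ e', (g z \ (e ∪ e')).card ≤ r - t := by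
    intro z hz
    have h1 : (g z \ (e ∪ e')).card ≤ (g z \ e).card :=
      Finset.card_le_card (Finset.sdiff_subset_sdiff le_rfl Finset.subset_union_left)
    have h2 : (g z \ e).card + (g z ∩ e).card = (g z).card :=
      Finset.card_sdiff_add_card_inter _ _
    have h3 : t ≤ (g z ∩ e).card := hmin' (g z) (hgH z) e he (hgne z hz)
    have h4 : (g z).card = r := hunif _ (hgH z)
    omega
  have hu : (e ∪ e').card + t = 2 * r := by
    have := Finset.card_union_add_card_inter e e'
    rw [hce, hce'] at this
    omega
  have hcard : T.card ≤ (e ∪ e').card + t * (r - t) := by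
    have h1 : T.card ≤ (e ∪ e').card + B.card := Finset.card_union_le _ _
    have h2 : B.card ≤ ∑ z ∈ e ∩ e', (g z \ (e ∪ e')).card :=
      Finset.card_biUnion_le
    have h3 : ∑ z ∈ e ∩ e', (g z \ (e ∪ e')).card ≤ t * (r - t) := by
      calc ∑ z ∈ e ∩ e', (g z \ (e ∪ e')).card
          ≤ ∑ _z ∈ e ∩ e', (r - t) := Finset.sum_le_sum hterm
        _ = t * (r - t) := by rw [Finset.sum_const, smul_eq_mul]
    omega
  rcases Nat.lt_or_ge r 3 with hr | hr
  · -- r = 2, t = 1 : each g z ⊆ e ∪ e'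
    have hr2 : r = 2 := by omega
    have ht : t = 1 := by omega
    have hsubs : ∀ z ∈ e ∩ e', g z ⊆ e ∪ e' := by
      intro z hz
      obtain ⟨a, ha⟩ := hint (g z) (hgH z) e he
      obtain ⟨b, hb⟩ := hint (g z) (hgH z) e' he'
      rw [Finset.mem_inter] at ha hb
      have haz : a ≠ z := fun h => hgx z (h ▸ ha.1)
      have hbz : b ≠ z := fun h => hgx z (h ▸ hb.1)
      have hsingle : e ∩ e' = {z} := by
        obtain ⟨w, hw⟩ := Finset.card_eq_one.mp ht
        rw [hw] at hz ⊢
        rw [Finset.mem_singleton.mp hz]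
      have hab : a ≠ b := by
        intro h
        have : a ∈ e ∩ e' := Finset.mem_inter.mpr ⟨ha.2, h ▸ hb.2⟩
        rw [hsingle, Finset.mem_singleton] at this
        exact haz this
      have hpair : ({a, b} : Finset (Fin n)) ⊆ g z := by
        intro y hy
        rcases Finset.mem_insert.mp hy with h | h
        · exact h ▸ ha.1
        · exact (Finset.mem_singleton.mp h) ▸ hb.1
      have hgz : g z = {a, b} := by
        refine (Finset.eq_of_subset_of_card_le hpair ?_).symm
        rw [hunif _ (hgH z), Finset.card_insert_of_notMem (by simpa using hab),
          Finset.card_singleton, hr2]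
      rw [hgz]
      intro y hy
      rcases Finset.mem_insert.mp hy with h | h
      · exact Finset.mem_union_left _ (h ▸ ha.2)
      · exact Finset.mem_union_right _ ((Finset.mem_singleton.mp h) ▸ hb.2)
    have hB0 : B = ∅ := by
      apply Finset.eq_empty_of_forall_notMem
      intro y hy
      rw [hB] at hy
      obtain ⟨z, hz, hy2⟩ := Finset.mem_biUnion.mp hy
      exact (Finset.mem_sdiff.mp hy2).2 (hsubs z hz (Finset.mem_sdiff.mp hy2).1)
    have hTu : T.card ≤ (e ∪ e').card := by
      rw [hT, hB0]
      simp
    have hr4 : r ^ 2 = 4 := by rw [hr2]; norm_num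
    omega
  · -- r ≥ 3
    obtain ⟨a, hta⟩ : ∃ a, t = a + 1 := ⟨t - 1, by omega⟩
    obtain ⟨b, hrb⟩ : ∃ b, r = a + b + 2 := ⟨r - t - 1, by omega⟩
    have hk : r - t = b + 1 := by omega
    have hucard : (e ∪ e').card = a + 2 * b + 3 := by omega
    have hab1 : 1 ≤ a + b := by omega
    have key2 : a + 2 * b + 3 + (a + 1) * (b + 1) + (a + b + 2) ≤ (a + b + 2) ^ 2 + 1 := by
      rcases Nat.eq_zero_or_pos a with h0 | h0
      · subst h0
        have hb1 : 1 ≤ b := by omega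
        nlinarith
      · nlinarith
    have key : T.card ≤ (a + b + 2) ^ 2 - (a + b + 2) + 1 := by
      calc T.card ≤ (e ∪ e').card + t * (r - t) := hcard
        _ = a + 2 * b + 3 + (a + 1) * (b + 1) := by rw [hucard, hk, hta]
        _ ≤ (a + b + 2) ^ 2 - (a + b + 2) + 1 := by omega
    have hsq : r ^ 2 = (a + b + 2) ^ 2 := by rw [hrb]
    omega
end

section
/- Let H be a graph on n vertices with n ≥ 2s. If for every pair of non-adjacent vertices u, v we have deg(u) + deg(v) > 2(s−1), then H has a matching of size s. -/
open Finset

theorem stmt9 (n s : ℕ) (hn : 2*s ≤ n) (H : Finset (Finset (Fin n)))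
    (hunif : ∀ e ∈ H, e.card = 2)
    (hore : ∀ u v : Fin n, u ≠ v → ({u, v} : Finset (Fin n)) ∉ H →
      hdeg H u + hdeg H v > 2*(s-1)) :
    ∃ M ⊆ H, M.card = s ∧ ∀ e ∈ M, ∀ f ∈ M, e ≠ f → Disjoint e f := by
  classical
  set Ms : Finset (Finset (Finset (Fin n))) :=
    H.powerset.filter (fun M => ∀ e ∈ M, ∀ f ∈ M, e ≠ f → Disjoint e f) with hMs
  have hne : Ms.Nonempty := ⟨∅, by simp [hMs]⟩
  obtain ⟨M, hMmem, hMmax⟩ := Finset.exists_max_image Ms Finset.card hne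
  rw [hMs, mem_filter, mem_powerset] at hMmem
  obtain ⟨hMH, hMdisj⟩ := hMmem
  by_cases hcase : s ≤ M.card
  · obtain ⟨M', hM'sub, hM'card⟩ := Finset.exists_subset_card_eq (s := M) hcase
    exact ⟨M', hM'sub.trans hMH, hM'card,
      fun e he f hf hef => hMdisj e (hM'sub he) f (hM'sub hf) hef⟩
  · exfalso
    push_neg at hcase
    have hs1 : 1 ≤ s := by omega
    have hMcard : M.card ≤ s - 1 := by omega
    set VM : Finset (Fin n) := M.biUnion (fun e => e) with hVM
    -- any edge of H meets VM
    have fact1 : ∀ g ∈ H, ∃ w ∈ g, w ∈ VM := by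
      intro g hg
      by_contra hcon
      push_neg at hcon
      have hgM : g ∉ M := by
        intro hgM
        obtain ⟨w, hw⟩ := Finset.card_pos.mp (by rw [hunif g hg]; norm_num)
        exact hcon w hw (Finset.mem_biUnion.mpr ⟨g, hgM, hw⟩)
      have hdisj : ∀ f ∈ M, Disjoint g f := by
        intro f hf
        rw [Finset.disjoint_left]
        intro a hag haf
        exact hcon a hag (Finset.mem_biUnion.mpr ⟨f, hf, haf⟩)
      have hN : insert g M ∈ Ms := by
        rw [hMs, mem_filter, mem_powerset]
        refine ⟨Finset.insert_subset hg hMH, ?_⟩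
        intro e he f hf hef
        rcases Finset.mem_insert.mp he with he | he <;>
          rcases Finset.mem_insert.mp hf with hf | hf
        · exact absurd (he.trans hf.symm) hef
        · exact he ▸ hdisj f hf
        · exact hf ▸ (hdisj e he).symm
        · exact hMdisj e he f hf hef
      have := hMmax _ hN
      rw [Finset.card_insert_of_notMem hgM] at this
      omega
    have hVMcard : VM.card = 2 * M.card := by
      rw [hVM, Finset.card_biUnion (fun x hx y hy hxy => hMdisj x hx y hy hxy)]
      rw [Finset.sum_congr rfl (fun e he => hunif e (hMH he))]
      simp [mul_comm]
    -- two unmatched vertices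
    have hcompl : 1 < (Finset.univ \ VM).card := by
      have : VM ⊆ Finset.univ := Finset.subset_univ _
      rw [Finset.card_sdiff_of_subset this, Finset.card_univ, Fintype.card_fin]
      omega
    obtain ⟨u, hu, v, hv, huv⟩ := Finset.one_lt_card.mp hcompl
    have huVM : u ∉ VM := (Finset.mem_sdiff.mp hu).2
    have hvVM : v ∉ VM := (Finset.mem_sdiff.mp hv).2
    have hnotadj : ({u, v} : Finset (Fin n)) ∉ H := by
      intro h
      obtain ⟨w, hw, hwVM⟩ := fact1 _ h
      rcases Finset.mem_insert.mp hw with rfl | hw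
      · exact huVM hwVM
      · rw [Finset.mem_singleton] at hw; subst hw; exact hvVM hwVM
    -- neighborhoods
    set N : Fin n → Finset (Fin n) :=
      fun a => Finset.univ.filter (fun w => ({a, w} : Finset (Fin n)) ∈ H) with hN
    have hpair_ne : ∀ a w : Fin n, ({a, w} : Finset (Fin n)) ∈ H → w ≠ a := by
      intro a w h heq
      subst heq
      have := hunif _ h
      simp at this
    have hdeg_eq : ∀ a : Fin n, hdeg H a = (N a).card := by
      intro a
      rw [hdeg]
      symm
      apply Finset.card_bij (fun w _ => ({a, w} : Finset (Fin n)))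
      · intro w hw
        rw [hN] at hw
        simp only [mem_filter] at hw
        simp [hw.2]
      · intro w1 h1 w2 h2 heq
        rw [hN] at h1 h2
        simp only [mem_filter, Finset.mem_univ, true_and] at h1 h2
        have hw1 : w1 ∈ ({a, w2} : Finset (Fin n)) := by rw [← heq]; simp
        rcases Finset.mem_insert.mp hw1 with rfl | hw1
        · exact absurd rfl (hpair_ne _ _ h1)
        · exact Finset.mem_singleton.mp hw1
      · intro e he
        simp only [mem_filter] at he
        obtain ⟨heH, hae⟩ := he
        obtain ⟨x, y, hxy, rfl⟩ := Finset.card_eq_two.mp (hunif e heH)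
        rcases Finset.mem_insert.mp hae with rfl | hae
        · exact ⟨y, by rw [hN]; simp [heH], rfl⟩
        · rw [Finset.mem_singleton] at hae; subst hae
          refine ⟨x, ?_, by rw [Finset.pair_comm]⟩
          rw [hN]
          simp only [mem_filter, Finset.mem_univ, true_and]
          rw [Finset.pair_comm]
          exact heH
    have hNsub : ∀ a : Fin n, a ∉ VM → N a ⊆ VM := by
      intro a ha w hw
      rw [hN] at hw
      simp only [mem_filter, Finset.mem_univ, true_and] at hw
      obtain ⟨z, hz, hzVM⟩ := fact1 _ hw
      rcases Finset.mem_insert.mp hz with rfl | hz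
      · exact absurd hzVM ha
      · rw [Finset.mem_singleton] at hz; subst hz; exact hzVM
    have hsum : ∀ a : Fin n, a ∉ VM →
        (N a).card = ∑ e ∈ M, (N a ∩ e).card := by
      intro a ha
      have : N a = M.biUnion (fun e => N a ∩ e) := by
        ext w
        simp only [Finset.mem_biUnion, Finset.mem_inter]
        constructor
        · intro hw
          obtain ⟨e, he, hwe⟩ := Finset.mem_biUnion.mp (hNsub a ha hw)
          exact ⟨e, he, hw, hwe⟩
        · rintro ⟨e, he, hw, _⟩; exact hw
      conv_lhs => rw [this]
      rw [Finset.card_biUnion]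
      intro x hx y hy hxy
      exact (hMdisj x hx y hy hxy).mono (Finset.inter_subset_right)
        (Finset.inter_subset_right)
    -- augmentation: impossible to have a cross pair
    have haug : ∀ e ∈ M, ∀ x ∈ e, ∀ y ∈ e, x ≠ y →
        ({u, x} : Finset (Fin n)) ∈ H → ({v, y} : Finset (Fin n)) ∈ H → False := by
      intro e he x hx y hy hxy hux hvy
      have hxVM : x ∈ VM := Finset.mem_biUnion.mpr ⟨e, he, hx⟩
      have hyVM : y ∈ VM := Finset.mem_biUnion.mpr ⟨e, he, hy⟩
      have hux' : u ≠ x := fun h => huVM (h ▸ hxVM)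
      have huy' : u ≠ y := fun h => huVM (h ▸ hyVM)
      have hvx' : v ≠ x := fun h => hvVM (h ▸ hxVM)
      have hvy' : v ≠ y := fun h => hvVM (h ▸ hyVM)
      have hnotin : ∀ f ∈ M.erase e, u ∉ f ∧ v ∉ f ∧ x ∉ f ∧ y ∉ f := by
        intro f hf
        obtain ⟨hfe, hfM⟩ := Finset.mem_erase.mp hf
        refine ⟨fun h => huVM (Finset.mem_biUnion.mpr ⟨f, hfM, h⟩),
          fun h => hvVM (Finset.mem_biUnion.mpr ⟨f, hfM, h⟩), ?_, ?_⟩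
        · exact fun h => Finset.disjoint_left.mp (hMdisj e he f hfM hfe.symm) hx h
        · exact fun h => Finset.disjoint_left.mp (hMdisj e he f hfM hfe.symm) hy h
      set M' : Finset (Finset (Fin n)) :=
        insert ({u, x} : Finset (Fin n)) (insert ({v, y} : Finset (Fin n)) (M.erase e))
        with hM'
      have hmemux : ∀ a : Fin n, a ∈ ({u, x} : Finset (Fin n)) ↔ a = u ∨ a = x := by
        intro a; simp
      have hmemvy : ∀ a : Fin n, a ∈ ({v, y} : Finset (Fin n)) ↔ a = v ∨ a = y := by
        intro a; simp
      have hd1 : Disjoint ({u, x} : Finset (Fin n)) ({v, y} : Finset (Fin n)) := by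
        rw [Finset.disjoint_left]
        intro a ha hb
        rw [hmemux] at ha; rw [hmemvy] at hb
        rcases ha with rfl | rfl <;> rcases hb with h | h <;> first
          | exact huv h | exact huy' h | exact hvx' h.symm | exact hxy h
      have hd2 : ∀ f ∈ M.erase e, Disjoint ({u, x} : Finset (Fin n)) f := by
        intro f hf
        rw [Finset.disjoint_left]
        intro a ha haf
        rw [hmemux] at ha
        obtain ⟨h1, _, h3, _⟩ := hnotin f hf
        rcases ha with rfl | rfl
        · exact h1 haf
        · exact h3 haf
      have hd3 : ∀ f ∈ M.erase e, Disjoint ({v, y} : Finset (Fin n)) f := by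
        intro f hf
        rw [Finset.disjoint_left]
        intro a ha haf
        rw [hmemvy] at ha
        obtain ⟨_, h2, _, h4⟩ := hnotin f hf
        rcases ha with rfl | rfl
        · exact h2 haf
        · exact h4 haf
      have hM'mem : M' ∈ Ms := by
        rw [hMs, mem_filter, mem_powerset]
        constructor
        · rw [hM']
          apply Finset.insert_subset hux
          apply Finset.insert_subset hvy
          exact (Finset.erase_subset _ _).trans hMH
        · intro a ha b hb hab
          rw [hM', Finset.mem_insert, Finset.mem_insert] at ha hb
          rcases ha with rfl | rfl | ha <;> rcases hb with rfl | rfl | hb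
          · exact absurd rfl hab
          · exact hd1
          · exact hd2 _ hb
          · exact hd1.symm
          · exact absurd rfl hab
          · exact hd3 _ hb
          · exact (hd2 _ ha).symm
          · exact (hd3 _ ha).symm
          · exact hMdisj a (Finset.mem_of_mem_erase ha) b (Finset.mem_of_mem_erase hb)
              hab
      have hnm1 : ({v, y} : Finset (Fin n)) ∉ M.erase e := by
        intro h
        exact (hnotin _ h).2.1 (by rw [hmemvy]; left; rfl)
      have hnm2 : ({u, x} : Finset (Fin n)) ∉ insert ({v, y} : Finset (Fin n)) (M.erase e) := by
        intro h
        rcases Finset.mem_insert.mp h with h | h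
        · have : u ∈ ({v, y} : Finset (Fin n)) := by rw [← h, hmemux]; left; rfl
          rw [hmemvy] at this
          rcases this with h' | h'
          · exact huv h'
          · exact huy' h'
        · exact (hnotin _ h).1 (by rw [hmemux]; left; rfl)
      have hcard' : M'.card = M.card + 1 := by
        rw [hM', Finset.card_insert_of_notMem hnm2, Finset.card_insert_of_notMem hnm1,
          Finset.card_erase_of_mem he]
        have : 1 ≤ M.card := Finset.card_pos.mpr ⟨e, he⟩
        omega
      have := hMmax _ hM'mem
      omega
    -- per-edge bound
    have hbound : ∀ e ∈ M, (N u ∩ e).card + (N v ∩ e).card ≤ 2 := by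
      intro e he
      by_contra hcon
      push_neg at hcon
      have he2 : e.card = 2 := hunif e (hMH he)
      have hau : (N u ∩ e).card ≤ 2 := by
        calc (N u ∩ e).card ≤ e.card := Finset.card_le_card Finset.inter_subset_right
        _ = 2 := he2
      have hav : (N v ∩ e).card ≤ 2 := by
        calc (N v ∩ e).card ≤ e.card := Finset.card_le_card Finset.inter_subset_right
        _ = 2 := he2
      have hNmem : ∀ a w : Fin n, w ∈ N a → ({a, w} : Finset (Fin n)) ∈ H := by
        intro a w hw
        rw [hN] at hw
        exact (Finset.mem_filter.mp hw).2
      rcases (by omega : (N u ∩ e).card = 2 ∨ (N v ∩ e).card = 2) with h2 | h2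
      · -- N u ⊇ e
        have heq : N u ∩ e = e := Finset.eq_of_subset_of_card_le
          Finset.inter_subset_right (by omega)
        have hb1 : 1 ≤ (N v ∩ e).card := by omega
        obtain ⟨z, hz⟩ := Finset.card_pos.mp (by omega : 0 < (N v ∩ e).card)
        obtain ⟨hzNv, hze⟩ := Finset.mem_inter.mp hz
        obtain ⟨y, hye, hyz⟩ := Finset.exists_mem_ne (s := e) (by omega) z
        have hyNu : y ∈ N u := by
          have : y ∈ N u ∩ e := by rw [heq]; exact hye
          exact (Finset.mem_inter.mp this).1
        exact haug e he y hye z hze hyz (hNmem u y hyNu) (hNmem v z hzNv)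
      · have heq : N v ∩ e = e := Finset.eq_of_subset_of_card_le
          Finset.inter_subset_right (by omega)
        obtain ⟨z, hz⟩ := Finset.card_pos.mp (by omega : 0 < (N u ∩ e).card)
        obtain ⟨hzNu, hze⟩ := Finset.mem_inter.mp hz
        obtain ⟨y, hye, hyz⟩ := Finset.exists_mem_ne (s := e) (by omega) z
        have hyNv : y ∈ N v := by
          have : y ∈ N v ∩ e := by rw [heq]; exact hye
          exact (Finset.mem_inter.mp this).1
        exact haug e he z hze y hye (Ne.symm hyz) (hNmem u z hzNu) (hNmem v y hyNv)
    -- final counting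
    have hmain : hdeg H u + hdeg H v ≤ 2 * M.card := by
      rw [hdeg_eq u, hdeg_eq v, hsum u huVM, hsum v hvVM, ← Finset.sum_add_distrib]
      calc ∑ e ∈ M, ((N u ∩ e).card + (N v ∩ e).card)
          ≤ ∑ _e ∈ M, 2 := Finset.sum_le_sum (fun e he => hbound e he)
        _ = 2 * M.card := by rw [Finset.sum_const, smul_eq_mul, mul_comm]
    have := hore u v huv hnotadj
    omega
end

section
/- Let H be an intersecting r-uniform hypergraph on [n] with n ≥ 2r + 1 and σ_r(H) ≥ r·C(n-2, r-2). Let E ∈ H be an edge and let X = [n] \ E. Then Σ_{x∈X} deg(x) ≥ (n−r)·C(n-2, r-2). -/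
open Finset

theorem stmt15 (n r : ℕ) (hn : 2*r+1 ≤ n)
    (H : Finset (Finset (Fin n))) (hunif : ∀ e ∈ H, e.card = r)
    (hint : ∀ e ∈ H, ∀ f ∈ H, (e ∩ f).Nonempty)
    (hore : ∀ S : Finset (Fin n), S.card = r → S ∉ H →
      r * (n-2).choose (r-2) ≤ ∑ v ∈ S, hdeg H v)
    (E : Finset (Fin n)) (hE : E ∈ H) :
    (n - r) * (n-2).choose (r-2) ≤ ∑ x ∈ Finset.univ \ E, hdeg H x := by
  classical
  -- r ≥ 1
  have hr : 1 ≤ r := by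
    by_contra h
    have hr0 : r = 0 := by omega
    have hE0 : E = ∅ := card_eq_zero.mp (by rw [hunif E hE, hr0])
    obtain ⟨x, hx⟩ := hint E hE E hE
    simp [hE0] at hx
  set X : Finset (Fin n) := Finset.univ \ E with hX
  have hEcard : E.card = r := hunif E hE
  have hXcard : X.card = n - r := by
    rw [hX, ← Finset.compl_eq_univ_sdiff, Finset.card_compl, hEcard, Fintype.card_fin]
  set c : ℕ := (n-2).choose (r-2) with hc
  set P : Finset (Finset (Fin n)) := X.powersetCard r with hP
  -- every S ∈ P is a non-edge
  have hnonedge : ∀ S ∈ P, S ∉ H := by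
    intro S hS hSH
    rw [hP, mem_powersetCard] at hS
    obtain ⟨x, hx⟩ := hint S hSH E hE
    rw [mem_inter] at hx
    have := hS.1 hx.1
    rw [hX, mem_sdiff] at this
    exact this.2 hx.2
  -- counting: each v ∈ X lies in (n-r-1).choose (r-1) sets of P
  have hcount : ∀ v ∈ X, (P.filter fun S => v ∈ S).card = (n - r - 1).choose (r - 1) := by
    intro v hv
    have : (P.filter fun S => v ∈ S).card = ((X.erase v).powersetCard (r-1)).card := by
      apply Finset.card_bij (fun S _ => S.erase v)
      · intro S hS
        rw [mem_filter, hP, mem_powersetCard] at hS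
        rw [mem_powersetCard]
        constructor
        · exact erase_subset_erase v hS.1.1
        · rw [card_erase_of_mem hS.2, hS.1.2]
      · intro S hS T hT h
        rw [mem_filter] at hS hT
        rw [← insert_erase hS.2, ← insert_erase hT.2, h]
      · intro T hT
        rw [mem_powersetCard] at hT
        refine ⟨insert v T, ?_, ?_⟩
        · rw [mem_filter, hP, mem_powersetCard]
          have hvT : v ∉ T := fun h => (notMem_erase v X) (hT.1 h)
          refine ⟨⟨?_, ?_⟩, mem_insert_self _ _⟩
          · exact insert_subset hv (hT.1.trans (erase_subset _ _))
          · rw [card_insert_of_notMem hvT, hT.2]; omega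
        · rw [erase_insert (fun h => (notMem_erase v X) (hT.1 h))]
    rw [this, card_powersetCard, card_erase_of_mem hv, hXcard]
  -- double counting
  have hkey : P.card * (r * c) ≤ (n - r - 1).choose (r - 1) * ∑ x ∈ X, hdeg H x := by
    calc P.card * (r * c) = ∑ _S ∈ P, r * c := by rw [sum_const, smul_eq_mul]
    _ ≤ ∑ S ∈ P, ∑ v ∈ S, hdeg H v := by
        apply sum_le_sum
        intro S hS
        have hS' := (mem_powersetCard.mp (hP ▸ hS)).2
        exact hore S hS' (hnonedge S hS)
    _ = ∑ S ∈ P, ∑ v ∈ X, if v ∈ S then hdeg H v else 0 := by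
        apply sum_congr rfl
        intro S hS
        rw [sum_ite_mem]
        congr 1
        exact (inter_eq_right.mpr (mem_powersetCard.mp (hP ▸ hS)).1).symm
    _ = ∑ v ∈ X, ∑ S ∈ P, if v ∈ S then hdeg H v else 0 := sum_comm
    _ = ∑ v ∈ X, (P.filter fun S => v ∈ S).card * hdeg H v := by
        apply sum_congr rfl
        intro v _
        rw [← sum_filter, sum_const, smul_eq_mul]
    _ = ∑ v ∈ X, (n - r - 1).choose (r - 1) * hdeg H v := by
        apply sum_congr rfl
        intro v hv
        rw [hcount v hv]
    _ = (n - r - 1).choose (r - 1) * ∑ x ∈ X, hdeg H x := by rw [mul_sum]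
  have hPcard : P.card = (n - r).choose r := by rw [hP, card_powersetCard, hXcard]
  -- (n-r).choose r * r = (n-r) * (n-r-1).choose (r-1)
  have hid : (n - r).choose r * r = (n - r) * (n - r - 1).choose (r - 1) := by
    obtain ⟨m, hm⟩ : ∃ m, n - r = m + 1 := ⟨n - r - 1, by omega⟩
    obtain ⟨s, hs⟩ : ∃ s, r = s + 1 := ⟨r - 1, by omega⟩
    rw [hm, hs]
    simp only [Nat.add_sub_cancel]
    exact (Nat.add_one_mul_choose_eq m s).symm
  have hpos : 0 < (n - r - 1).choose (r - 1) := Nat.choose_pos (by omega)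
  have : (n - r - 1).choose (r - 1) * ((n - r) * c) ≤
      (n - r - 1).choose (r - 1) * ∑ x ∈ X, hdeg H x := by
    calc (n - r - 1).choose (r - 1) * ((n - r) * c)
        = (n - r) * (n - r - 1).choose (r - 1) * c := by ring
    _ = (n - r).choose r * r * c := by rw [hid]
    _ = P.card * (r * c) := by rw [hPcard]; ring
    _ ≤ _ := hkey
  exact Nat.le_of_mul_le_mul_left this hpos
end
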